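/- arXiv:2002.03396 — 14 statements merged into one kernel-verified Lean document; each statement's English description precedes it below -/
import Mathlib

section
/- Define sequences f, g : ℕ → ℕ by f(1) = 0 and, for n ≥ 1, g(n) = f(n - f(n)) + 1 and, for n ≥ 2, f(n) = g(n - g(n-1)). Then for every i ≥ 0 and every r with 0 ≤ r ≤ 2i, we have f(i² + 1 + r) = i; in particular each nonnegative integer i appears exactly 2i+1 times in the f-sequence. -/
private lemma exi (n : ℕ) (hn : 1 ≤ n) : ∃ i : ℕ, i ^ 2 + 1 ≤ n ∧ n ≤ (i + 1) ^ 2 := by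
  refine ⟨Nat.sqrt (n - 1), ?_, ?_⟩ <;>
  · have h1 := Nat.sqrt_le' (n - 1)
    have h2 : n - 1 < (Nat.sqrt (n - 1) + 1) ^ 2 := Nat.lt_succ_sqrt' (n - 1)
    have e1 : (Nat.sqrt (n - 1)) ^ 2 = Nat.sqrt (n - 1) * Nat.sqrt (n - 1) := pow_two _
    have e2 : (Nat.sqrt (n - 1) + 1) ^ 2 =
        (Nat.sqrt (n - 1) + 1) * (Nat.sqrt (n - 1) + 1) := pow_two _
    omega

private lemma exk : ∀ m : ℕ, 1 ≤ m → ∃ k : ℕ, 1 ≤ k ∧ k ^ 2 + 1 ≤ m + k ∧ m ≤ k ^ 2 + k := by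
  intro m
  induction m with
  | zero => omega
  | succ m ih =>
    intro _
    rcases Nat.eq_zero_or_pos m with rfl | hm
    · exact ⟨1, by norm_num⟩
    · obtain ⟨k, hk, h1, h2⟩ := ih hm
      by_cases hc : m + 1 ≤ k ^ 2 + k
      · exact ⟨k, hk, by omega, hc⟩
      · have he : (k + 1) ^ 2 = k ^ 2 + 2 * k + 1 := by ring
        exact ⟨k + 1, by omega, by omega, by omega⟩

private lemma key (f g : ℕ → ℕ)
    (hf1 : f 1 = 0)
    (hg : ∀ n, 1 ≤ n → g n = f (n - f n) + 1)
    (hf : ∀ n, 2 ≤ n → f n = g (n - g (n - 1))) :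
    ∀ n : ℕ, (∀ i, i ^ 2 + 1 ≤ n → n ≤ (i + 1) ^ 2 → f n = i) ∧
      (∀ k, 1 ≤ k → k ^ 2 + 1 ≤ n + k → n ≤ k ^ 2 + k → g n = k) := by
  intro n
  induction n using Nat.strong_induction_on with
  | _ n IH =>
  have hfn : ∀ i, i ^ 2 + 1 ≤ n → n ≤ (i + 1) ^ 2 → f n = i := by
    intro i h1 h2
    have he : (i + 1) ^ 2 = i ^ 2 + 2 * i + 1 := by ring
    have hle : i ≤ i ^ 2 := Nat.le_self_pow (by norm_num) i
    rcases Nat.eq_zero_or_pos i with rfl | hi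
    · norm_num at h1 h2
      have hn1 : n = 1 := le_antisymm h2 h1
      rw [hn1]; exact hf1
    · have hn2 : 2 ≤ n := by omega
      rw [hf n hn2]
      by_cases hc : n ≤ i ^ 2 + i + 1
      · have hg1 : g (n - 1) = i := (IH (n - 1) (by omega)).2 i hi (by omega) (by omega)
        rw [hg1]
        exact (IH (n - i) (by omega)).2 i hi (by omega) (by omega)
      · have hg1 : g (n - 1) = i + 1 :=
          (IH (n - 1) (by omega)).2 (i + 1) (by omega) (by omega) (by omega)
        rw [hg1]
        exact (IH (n - (i + 1)) (by omega)).2 i hi (by omega) (by omega)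
  refine ⟨hfn, ?_⟩
  rintro ⟨⟩ hk h1 h2
  · omega
  rename_i j
  have he1 : (j + 1) ^ 2 = j ^ 2 + 2 * j + 1 := by ring
  have he2 : (j + 1 + 1) ^ 2 = j ^ 2 + 4 * j + 4 := by ring
  have hle : j ≤ j ^ 2 := Nat.le_self_pow (by norm_num) j
  have hn1 : 1 ≤ n := by omega
  rw [hg n hn1]
  by_cases hc : n ≤ (j + 1) ^ 2
  · have hfv : f n = j := hfn j (by omega) (by omega)
    rw [hfv]
    rcases Nat.eq_zero_or_pos j with rfl | hj
    · simp only [Nat.sub_zero]; rw [hfv]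
    · have hm : f (n - j) = j := (IH (n - j) (by omega)).1 j (by omega) (by omega)
      rw [hm]
  · have hfv : f n = j + 1 := hfn (j + 1) (by omega) (by omega)
    rw [hfv]
    have hm : f (n - (j + 1)) = j := (IH (n - (j + 1)) (by omega)).1 j (by omega) (by omega)
    rw [hm]

/-- Golomb-like system f(1)=0, g(n)=f(n-f(n))+1 (n ≥ 1), f(n)=g(n-g(n-1)) (n ≥ 2):
every nonnegative integer i satisfies f(i²+1+r)=i for 0 ≤ r ≤ 2i; in particular
i appears exactly 2i+1 times in the f-sequence. -/
theorem stmt_0 (f g : ℕ → ℕ)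
    (hf1 : f 1 = 0)
    (hg : ∀ n, 1 ≤ n → g n = f (n - f n) + 1)
    (hf : ∀ n, 2 ≤ n → f n = g (n - g (n - 1))) :
    (∀ n, 1 ≤ n → 1 ≤ n - f n) ∧ (∀ n, 2 ≤ n → 1 ≤ n - g (n - 1)) ∧
    (∀ i r : ℕ, r ≤ 2 * i → f (i ^ 2 + 1 + r) = i) ∧
    (∀ i : ℕ, {n : ℕ | 1 ≤ n ∧ f n = i}.ncard = 2 * i + 1) := by
  have K := key f g hf1 hg hf
  refine ⟨?_, ?_, ?_, ?_⟩
  · intro n hn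
    obtain ⟨i, hi1, hi2⟩ := exi n hn
    have hfv := (K n).1 i hi1 hi2
    have hle : i ≤ i ^ 2 := Nat.le_self_pow (by norm_num) i
    omega
  · intro n hn
    obtain ⟨k, hk, h1, h2⟩ := exk (n - 1) (by omega)
    have hgv := (K (n - 1)).2 k hk h1 h2
    have hle : 2 * k ≤ k ^ 2 + 1 := by nlinarith
    omega
  · intro i r hr
    have he : (i + 1) ^ 2 = i ^ 2 + 2 * i + 1 := by ring
    exact (K _).1 i (by omega) (by omega)
  · intro i
    have hset : {n : ℕ | 1 ≤ n ∧ f n = i} = Set.Icc (i ^ 2 + 1) ((i + 1) ^ 2) := by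
      ext n
      simp only [Set.mem_setOf_eq, Set.mem_Icc]
      constructor
      · rintro ⟨hn, hfi⟩
        obtain ⟨j, hj1, hj2⟩ := exi n hn
        have hfv := (K n).1 j hj1 hj2
        have hij : i = j := by rw [← hfi, hfv]
        subst hij
        exact ⟨hj1, hj2⟩
      · rintro ⟨h1, h2⟩
        have hn : 1 ≤ n := by omega
        exact ⟨hn, (K n).1 i h1 h2⟩
    rw [hset, ← Finset.coe_Icc, Set.ncard_coe_finset, Nat.card_Icc]
    have he : (i + 1) ^ 2 = i ^ 2 + 2 * i + 1 := by ring
    omega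
end

section
/- Define sequences f, g : ℕ → ℕ by f(1) = 0 and, for n ≥ 1, g(n) = f(n - f(n)) + 1 and, for n ≥ 2, f(n) = g(n - g(n-1)). Then for every i ≥ 1 and every r with 0 ≤ r ≤ 2i - 1, we have g(i² - i + 1 + r) = i; in particular each positive integer i appears exactly 2i times in the g-sequence. -/
private lemma two_mul_le_sq (a : ℕ) : 2 * a ≤ a * a + 1 := by
  cases a with
  | zero => simp
  | succ b => nlinarith

private lemma uniqF (a b k : ℕ) (h1 : a * a < k) (h2 : k ≤ (a+1) * (a+1))
    (h3 : b * b < k) (h4 : k ≤ (b+1) * (b+1)) : a = b := by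
  rcases lt_trichotomy a b with h | h | h
  · exfalso
    have h' : a + 1 ≤ b := h
    nlinarith [Nat.mul_le_mul h' h']
  · exact h
  · exfalso
    have h' : b + 1 ≤ a := h
    nlinarith [Nat.mul_le_mul h' h']

private lemma uniqG (a b k : ℕ) (h1 : a * a < k + a) (h2 : k ≤ a * a + a)
    (h3 : b * b < k + b) (h4 : k ≤ b * b + b) : a = b := by
  rcases lt_trichotomy a b with h | h | h
  · exfalso
    have h' : a + 1 ≤ b := h
    nlinarith [Nat.mul_le_mul h' (le_refl b), Nat.mul_le_mul (le_refl a) h']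
  · exact h
  · exfalso
    have h' : b + 1 ≤ a := h
    nlinarith [Nat.mul_le_mul h' (le_refl a), Nat.mul_le_mul (le_refl b) h']

private lemma mainlem (f g : ℕ → ℕ) (hf1 : f 1 = 0)
    (hg : ∀ n, 1 ≤ n → g n = f (n - f n) + 1)
    (hf : ∀ n, 2 ≤ n → f n = g (n - g (n - 1))) :
    ∀ n, 1 ≤ n →
      (f n * f n < n ∧ n ≤ (f n + 1) * (f n + 1)) ∧
      (g n * g n < n + g n ∧ n ≤ g n * g n + g n ∧ 1 ≤ g n) := by
  intro n
  induction n using Nat.strong_induction_on with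
  | _ n IH =>
  intro hn
  rcases eq_or_lt_of_le hn with h1 | h2
  · -- n = 1
    have hn1 : n = 1 := h1.symm
    subst hn1
    have hg1 : g 1 = 1 := by
      rw [hg 1 le_rfl, hf1]
      simp [hf1]
    refine ⟨⟨by simp [hf1], by simp [hf1]⟩, ?_⟩
    rw [hg1]; norm_num
  · -- n ≥ 2
    have hn2 : 2 ≤ n := h2
    obtain ⟨-, hi1, hi2, hi3⟩ := IH (n-1) (by omega) (by omega)
    obtain ⟨i, hidef⟩ : ∃ i, g (n-1) = i := ⟨_, rfl⟩
    rw [hidef] at hi1 hi2 hi3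
    -- hi1 : i*i < (n-1) + i, hi2 : n-1 ≤ i*i + i, hi3 : 1 ≤ i
    have h2i := two_mul_le_sq i
    have hilt : i + 1 ≤ n := by omega
    obtain ⟨d, hd⟩ : ∃ d, n = i + (d + 1) := ⟨n - i - 1, by omega⟩
    have hA : i * i < 2 * i + d := by omega
    have hB : d ≤ i * i := by omega
    have hmd : n - g (n - 1) = d + 1 := by rw [hidef]; omega
    have hfn : f n = g (d + 1) := by rw [hf n hn2, hmd]
    obtain ⟨-, hs1, hs2, hs3⟩ := IH (d+1) (by omega) (by omega)
    obtain ⟨s, hsdef⟩ : ∃ s, g (d+1) = s := ⟨_, rfl⟩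
    rw [hsdef] at hs1 hs2 hs3 hfn
    -- hs1 : s*s < d+1+s, hs2 : d+1 ≤ s*s+s, hs3 : 1 ≤ s
    have hFpart : s * s < n ∧ n ≤ (s + 1) * (s + 1) := by
      rcases le_or_gt n (i * i) with hcase | hcase
      · -- n ≤ i², so s = i - 1
        obtain ⟨i', rfl⟩ : ∃ i', i = i' + 1 := ⟨i - 1, by omega⟩
        have hexp : (i' + 1) * (i' + 1) = i' * i' + 2 * i' + 1 := by ring
        have e1 : i' * i' < d + 1 + i' := by omega
        have e2 : d + 1 ≤ i' * i' + i' := by omega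
        have hs : s = i' := uniqG s i' (d+1) hs1 hs2 e1 e2
        subst hs
        constructor
        · omega
        · omega
      · -- n > i², so s = i
        have hexp : (i + 1) * (i + 1) = i * i + 2 * i + 1 := by ring
        have e1 : i * i < d + 1 + i := by omega
        have e2 : d + 1 ≤ i * i + i := by omega
        have hs : s = i := uniqG s i (d+1) hs1 hs2 e1 e2
        subst hs
        constructor
        · omega
        · omega
    obtain ⟨hF1, hF2⟩ := hFpart
    have hF1' : f n * f n < n := by rw [hfn]; exact hF1
    have hF2' : n ≤ (f n + 1) * (f n + 1) := by rw [hfn]; exact hF2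
    refine ⟨⟨hF1', hF2'⟩, ?_⟩
    -- now the g-part
    have hslt : s + 1 ≤ n := by
      have := two_mul_le_sq s
      omega
    obtain ⟨k, hk⟩ : ∃ k, n = s + (k + 1) := ⟨n - s - 1, by omega⟩
    have hnk : n - f n = k + 1 := by rw [hfn]; omega
    have hgn : g n = f (k + 1) + 1 := by rw [hg n hn, hnk]
    obtain ⟨⟨ht1, ht2⟩, -⟩ := IH (k+1) (by omega) (by omega)
    obtain ⟨t, htdef⟩ : ∃ t, f (k+1) = t := ⟨_, rfl⟩
    rw [htdef] at ht1 ht2 hgn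
    -- ht1 : t*t < k+1, ht2 : k+1 ≤ (t+1)*(t+1)
    rw [hgn]
    refine ⟨?_, ?_, by omega⟩
    · -- (t+1)*(t+1) < n + (t+1)
      rcases le_or_gt n (s * s + s) with hcase | hcase
      · obtain ⟨s', rfl⟩ : ∃ s', s = s' + 1 := ⟨s - 1, by omega⟩
        have hexp : (s' + 1) * (s' + 1) = s' * s' + 2 * s' + 1 := by ring
        have e1 : s' * s' < k + 1 := by omega
        have e2 : k + 1 ≤ (s' + 1) * (s' + 1) := by omega
        have ht : t = s' := uniqF t s' (k+1) ht1 ht2 e1 e2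
        subst ht
        omega
      · have hexp : (s + 1) * (s + 1) = s * s + 2 * s + 1 := by ring
        have e1 : s * s < k + 1 := by omega
        have e2 : k + 1 ≤ (s + 1) * (s + 1) := by omega
        have ht : t = s := uniqF t s (k+1) ht1 ht2 e1 e2
        subst ht
        omega
    · -- n ≤ (t+1)*(t+1) + (t+1)
      rcases le_or_gt n (s * s + s) with hcase | hcase
      · obtain ⟨s', rfl⟩ : ∃ s', s = s' + 1 := ⟨s - 1, by omega⟩
        have hexp : (s' + 1) * (s' + 1) = s' * s' + 2 * s' + 1 := by ring
        have e1 : s' * s' < k + 1 := by omega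
        have e2 : k + 1 ≤ (s' + 1) * (s' + 1) := by omega
        have ht : t = s' := uniqF t s' (k+1) ht1 ht2 e1 e2
        subst ht
        omega
      · have hexp : (s + 1) * (s + 1) = s * s + 2 * s + 1 := by ring
        have e1 : s * s < k + 1 := by omega
        have e2 : k + 1 ≤ (s + 1) * (s + 1) := by omega
        have ht : t = s := uniqF t s (k+1) ht1 ht2 e1 e2
        subst ht
        omega

/-- Golomb-like system f(1)=0, g(n)=f(n-f(n))+1 (n ≥ 1), f(n)=g(n-g(n-1)) (n ≥ 2):
every positive integer i satisfies g(i²-i+1+r)=i for 0 ≤ r ≤ 2i-1; in particular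
i appears exactly 2i times in the g-sequence. -/
theorem stmt_1 (f g : ℕ → ℕ)
    (hf1 : f 1 = 0)
    (hg : ∀ n, 1 ≤ n → g n = f (n - f n) + 1)
    (hf : ∀ n, 2 ≤ n → f n = g (n - g (n - 1))) :
    (∀ n, 1 ≤ n → 1 ≤ n - f n) ∧ (∀ n, 2 ≤ n → 1 ≤ n - g (n - 1)) ∧
    (∀ i r : ℕ, 1 ≤ i → r ≤ 2 * i - 1 → g (i ^ 2 - i + 1 + r) = i) ∧
    (∀ i : ℕ, 1 ≤ i → {n : ℕ | 1 ≤ n ∧ g n = i}.ncard = 2 * i) := by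
  have M := mainlem f g hf1 hg hf
  have part3 : ∀ i r : ℕ, 1 ≤ i → r ≤ 2 * i - 1 → g (i ^ 2 - i + 1 + r) = i := by
    intro i r hi hr
    have hii : i ≤ i * i := Nat.le_mul_of_pos_left i hi
    have hpow : i ^ 2 = i * i := sq i
    set n := i ^ 2 - i + 1 + r with hn
    have hn' : n = i * i - i + 1 + r := by rw [hn, hpow]
    have hn1 : 1 ≤ n := by omega
    obtain ⟨-, hg1, hg2, hg3⟩ := M n hn1
    refine uniqG (g n) i n hg1 hg2 ?_ ?_
    · omega
    · omega
  refine ⟨?_, ?_, part3, ?_⟩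
  · intro n hn
    obtain ⟨⟨hF1, hF2⟩, -⟩ := M n hn
    rcases Nat.eq_zero_or_pos (f n) with h0 | h0
    · omega
    · have := Nat.le_mul_of_pos_left (f n) h0
      omega
  · intro n hn
    obtain ⟨-, hg1, hg2, hg3⟩ := M (n-1) (by omega)
    have := two_mul_le_sq (g (n-1))
    omega
  · intro i hi
    have hii : i ≤ i * i := Nat.le_mul_of_pos_left i hi
    have hpow : i ^ 2 = i * i := sq i
    have hset : {n : ℕ | 1 ≤ n ∧ g n = i} = Set.Icc (i * i - i + 1) (i * i + i) := by
      ext n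
      simp only [Set.mem_setOf_eq, Set.mem_Icc]
      constructor
      · rintro ⟨hn1, hgn⟩
        obtain ⟨-, hg1, hg2, -⟩ := M n hn1
        rw [hgn] at hg1 hg2
        omega
      · rintro ⟨h1, h2⟩
        have hr : n = i ^ 2 - i + 1 + (n - (i * i - i + 1)) := by
          rw [hpow]; omega
        refine ⟨by omega, ?_⟩
        rw [hr]
        exact part3 i _ hi (by omega)
    rw [hset, ← Finset.coe_Icc, Set.ncard_coe_finset, Nat.card_Icc]
    omega
end

section
/- The sequences f and g defined by f(1) = 0, g(n) = f(n - f(n)) + 1, f(n) = g(n - g(n-1)) are both slow: for all n in their domains, f(n+1) - f(n) ∈ {0, 1} and g(n+1) - g(n) ∈ {0, 1}, and both sequences are unbounded. -/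
/-- Auxiliary: the explicit formula for f. -/
def Faux (n : ℕ) : ℕ := Nat.sqrt (n - 1)

/-- Auxiliary: the explicit formula for g (round of sqrt). -/
def Gaux (n : ℕ) : ℕ := (Nat.sqrt (4 * n) + 1) / 2

lemma sqrt_eq_of {m a : ℕ} (h1 : a * a ≤ m) (h2 : m < (a + 1) * (a + 1)) :
    Nat.sqrt m = a := by
  have l1 : a ≤ Nat.sqrt m := Nat.le_sqrt.mpr h1
  have l2 : Nat.sqrt m < a + 1 := Nat.sqrt_lt.mpr h2
  omega

lemma Gaux_eq {n k : ℕ} (h0 : 1 ≤ k) (h1 : k * k + 1 ≤ n + k) (h2 : n ≤ k * k + k) :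
    Gaux n = k := by
  obtain ⟨p, rfl⟩ : ∃ p, k = p + 1 := ⟨k - 1, by omega⟩
  have l1 : 2 * p + 1 ≤ Nat.sqrt (4 * n) := Nat.le_sqrt.mpr (by nlinarith)
  have l2 : Nat.sqrt (4 * n) < 2 * p + 3 := Nat.sqrt_lt.mpr (by nlinarith)
  show (Nat.sqrt (4 * n) + 1) / 2 = p + 1
  omega

lemma Gaux_bounds {n : ℕ} (hn : 1 ≤ n) :
    1 ≤ Gaux n ∧ Gaux n * Gaux n + 1 ≤ n + Gaux n ∧ n ≤ Gaux n * Gaux n + Gaux n := by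
  obtain ⟨s, hs, hs1, hs2⟩ : ∃ s, Nat.sqrt (4 * n) = s ∧ s * s ≤ 4 * n ∧
      4 * n < (s + 1) * (s + 1) :=
    ⟨_, rfl, by simpa [pow_two] using Nat.sqrt_le' (4 * n),
      by simpa [pow_two, Nat.succ_eq_add_one] using Nat.lt_succ_sqrt' (4 * n)⟩
  have hG : Gaux n = (s + 1) / 2 := by rw [Gaux, hs]
  have hs0 : 2 ≤ s := by
    by_contra h
    push_neg at h
    interval_cases s <;> omega
  rcases Nat.even_or_odd s with ⟨p, rfl⟩ | ⟨p, rfl⟩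
  · -- s = p + p
    have hp1 : 1 ≤ p := by omega
    have hGp : Gaux n = p := by omega
    rw [hGp]
    refine ⟨by omega, by nlinarith, by nlinarith⟩
  · -- s = 2 * p + 1
    have hGp : Gaux n = p + 1 := by omega
    rw [hGp]
    have h4 : 4 * (p * p) + 4 * p + 1 ≤ 4 * n := by nlinarith
    have h5 : p * p + p + 1 ≤ n := by omega
    refine ⟨by omega, by nlinarith, by nlinarith⟩

lemma Gaux_le {n : ℕ} (hn : 1 ≤ n) : Gaux n ≤ n := by
  obtain ⟨hk0, hk1, hk2⟩ := Gaux_bounds hn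
  obtain ⟨p, hp⟩ : ∃ p, Gaux n = p + 1 := ⟨Gaux n - 1, by omega⟩
  rw [hp] at hk1 ⊢
  nlinarith

/-- If j = sqrt m and k is the "round sqrt" position of m, then j = k-1 or k. -/
lemma jk_cases {m j k : ℕ} (hj1 : j * j ≤ m) (hj2 : m < (j + 1) * (j + 1))
    (hk0 : 1 ≤ k) (hk1 : k * k ≤ m + k) (hk2 : m ≤ k * k + k) :
    j + 1 = k ∨ j = k := by
  have l1 : j ≤ k := by
    by_contra h
    push_neg at h
    nlinarith
  have l2 : k ≤ j + 1 := by
    by_contra h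
    push_neg at h
    nlinarith
  omega

lemma A_lem {n : ℕ} (hn : 1 ≤ n) : Gaux n = Faux (n - Faux n) + 1 := by
  obtain ⟨m, rfl⟩ : ∃ m, n = m + 1 := ⟨n - 1, by omega⟩
  obtain ⟨j, hj⟩ : ∃ j, Nat.sqrt m = j := ⟨_, rfl⟩
  have hj1 : j * j ≤ m := hj ▸ (by simpa [pow_two] using Nat.sqrt_le' m)
  have hj2 : m < (j + 1) * (j + 1) := hj ▸
    (by simpa [pow_two, Nat.succ_eq_add_one] using Nat.lt_succ_sqrt' m)
  obtain ⟨hk0, hk1, hk2⟩ := Gaux_bounds hn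
  obtain ⟨k, hk⟩ : ∃ k, Gaux (m + 1) = k := ⟨_, rfl⟩
  rw [hk] at hk0 hk1 hk2 ⊢
  have hFn : Faux (m + 1) = j := by
    show Nat.sqrt (m + 1 - 1) = j; simpa using hj
  rw [hFn]
  have hjm : j ≤ m := hj ▸ Nat.sqrt_le_self m
  have key : Faux (m + 1 - j) = k - 1 := by
    show Nat.sqrt (m + 1 - j - 1) = k - 1
    have hsub : m + 1 - j - 1 = m - j := by omega
    rw [hsub]
    rcases jk_cases hj1 hj2 hk0 (by omega) (by omega) with h | h
    · obtain rfl : k = j + 1 := by omega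
      simp only [Nat.add_sub_cancel]
      apply sqrt_eq_of
      · have : j * j + j ≤ m := by nlinarith
        omega
      · exact lt_of_le_of_lt (Nat.sub_le m j) hj2
    · obtain rfl : j = k := h
      obtain ⟨p, rfl⟩ : ∃ p, j = p + 1 := ⟨j - 1, by omega⟩
      simp only [Nat.add_sub_cancel]
      apply sqrt_eq_of
      · have : p * p + (p + 1) ≤ m := by nlinarith
        omega
      · omega
  rw [key]
  omega

lemma B_lem {n : ℕ} (hn : 2 ≤ n) : Faux n = Gaux (n - Gaux (n - 1)) := by
  obtain ⟨m, rfl⟩ : ∃ m, n = m + 1 := ⟨n - 1, by omega⟩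
  have hm : 1 ≤ m := by omega
  simp only [Nat.add_sub_cancel]
  obtain ⟨hk0, hk1, hk2⟩ := Gaux_bounds hm
  have hkm : Gaux m ≤ m := Gaux_le hm
  obtain ⟨k, hk⟩ : ∃ k, Gaux m = k := ⟨_, rfl⟩
  rw [hk] at hk0 hk1 hk2 hkm ⊢
  obtain ⟨j, hj⟩ : ∃ j, Nat.sqrt m = j := ⟨_, rfl⟩
  have hj1 : j * j ≤ m := hj ▸ (by simpa [pow_two] using Nat.sqrt_le' m)
  have hj2 : m < (j + 1) * (j + 1) := hj ▸
    (by simpa [pow_two, Nat.succ_eq_add_one] using Nat.lt_succ_sqrt' m)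
  have hFn : Faux (m + 1) = j := by
    show Nat.sqrt (m + 1 - 1) = j; simpa using hj
  rw [hFn]
  symm
  rcases jk_cases hj1 hj2 hk0 (by omega) hk2 with h | h
  · obtain rfl : k = j + 1 := by omega
    have hm1 : j * j + j + 1 ≤ m := by nlinarith
    have hm2 : m ≤ j * j + 2 * j := by nlinarith
    have hj0 : 1 ≤ j := by omega
    apply Gaux_eq hj0
    · omega
    · omega
  · obtain rfl : j = k := h
    have hj0 : 1 ≤ j := hk0
    apply Gaux_eq hj0
    · omega
    · omega

lemma Faux_slow {n : ℕ} (hn : 1 ≤ n) :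
    Faux (n + 1) = Faux n ∨ Faux (n + 1) = Faux n + 1 := by
  obtain ⟨m, rfl⟩ : ∃ m, n = m + 1 := ⟨n - 1, by omega⟩
  have h1 : Faux (m + 1) = Nat.sqrt m := rfl
  have h2 : Faux (m + 1 + 1) = Nat.sqrt (m + 1) := rfl
  rw [h1, h2]
  have l1 : Nat.sqrt m ≤ Nat.sqrt (m + 1) := Nat.sqrt_le_sqrt (by omega)
  have l2 : Nat.sqrt (m + 1) ≤ Nat.sqrt m + 1 := Nat.sqrt_succ_le_succ_sqrt m
  omega

lemma Gaux_slow {n : ℕ} (hn : 1 ≤ n) :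
    Gaux (n + 1) = Gaux n ∨ Gaux (n + 1) = Gaux n + 1 := by
  obtain ⟨s, hs, hs1, hs2⟩ : ∃ s, Nat.sqrt (4 * n) = s ∧ s * s ≤ 4 * n ∧
      4 * n < (s + 1) * (s + 1) :=
    ⟨_, rfl, by simpa [pow_two] using Nat.sqrt_le' (4 * n),
      by simpa [pow_two, Nat.succ_eq_add_one] using Nat.lt_succ_sqrt' (4 * n)⟩
  have l1 : s ≤ Nat.sqrt (4 * (n + 1)) := hs ▸ Nat.sqrt_le_sqrt (by omega)
  have l2 : Nat.sqrt (4 * (n + 1)) < s + 3 := Nat.sqrt_lt.mpr (by nlinarith)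
  show (Nat.sqrt (4 * (n + 1)) + 1) / 2 = (Nat.sqrt (4 * n) + 1) / 2 ∨
       (Nat.sqrt (4 * (n + 1)) + 1) / 2 = (Nat.sqrt (4 * n) + 1) / 2 + 1
  rw [hs]
  omega

lemma Faux_unbounded (m : ℕ) : m ≤ Faux (m * m + 1) := by
  show m ≤ Nat.sqrt (m * m + 1 - 1)
  simp only [Nat.add_sub_cancel]
  have : Nat.sqrt (m ^ 2) = m := Nat.sqrt_eq' m
  simp only [pow_two] at this
  omega

lemma Gaux_unbounded (m : ℕ) : m ≤ Gaux ((m + 1) * (m + 1)) := by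
  have := Gaux_eq (n := (m + 1) * (m + 1)) (k := m + 1) (by omega) (by nlinarith) (by nlinarith)
  omega

/-- The sequences f, g of the Golomb-like system f(1)=0, g(n)=f(n-f(n))+1,
f(n)=g(n-g(n-1)) are both slow (successive differences 0 or 1) and unbounded. -/
theorem stmt_2 (f g : ℕ → ℕ)
    (hf1 : f 1 = 0)
    (hg : ∀ n, 1 ≤ n → g n = f (n - f n) + 1)
    (hf : ∀ n, 2 ≤ n → f n = g (n - g (n - 1))) :
    (∀ n, 1 ≤ n → (f (n + 1) = f n ∨ f (n + 1) = f n + 1)) ∧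
    (∀ n, 1 ≤ n → (g (n + 1) = g n ∨ g (n + 1) = g n + 1)) ∧
    (∀ m : ℕ, ∃ n : ℕ, 1 ≤ n ∧ m ≤ f n) ∧
    (∀ m : ℕ, ∃ n : ℕ, 1 ≤ n ∧ m ≤ g n) := by
  have key : ∀ n, 1 ≤ n → f n = Faux n ∧ g n = Gaux n := by
    intro n
    induction n using Nat.strong_induction_on with
    | _ n ih =>
      intro hn
      have hfn : f n = Faux n := by
        rcases Nat.lt_or_ge n 2 with h2 | h2
        · have : n = 1 := by omega
          subst this
          simpa [Faux] using hf1
        · rw [hf n h2]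
          have ihg1 : g (n - 1) = Gaux (n - 1) := (ih (n - 1) (by omega) (by omega)).2
          rw [ihg1]
          have hk0 : 1 ≤ Gaux (n - 1) := (Gaux_bounds (n := n - 1) (by omega)).1
          have hkn : Gaux (n - 1) ≤ n - 1 := Gaux_le (by omega)
          have ihg2 : g (n - Gaux (n - 1)) = Gaux (n - Gaux (n - 1)) :=
            (ih (n - Gaux (n - 1)) (by omega) (by omega)).2
          rw [ihg2]
          exact (B_lem h2).symm
      refine ⟨hfn, ?_⟩
      rw [hg n hn, hfn]
      rcases Nat.lt_or_ge n 2 with h2 | h2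
      · have : n = 1 := by omega
        subst this
        have h1 : Faux 1 = 0 := rfl
        rw [h1]
        simp only [Nat.sub_zero, hf1]
        have : Gaux 1 = 1 := Gaux_eq (by omega) (by omega) (by omega)
        omega
      · have hF1 : 1 ≤ Faux n := by
          show 1 ≤ Nat.sqrt (n - 1)
          exact Nat.le_sqrt.mpr (by omega)
        have hF2 : Faux n ≤ n - 1 := Nat.sqrt_le_self (n - 1)
        have ihf : f (n - Faux n) = Faux (n - Faux n) :=
          (ih (n - Faux n) (by omega) (by omega)).1
        rw [ihf]
        exact (A_lem hn).symm
  refine ⟨?_, ?_, ?_, ?_⟩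
  · intro n hn
    rw [(key n hn).1, (key (n + 1) (by omega)).1]
    exact Faux_slow hn
  · intro n hn
    rw [(key n hn).2, (key (n + 1) (by omega)).2]
    exact Gaux_slow hn
  · intro m
    refine ⟨m * m + 1, by omega, ?_⟩
    rw [(key _ (by omega)).1]
    exact Faux_unbounded m
  · intro m
    refine ⟨(m + 1) * (m + 1), by nlinarith, ?_⟩
    rw [(key _ (by nlinarith)).2]
    exact Gaux_unbounded m
end

section
/- Define f, g : ℕ → ℕ with initial conditions f(1) = 0, f(2) = 1, f(3) = 1, g(1) = 1, g(2) = 1, g(3) = 2, and for n ≥ 4: f(n) = g(n - g(n-1)) and g(n) = f(n - f(n)) + 2. Then: each odd integer i ≥ 3 appears exactly 2i+1 times in the f-sequence and exactly 2i-1 times in the g-sequence; each even positive integer appears exactly once in each sequence; 0 appears only as f(1); and 1 appears exactly 4 times in the f-sequence and exactly 2 times in the g-sequence. -/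
/-- Block description of the f-sequence at index n. -/
def Ffact (f : ℕ → ℕ) (n : ℕ) : Prop :=
  (n = 1 → f n = 0) ∧ (2 ≤ n → n ≤ 5 → f n = 1) ∧
  ∀ k, 1 ≤ k → (n = 2*k^2+2*k+2 → f n = 2*k) ∧
    (2*k^2+2*k+3 ≤ n → n ≤ 2*k^2+6*k+5 → f n = 2*k+1)

/-- Block description of the g-sequence at index n. -/
def Gfact (g : ℕ → ℕ) (n : ℕ) : Prop :=
  (1 ≤ n → n ≤ 2 → g n = 1) ∧ (n = 3 → g n = 2) ∧
  ∀ k, 1 ≤ k → (n = 2*k^2+4*k+3 → g n = 2*k+2) ∧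
    (2*k^2+2 ≤ n → n ≤ 2*k^2+4*k+2 → g n = 2*k+1)

lemma Ffact_small {f : ℕ → ℕ} {n : ℕ} (h5 : n ≤ 5)
    (h0 : n = 1 → f n = 0) (h1 : 2 ≤ n → f n = 1) : Ffact f n := by
  refine ⟨h0, fun a _ => h1 a, fun k hk => ⟨fun hn => ?_, fun ha hb => ?_⟩⟩
  · nlinarith
  · nlinarith

lemma Ffact_even {f : ℕ → ℕ} {k n : ℕ} (hk : 1 ≤ k) (hn : n = 2*k^2+2*k+2)
    (hv : f n = 2*k) : Ffact f n := by
  refine ⟨fun h => ?_, fun a b => ?_, fun k' hk' => ⟨fun hn' => ?_, fun ha hb => ?_⟩⟩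
  · nlinarith
  · nlinarith
  · have : k = k' := by
      rcases lt_trichotomy k k' with h | h | h
      · nlinarith [Nat.mul_le_mul h h]
      · exact h
      · nlinarith [Nat.mul_le_mul h h]
    subst this; rw [hv]
  · rcases le_or_gt k' k with h | h
    · nlinarith [Nat.mul_le_mul h h]
    · nlinarith [Nat.mul_le_mul h h]

lemma Ffact_odd {f : ℕ → ℕ} {k n : ℕ} (hk : 1 ≤ k) (ha : 2*k^2+2*k+3 ≤ n)
    (hb : n ≤ 2*k^2+6*k+5) (hv : f n = 2*k+1) : Ffact f n := by
  refine ⟨fun h => ?_, fun a b => ?_, fun k' hk' => ⟨fun hn' => ?_, fun ha' hb' => ?_⟩⟩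
  · nlinarith
  · nlinarith
  · rcases le_or_gt k' k with h | h
    · nlinarith [Nat.mul_le_mul h h]
    · nlinarith [Nat.mul_le_mul h h]
  · have : k = k' := by
      rcases lt_trichotomy k k' with h | h | h
      · nlinarith [Nat.mul_le_mul h h]
      · exact h
      · nlinarith [Nat.mul_le_mul h h]
    subst this; rw [hv]

lemma Gfact_small {g : ℕ → ℕ} {n : ℕ} (h3 : n ≤ 3)
    (h1 : 1 ≤ n → n ≤ 2 → g n = 1) (h2 : n = 3 → g n = 2) : Gfact g n := by
  refine ⟨h1, h2, fun k hk => ⟨fun hn => ?_, fun ha hb => ?_⟩⟩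
  · nlinarith
  · nlinarith

lemma Gfact_even {g : ℕ → ℕ} {k n : ℕ} (hk : 1 ≤ k) (hn : n = 2*k^2+4*k+3)
    (hv : g n = 2*k+2) : Gfact g n := by
  refine ⟨fun a b => ?_, fun h => ?_, fun k' hk' => ⟨fun hn' => ?_, fun ha hb => ?_⟩⟩
  · nlinarith
  · nlinarith
  · have : k = k' := by
      rcases lt_trichotomy k k' with h | h | h
      · nlinarith [Nat.mul_le_mul h h]
      · exact h
      · nlinarith [Nat.mul_le_mul h h]
    subst this; rw [hv]
  · rcases le_or_gt k' k with h | h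
    · nlinarith [Nat.mul_le_mul h h]
    · nlinarith [Nat.mul_le_mul h h]

lemma Gfact_odd {g : ℕ → ℕ} {k n : ℕ} (hk : 1 ≤ k) (ha : 2*k^2+2 ≤ n)
    (hb : n ≤ 2*k^2+4*k+2) (hv : g n = 2*k+1) : Gfact g n := by
  refine ⟨fun a b => ?_, fun h => ?_, fun k' hk' => ⟨fun hn' => ?_, fun ha' hb' => ?_⟩⟩
  · nlinarith
  · nlinarith
  · rcases le_or_gt k' k with h | h
    · nlinarith [Nat.mul_le_mul h h]
    · nlinarith [Nat.mul_le_mul h h]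
  · have : k = k' := by
      rcases lt_trichotomy k k' with h | h | h
      · nlinarith [Nat.mul_le_mul h h]
      · exact h
      · nlinarith [Nat.mul_le_mul h h]
    subst this; rw [hv]

lemma f_cover : ∀ n, 6 ≤ n → ∃ k, 1 ≤ k ∧ 2*k^2+2*k+2 ≤ n ∧ n ≤ 2*k^2+6*k+5 := by
  intro n hn
  induction n, hn using Nat.le_induction with
  | base => exact ⟨1, by norm_num⟩
  | succ n hn ih =>
    obtain ⟨k, hk, h1, h2⟩ := ih
    rcases eq_or_lt_of_le h2 with h | h
    · exact ⟨k+1, by nlinarith, by nlinarith, by nlinarith⟩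
    · exact ⟨k, hk, by omega, h⟩

lemma g_cover : ∀ n, 4 ≤ n → ∃ k, 1 ≤ k ∧ 2*k^2+2 ≤ n ∧ n ≤ 2*k^2+4*k+3 := by
  intro n hn
  induction n, hn using Nat.le_induction with
  | base => exact ⟨1, by norm_num⟩
  | succ n hn ih =>
    obtain ⟨k, hk, h1, h2⟩ := ih
    rcases eq_or_lt_of_le h2 with h | h
    · exact ⟨k+1, by nlinarith, by nlinarith, by nlinarith⟩
    · exact ⟨k, hk, by omega, h⟩

lemma golomb_main (f g : ℕ → ℕ)
    (hf1 : f 1 = 0) (hf2 : f 2 = 1) (hf3 : f 3 = 1)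
    (hg1 : g 1 = 1) (hg2 : g 2 = 1) (hg3 : g 3 = 2)
    (hf : ∀ n, 4 ≤ n → f n = g (n - g (n - 1)))
    (hg : ∀ n, 4 ≤ n → g n = f (n - f n) + 2) :
    ∀ n, 1 ≤ n → Ffact f n ∧ Gfact g n := by
  have hf4 : f 4 = 1 := by rw [hf 4 (by norm_num), hg3]; norm_num [hg2]
  have hg4 : g 4 = 3 := by rw [hg 4 (by norm_num), hf4]; norm_num [hf3]
  have hf5 : f 5 = 1 := by rw [hf 5 (by norm_num), hg4]; norm_num [hg2]
  have hg5 : g 5 = 3 := by rw [hg 5 (by norm_num), hf5]; norm_num [hf4]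
  intro n
  induction n using Nat.strong_induction_on with
  | _ n IH =>
  intro hn
  have FOdd : ∀ m k, m < n → 1 ≤ m → 1 ≤ k → 2*k^2+2*k+3 ≤ m → m ≤ 2*k^2+6*k+5 →
      f m = 2*k+1 := fun m k h1 h2 h3 h4 h5 => ((IH m h1 h2).1.2.2 k h3).2 h4 h5
  have FEven : ∀ m k, m < n → 1 ≤ m → 1 ≤ k → m = 2*k^2+2*k+2 → f m = 2*k :=
    fun m k h1 h2 h3 h4 => ((IH m h1 h2).1.2.2 k h3).1 h4
  have GOdd : ∀ m k, m < n → 1 ≤ m → 1 ≤ k → 2*k^2+2 ≤ m → m ≤ 2*k^2+4*k+2 →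
      g m = 2*k+1 := fun m k h1 h2 h3 h4 h5 => ((IH m h1 h2).2.2.2 k h3).2 h4 h5
  have GEven : ∀ m k, m < n → 1 ≤ m → 1 ≤ k → m = 2*k^2+4*k+3 → g m = 2*k+2 :=
    fun m k h1 h2 h3 h4 => ((IH m h1 h2).2.2.2 k h3).1 h4
  rcases le_or_gt n 5 with h5 | h5
  · interval_cases n
    · exact ⟨Ffact_small (by norm_num) (fun _ => hf1) (by omega),
             Gfact_small (by norm_num) (fun _ _ => hg1) (by omega)⟩
    · exact ⟨Ffact_small (by norm_num) (by omega) (fun _ => hf2),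
             Gfact_small (by norm_num) (fun _ _ => hg2) (by omega)⟩
    · exact ⟨Ffact_small (by norm_num) (by omega) (fun _ => hf3),
             Gfact_small (by norm_num) (by omega) (fun _ => hg3)⟩
    · exact ⟨Ffact_small (by norm_num) (by omega) (fun _ => hf4),
             Gfact_odd (k := 1) (by norm_num) (by norm_num) (by norm_num) hg4⟩
    · exact ⟨Ffact_small (by norm_num) (by omega) (fun _ => hf5),
             Gfact_odd (k := 1) (by norm_num) (by norm_num) (by norm_num) hg5⟩
  · obtain ⟨k, hk, hb1, hb2⟩ := f_cover n (by omega)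
    obtain ⟨j, rfl⟩ : ∃ j, k = j + 1 := ⟨k - 1, by omega⟩
    obtain ⟨B, hB⟩ : ∃ B, j^2 = B := ⟨_, rfl⟩
    have e1 : (j+1)^2 = B + 2*j + 1 := by rw [← hB]; try ring
    have e2 : (j+2)^2 = B + 4*j + 4 := by rw [← hB]; try ring
    simp only [e1] at hb1 hb2
    -- n ∈ [2B+6j+6, 2B+10j+13]
    rcases eq_or_lt_of_le hb1 with hE | hO
    · -- even point : n = 2B+6j+6, f n = 2j+2, g n = 2j+3
      have hfn : f n = 2*j+2 := by
        rw [hf n (by omega)]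
        have h1 : g (n-1) = 2*(j+1)+1 :=
          GOdd (n-1) (j+1) (by omega) (by omega) (by omega)
            (by simp only [e1]; omega) (by simp only [e1]; omega)
        rw [h1]
        rcases Nat.eq_zero_or_pos j with rfl | hj
        · have : n - (2*(0+1)+1) = 3 := by omega
          rw [this, hg3]
        · have h2 : g (n - (2*(j+1)+1)) = 2*j+2 :=
            GEven _ j (by omega) (by omega) hj (by simp only [hB]; omega)
          rw [h2]; try ring
      have hgn : g n = 2*j+3 := by
        rw [hg n (by omega), hfn]
        rcases Nat.eq_zero_or_pos j with rfl | hj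
        · have : n - (2*0+2) = 4 := by omega
          rw [this, hf4]
        · have h2 : f (n - (2*j+2)) = 2*j+1 :=
            FOdd _ j (by omega) (by omega) hj (by simp only [hB]; omega)
              (by simp only [hB]; omega)
          rw [h2]; try ring
      exact ⟨Ffact_even (k := j+1) (by omega) (by simp only [e1]; omega)
               (by rw [hfn]; try ring),
             Gfact_odd (k := j+1) (by omega) (by simp only [e1]; omega)
               (by simp only [e1]; omega) (by rw [hgn]; try ring)⟩
    · -- odd run : n ∈ [2B+6j+7, 2B+10j+13], f n = 2j+3
      have hfn : f n = 2*j+3 := by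
        rw [hf n (by omega)]
        rcases le_or_gt n (2*B+8*j+9) with hA | hA'
        · have h1 : g (n-1) = 2*(j+1)+1 :=
            GOdd (n-1) (j+1) (by omega) (by omega) (by omega)
              (by simp only [e1]; omega) (by simp only [e1]; omega)
          rw [h1]
          have h2 : g (n - (2*(j+1)+1)) = 2*(j+1)+1 :=
            GOdd _ (j+1) (by omega) (by omega) (by omega)
              (by simp only [e1]; omega) (by simp only [e1]; omega)
          rw [h2]; try ring
        · rcases eq_or_lt_of_le (show 2*B+8*j+10 ≤ n by omega) with hBc | hC
          · have h1 : g (n-1) = 2*(j+1)+2 :=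
              GEven (n-1) (j+1) (by omega) (by omega) (by omega)
                (by simp only [e1]; omega)
            rw [h1]
            have h2 : g (n - (2*(j+1)+2)) = 2*(j+1)+1 :=
              GOdd _ (j+1) (by omega) (by omega) (by omega)
                (by simp only [e1]; omega) (by simp only [e1]; omega)
            rw [h2]; try ring
          · have h1 : g (n-1) = 2*(j+2)+1 :=
              GOdd (n-1) (j+2) (by omega) (by omega) (by omega)
                (by simp only [e2]; omega) (by simp only [e2]; omega)
            rw [h1]
            have h2 : g (n - (2*(j+2)+1)) = 2*(j+1)+1 :=
              GOdd _ (j+1) (by omega) (by omega) (by omega)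
                (by simp only [e1]; omega) (by simp only [e1]; omega)
            rw [h2]; try ring
      have hFf : Ffact f n :=
        Ffact_odd (k := j+1) (by omega) (by simp only [e1]; omega)
          (by simp only [e1]; omega) (by rw [hfn]; try ring)
      have hGf : Gfact g n := by
        have hgn := hg n (by omega)
        rw [hfn] at hgn
        rcases le_or_gt n (2*B+8*j+8) with hα | hα'
        · have h2 : f (n - (2*j+3)) = 2*j+1 := by
            rcases Nat.eq_zero_or_pos j with rfl | hj
            · have h4 : n - (2*0+3) = 4 ∨ n - (2*0+3) = 5 := by omega
              rcases h4 with h4 | h4 <;> rw [h4]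
              · exact hf4
              · exact hf5
            · exact FOdd _ j (by omega) (by omega) hj
                (by simp only [hB]; omega) (by simp only [hB]; omega)
          rw [h2] at hgn
          exact Gfact_odd (k := j+1) (by omega) (by simp only [e1]; omega)
            (by simp only [e1]; omega) (by rw [hgn]; try ring)
        · rcases eq_or_lt_of_le (show 2*B+8*j+9 ≤ n by omega) with hβ | hγ
          · have h2 : f (n - (2*j+3)) = 2*(j+1) :=
              FEven _ (j+1) (by omega) (by omega) (by omega)
                (by simp only [e1]; omega)
            rw [h2] at hgn
            exact Gfact_even (k := j+1) (by omega) (by simp only [e1]; omega)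
              (by rw [hgn]; try ring)
          · have h2 : f (n - (2*j+3)) = 2*(j+1)+1 :=
              FOdd _ (j+1) (by omega) (by omega) (by omega)
                (by simp only [e1]; omega) (by simp only [e1]; omega)
            rw [h2] at hgn
            exact Gfact_odd (k := j+2) (by omega) (by simp only [e2]; omega)
              (by simp only [e2]; omega) (by rw [hgn]; try ring)
      exact ⟨hFf, hGf⟩

lemma f_eval (f : ℕ → ℕ) (H : ∀ n, 1 ≤ n → Ffact f n) :
    ∀ n, 1 ≤ n → (n = 1 ∧ f n = 0) ∨ (2 ≤ n ∧ n ≤ 5 ∧ f n = 1) ∨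
      ∃ k, 1 ≤ k ∧ ((n = 2*k^2+2*k+2 ∧ f n = 2*k) ∨
        (2*k^2+2*k+3 ≤ n ∧ n ≤ 2*k^2+6*k+5 ∧ f n = 2*k+1)) := by
  intro n hn
  rcases le_or_gt n 5 with h | h
  · rcases eq_or_lt_of_le hn with h1 | h1
    · exact Or.inl ⟨h1.symm, h1 ▸ (H n hn).1 h1.symm⟩
    · exact Or.inr (Or.inl ⟨h1, h, (H n hn).2.1 h1 h⟩)
  · obtain ⟨k, hk, h1, h2⟩ := f_cover n (by omega)
    rcases eq_or_lt_of_le h1 with hE | hO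
    · exact Or.inr (Or.inr ⟨k, hk, Or.inl ⟨hE.symm, ((H n hn).2.2 k hk).1 hE.symm⟩⟩)
    · exact Or.inr (Or.inr ⟨k, hk, Or.inr ⟨hO, h2, ((H n hn).2.2 k hk).2 hO h2⟩⟩)

lemma g_eval (g : ℕ → ℕ) (H : ∀ n, 1 ≤ n → Gfact g n) :
    ∀ n, 1 ≤ n → (n ≤ 2 ∧ g n = 1) ∨ (n = 3 ∧ g n = 2) ∨
      ∃ k, 1 ≤ k ∧ ((n = 2*k^2+4*k+3 ∧ g n = 2*k+2) ∨
        (2*k^2+2 ≤ n ∧ n ≤ 2*k^2+4*k+2 ∧ g n = 2*k+1)) := by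
  intro n hn
  rcases le_or_gt n 3 with h | h
  · rcases eq_or_lt_of_le h with h1 | h1
    · exact Or.inr (Or.inl ⟨h1, (H n hn).2.1 h1⟩)
    · exact Or.inl ⟨by omega, (H n hn).1 hn (by omega)⟩
  · obtain ⟨k, hk, h1, h2⟩ := g_cover n (by omega)
    rcases eq_or_lt_of_le h2 with hE | hO
    · exact Or.inr (Or.inr ⟨k, hk, Or.inl ⟨hE, ((H n hn).2.2 k hk).1 hE⟩⟩)
    · exact Or.inr (Or.inr ⟨k, hk, Or.inr ⟨h1, by omega, ((H n hn).2.2 k hk).2 h1 (by omega)⟩⟩)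

/-- Golomb-like system with f(1)=0, f(2)=f(3)=1, g(1)=g(2)=1, g(3)=2 and, for n ≥ 4,
f(n)=g(n-g(n-1)), g(n)=f(n-f(n))+2: statistics of how often each value appears. -/
theorem stmt_3 (f g : ℕ → ℕ)
    (hf1 : f 1 = 0) (hf2 : f 2 = 1) (hf3 : f 3 = 1)
    (hg1 : g 1 = 1) (hg2 : g 2 = 1) (hg3 : g 3 = 2)
    (hf : ∀ n, 4 ≤ n → f n = g (n - g (n - 1)))
    (hg : ∀ n, 4 ≤ n → g n = f (n - f n) + 2) :
    (∀ n, 4 ≤ n → 1 ≤ n - g (n - 1) ∧ 1 ≤ n - f n) ∧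
    (∀ i : ℕ, Odd i → 3 ≤ i →
      {n : ℕ | 1 ≤ n ∧ f n = i}.ncard = 2 * i + 1 ∧
      {n : ℕ | 1 ≤ n ∧ g n = i}.ncard = 2 * i - 1) ∧
    (∀ i : ℕ, Even i → 1 ≤ i →
      {n : ℕ | 1 ≤ n ∧ f n = i}.ncard = 1 ∧
      {n : ℕ | 1 ≤ n ∧ g n = i}.ncard = 1) ∧
    ({n : ℕ | 1 ≤ n ∧ f n = 0} = {1}) ∧ ({n : ℕ | 1 ≤ n ∧ g n = 0} = ∅) ∧
    ({n : ℕ | 1 ≤ n ∧ f n = 1}.ncard = 4) ∧ ({n : ℕ | 1 ≤ n ∧ g n = 1}.ncard = 2) := by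
  have H := golomb_main f g hf1 hf2 hf3 hg1 hg2 hg3 hf hg
  have HF : ∀ n, 1 ≤ n → Ffact f n := fun n hn => (H n hn).1
  have HG : ∀ n, 1 ≤ n → Gfact g n := fun n hn => (H n hn).2
  have FE := f_eval f HF
  have GE := g_eval g HG
  refine ⟨?_, ?_, ?_, ?_, ?_, ?_, ?_⟩
  · -- well-definedness
    intro n hn
    constructor
    · have hgle : g (n-1) < n := by
        rcases GE (n-1) (by omega) with ⟨h1, h2⟩ | ⟨h1, h2⟩ | ⟨k, hk, ⟨h1, h2⟩ | ⟨h1, h2, h3⟩⟩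
        · omega
        · omega
        · have h5 : n = 2*k^2+4*k+3+1 := by rw [← h1]; omega
          rw [h2]; nlinarith
        · rw [h3]
          nlinarith [Nat.sub_le n 1, h1, Nat.le_self_pow (two_ne_zero) k]
      omega
    · have hfle : f n < n := by
        rcases FE n (by omega) with ⟨h1, h2⟩ | ⟨h1, h2, h3⟩ | ⟨k, hk, ⟨h1, h2⟩ | ⟨h1, h2, h3⟩⟩
        · omega
        · omega
        · rw [h2]; nlinarith
        · rw [h3]; nlinarith
      omega
  · -- odd values
    intro i hodd hi3
    obtain ⟨k, hk1, rfl⟩ : ∃ k, 1 ≤ k ∧ i = 2*k+1 := by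
      obtain ⟨m, hm⟩ := hodd; exact ⟨m, by omega, by omega⟩
    obtain ⟨B, hB⟩ : ∃ B, k^2 = B := ⟨_, rfl⟩
    constructor
    · have hset : {n : ℕ | 1 ≤ n ∧ f n = 2*k+1} =
          ↑(Finset.Icc (2*k^2+2*k+3) (2*k^2+6*k+5)) := by
        ext n
        simp only [Set.mem_setOf_eq, Finset.coe_Icc, Set.mem_Icc]
        constructor
        · rintro ⟨hn, hv⟩
          rcases FE n hn with ⟨h1, h2⟩ | ⟨h1, h2, h3⟩ | ⟨k', hk', ⟨h1, h2⟩ | ⟨h1, h2, h3⟩⟩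
          · omega
          · omega
          · omega
          · have : k' = k := by omega
            subst this; exact ⟨h1, h2⟩
        · rintro ⟨h1, h2⟩
          have hn : 1 ≤ n := by nlinarith
          exact ⟨hn, ((HF n hn).2.2 k hk1).2 h1 h2⟩
      rw [hset, Set.ncard_coe_finset, Nat.card_Icc]
      simp only [hB]; omega
    · have hset : {n : ℕ | 1 ≤ n ∧ g n = 2*k+1} =
          ↑(Finset.Icc (2*k^2+2) (2*k^2+4*k+2)) := by
        ext n
        simp only [Set.mem_setOf_eq, Finset.coe_Icc, Set.mem_Icc]
        constructor
        · rintro ⟨hn, hv⟩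
          rcases GE n hn with ⟨h1, h2⟩ | ⟨h1, h2⟩ | ⟨k', hk', ⟨h1, h2⟩ | ⟨h1, h2, h3⟩⟩
          · omega
          · omega
          · omega
          · have : k' = k := by omega
            subst this; exact ⟨h1, h2⟩
        · rintro ⟨h1, h2⟩
          have hn : 1 ≤ n := by nlinarith
          exact ⟨hn, ((HG n hn).2.2 k hk1).2 h1 h2⟩
      rw [hset, Set.ncard_coe_finset, Nat.card_Icc]
      simp only [hB]; omega
  · -- even values
    intro i heven hi1
    obtain ⟨k, hk1, rfl⟩ : ∃ k, 1 ≤ k ∧ i = 2*k := by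
      obtain ⟨m, hm⟩ := heven; exact ⟨m, by omega, by omega⟩
    constructor
    · have hset : {n : ℕ | 1 ≤ n ∧ f n = 2*k} = {2*k^2+2*k+2} := by
        ext n
        simp only [Set.mem_setOf_eq, Set.mem_singleton_iff]
        constructor
        · rintro ⟨hn, hv⟩
          rcases FE n hn with ⟨h1, h2⟩ | ⟨h1, h2, h3⟩ | ⟨k', hk', ⟨h1, h2⟩ | ⟨h1, h2, h3⟩⟩
          · omega
          · omega
          · have : k' = k := by omega
            subst this; exact h1
          · omega
        · rintro rfl
          have hn : 1 ≤ 2*k^2+2*k+2 := by omega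
          exact ⟨hn, ((HF _ hn).2.2 k hk1).1 rfl⟩
      rw [hset, Set.ncard_singleton]
    · obtain ⟨j, rfl⟩ : ∃ j, k = j + 1 := ⟨k - 1, by omega⟩
      rcases Nat.eq_zero_or_pos j with rfl | hj
      · have hset : {n : ℕ | 1 ≤ n ∧ g n = 2*(0+1)} = {3} := by
          ext n
          simp only [Set.mem_setOf_eq, Set.mem_singleton_iff]
          constructor
          · rintro ⟨hn, hv⟩
            rcases GE n hn with ⟨h1, h2⟩ | ⟨h1, h2⟩ | ⟨k', hk', ⟨h1, h2⟩ | ⟨h1, h2, h3⟩⟩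
            · omega
            · omega
            · omega
            · omega
          · rintro rfl
            exact ⟨by norm_num, (HG 3 (by norm_num)).2.1 rfl⟩
        rw [hset, Set.ncard_singleton]
      · have hset : {n : ℕ | 1 ≤ n ∧ g n = 2*(j+1)} = {2*j^2+4*j+3} := by
          ext n
          simp only [Set.mem_setOf_eq, Set.mem_singleton_iff]
          constructor
          · rintro ⟨hn, hv⟩
            rcases GE n hn with ⟨h1, h2⟩ | ⟨h1, h2⟩ | ⟨k', hk', ⟨h1, h2⟩ | ⟨h1, h2, h3⟩⟩
            · omega
            · omega
            · have : k' = j := by omega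
              subst this; exact h1
            · omega
          · rintro rfl
            have hn : 1 ≤ 2*j^2+4*j+3 := by omega
            refine ⟨hn, ?_⟩
            have := ((HG _ hn).2.2 j hj).1 rfl
            omega
        rw [hset, Set.ncard_singleton]
  · -- f = 0
    ext n
    simp only [Set.mem_setOf_eq, Set.mem_singleton_iff]
    constructor
    · rintro ⟨hn, hv⟩
      rcases FE n hn with ⟨h1, h2⟩ | ⟨h1, h2, h3⟩ | ⟨k', hk', ⟨h1, h2⟩ | ⟨h1, h2, h3⟩⟩
      · exact h1
      · omega
      · omega
      · omega
    · rintro rfl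
      exact ⟨le_refl 1, hf1⟩
  · -- g = 0
    rw [Set.eq_empty_iff_forall_notMem]
    rintro n ⟨hn, hv⟩
    rcases GE n hn with ⟨h1, h2⟩ | ⟨h1, h2⟩ | ⟨k', hk', ⟨h1, h2⟩ | ⟨h1, h2, h3⟩⟩
    · omega
    · omega
    · omega
    · omega
  · -- f = 1
    have hset : {n : ℕ | 1 ≤ n ∧ f n = 1} = ↑(Finset.Icc 2 5) := by
      ext n
      simp only [Set.mem_setOf_eq, Finset.coe_Icc, Set.mem_Icc]
      constructor
      · rintro ⟨hn, hv⟩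
        rcases FE n hn with ⟨h1, h2⟩ | ⟨h1, h2, h3⟩ | ⟨k', hk', ⟨h1, h2⟩ | ⟨h1, h2, h3⟩⟩
        · omega
        · omega
        · omega
        · omega
      · rintro ⟨h1, h2⟩
        exact ⟨by omega, (HF n (by omega)).2.1 h1 h2⟩
    rw [hset, Set.ncard_coe_finset, Nat.card_Icc]
  · -- g = 1
    have hset : {n : ℕ | 1 ≤ n ∧ g n = 1} = ↑(Finset.Icc 1 2) := by
      ext n
      simp only [Set.mem_setOf_eq, Finset.coe_Icc, Set.mem_Icc]
      constructor
      · rintro ⟨hn, hv⟩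
        rcases GE n hn with ⟨h1, h2⟩ | ⟨h1, h2⟩ | ⟨k', hk', ⟨h1, h2⟩ | ⟨h1, h2, h3⟩⟩
        · omega
        · omega
        · omega
        · omega
      · rintro ⟨h1, h2⟩
        exact ⟨h1, (HG n h1).1 h1 h2⟩
    rw [hset, Set.ncard_coe_finset, Nat.card_Icc]
end

section
/- Define f, g : ℕ → ℕ with initial conditions f(1) = 0, f(2) = 1, f(3) = 1, g(1) = 1, g(2) = 1, g(3) = 2, and for n ≥ 4: f(n) = g(n - g(n-1)) + 1 and g(n) = f(n - f(n)) + 2. Then: if i ≥ 3 is a multiple of 3, i appears once in the f-sequence and 2i-2 times in the g-sequence; if i ≥ 4 is ≡ 1 (mod 3), i appears 2i-1 times in the f-sequence and twice in the g-sequence; if i ≡ 2 (mod 3) is positive, i appears twice in the f-sequence and once in the g-sequence; 0 appears only as f(1); and 1 appears exactly twice in each sequence. -/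
theorem key_s4 (f g : ℕ → ℕ)
    (hf2 : f 2 = 1) (hf3 : f 3 = 1)
    (hg2 : g 2 = 1) (hg3 : g 3 = 2)
    (hf : ∀ n, 4 ≤ n → f n = g (n - g (n - 1)) + 1)
    (hg : ∀ n, 4 ≤ n → g n = f (n - f n) + 2) :
    ∀ n j : ℕ,
      (3*(j*j)+7*j+7 ≤ n ∧ n ≤ 3*(j*j)+13*j+13 → f n = 3*j+4) ∧
      (n = 3*(j*j)+13*j+14 ∨ n = 3*(j*j)+13*j+15 → f n = 3*j+5) ∧
      (n = 3*(j*j)+13*j+16 → f n = 3*j+6) ∧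
      (3*(j*j)+4*j+4 ≤ n ∧ n ≤ 3*(j*j)+10*j+7 → g n = 3*j+3) ∧
      (n = 3*(j*j)+10*j+8 ∨ n = 3*(j*j)+10*j+9 → g n = 3*j+4) ∧
      (n = 3*(j*j)+10*j+10 → g n = 3*j+5) := by
  have hf4 : f 4 = 2 := by rw [hf 4 (by norm_num), hg3]; norm_num [hg2]
  have hg4 : g 4 = 3 := by rw [hg 4 (by norm_num), hf4]; norm_num [hf2]
  have hf5 : f 5 = 2 := by rw [hf 5 (by norm_num), hg4]; norm_num [hg2]
  have hg5 : g 5 = 3 := by rw [hg 5 (by norm_num), hf5]; norm_num [hf3]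
  have hf6 : f 6 = 3 := by rw [hf 6 (by norm_num), hg5]; norm_num [hg3]
  intro n
  induction n using Nat.strong_induction_on with
  | _ n ih =>
  have ihA : ∀ m, m < n → ∀ j, 3*(j*j)+7*j+7 ≤ m → m ≤ 3*(j*j)+13*j+13 → f m = 3*j+4 :=
    fun m hm j h1 h2 => (ih m hm j).1 ⟨h1, h2⟩
  have ihB : ∀ m, m < n → ∀ j, m = 3*(j*j)+13*j+14 ∨ m = 3*(j*j)+13*j+15 → f m = 3*j+5 :=
    fun m hm j h => (ih m hm j).2.1 h
  have ihC : ∀ m, m < n → ∀ j, m = 3*(j*j)+13*j+16 → f m = 3*j+6 :=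
    fun m hm j h => (ih m hm j).2.2.1 h
  have ihD : ∀ m, m < n → ∀ j, 3*(j*j)+4*j+4 ≤ m → m ≤ 3*(j*j)+10*j+7 → g m = 3*j+3 :=
    fun m hm j h1 h2 => (ih m hm j).2.2.2.1 ⟨h1, h2⟩
  have ihE : ∀ m, m < n → ∀ j, m = 3*(j*j)+10*j+8 ∨ m = 3*(j*j)+10*j+9 → g m = 3*j+4 :=
    fun m hm j h => (ih m hm j).2.2.2.2.1 h
  have ihH : ∀ m, m < n → ∀ j, m = 3*(j*j)+10*j+10 → g m = 3*j+5 :=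
    fun m hm j h => (ih m hm j).2.2.2.2.2 h
  have hfn : ∀ j : ℕ,
      (3*(j*j)+7*j+7 ≤ n ∧ n ≤ 3*(j*j)+13*j+13 → f n = 3*j+4) ∧
      (n = 3*(j*j)+13*j+14 ∨ n = 3*(j*j)+13*j+15 → f n = 3*j+5) ∧
      (n = 3*(j*j)+13*j+16 → f n = 3*j+6) := by
    intro j
    have ej : (j+1)*(j+1) = j*j + 2*j + 1 := by ring
    refine ⟨?_, ?_, ?_⟩
    · rintro ⟨h1, h2⟩
      rw [hf n (by omega)]
      rcases (by omega :
          n ≤ 3*(j*j)+10*j+8 ∨ (n = 3*(j*j)+10*j+9 ∨ n = 3*(j*j)+10*j+10) ∨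
          n = 3*(j*j)+10*j+11 ∨ 3*(j*j)+10*j+12 ≤ n) with c | c | c | c
      · rw [ihD (n-1) (by omega) j (by omega) (by omega),
            ihD (n - (3*j+3)) (by omega) j (by omega) (by omega)]
      · rw [ihE (n-1) (by omega) j (by omega),
            ihD (n - (3*j+4)) (by omega) j (by omega) (by omega)]
      · rw [ihH (n-1) (by omega) j (by omega),
            ihD (n - (3*j+5)) (by omega) j (by omega) (by omega)]
      · rw [ihD (n-1) (by omega) (j+1) (by omega) (by omega),
            ihD (n - (3*(j+1)+3)) (by omega) j (by omega) (by omega)]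
    · intro h
      rw [hf n (by omega)]
      rw [ihD (n-1) (by omega) (j+1) (by omega) (by omega),
          ihE (n - (3*(j+1)+3)) (by omega) j (by omega)]
    · intro h
      rw [hf n (by omega)]
      rw [ihD (n-1) (by omega) (j+1) (by omega) (by omega),
          ihH (n - (3*(j+1)+3)) (by omega) j (by omega)]
  intro j
  have ej : (j+1)*(j+1) = j*j + 2*j + 1 := by ring
  refine ⟨(hfn j).1, (hfn j).2.1, (hfn j).2.2, ?_, ?_, ?_⟩
  · rintro ⟨h1, h2⟩
    rw [hg n (by omega)]
    cases j with
    | zero =>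
      norm_num at h1 h2 ⊢
      interval_cases n
      · rw [hf4]; norm_num [hf2]
      · rw [hf5]; norm_num [hf3]
      · rw [hf6]; norm_num [hf3]
      · rw [(hfn 0).1 (by norm_num)]; norm_num [hf3]
    | succ i =>
      have ei : (i+1)*(i+1) = i*i + 2*i + 1 := by ring
      rcases (by omega :
          n ≤ 3*((i+1)*(i+1))+7*(i+1)+3 ∨
          (n = 3*((i+1)*(i+1))+7*(i+1)+4 ∨ n = 3*((i+1)*(i+1))+7*(i+1)+5) ∨
          n = 3*((i+1)*(i+1))+7*(i+1)+6 ∨ 3*((i+1)*(i+1))+7*(i+1)+7 ≤ n) with c | c | c | c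
      · rw [(hfn i).1 ⟨by omega, by omega⟩,
            ihA (n - (3*i+4)) (by omega) i (by omega) (by omega)]
        omega
      · rw [(hfn i).2.1 (by omega),
            ihA (n - (3*i+5)) (by omega) i (by omega) (by omega)]
        omega
      · rw [(hfn i).2.2 (by omega),
            ihA (n - (3*i+6)) (by omega) i (by omega) (by omega)]
        omega
      · rw [(hfn (i+1)).1 ⟨by omega, by omega⟩,
            ihA (n - (3*(i+1)+4)) (by omega) i (by omega) (by omega)]
        omega
  · intro h
    rw [hg n (by omega)]
    rw [(hfn j).1 ⟨by omega, by omega⟩]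
    cases j with
    | zero =>
      norm_num at h ⊢
      rcases h with h | h <;> subst h
      · norm_num [hf4]
      · norm_num [hf5]
    | succ i =>
      have ei : (i+1)*(i+1) = i*i + 2*i + 1 := by ring
      rw [ihB (n - (3*(i+1)+4)) (by omega) i (by omega)]
      omega
  · intro h
    rw [hg n (by omega)]
    rw [(hfn j).1 ⟨by omega, by omega⟩]
    cases j with
    | zero =>
      norm_num at h ⊢
      subst h
      norm_num [hf6]
    | succ i =>
      have ei : (i+1)*(i+1) = i*i + 2*i + 1 := by ring
      rw [ihC (n - (3*(i+1)+4)) (by omega) i (by omega)]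
      omega

theorem rest (f g : ℕ → ℕ)
    (hf1 : f 1 = 0) (hf2 : f 2 = 1) (hf3 : f 3 = 1)
    (hg1 : g 1 = 1) (hg2 : g 2 = 1) (hg3 : g 3 = 2)
    (hf : ∀ n, 4 ≤ n → f n = g (n - g (n - 1)) + 1)
    (hg : ∀ n, 4 ≤ n → g n = f (n - f n) + 2) :
    (∀ n, 4 ≤ n → 1 ≤ n - g (n - 1) ∧ 1 ≤ n - f n) ∧
    (∀ i : ℕ, 3 ≤ i → i % 3 = 0 →
      {n : ℕ | 1 ≤ n ∧ f n = i}.ncard = 1 ∧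
      {n : ℕ | 1 ≤ n ∧ g n = i}.ncard = 2 * i - 2) ∧
    (∀ i : ℕ, 4 ≤ i → i % 3 = 1 →
      {n : ℕ | 1 ≤ n ∧ f n = i}.ncard = 2 * i - 1 ∧
      {n : ℕ | 1 ≤ n ∧ g n = i}.ncard = 2) ∧
    (∀ i : ℕ, 1 ≤ i → i % 3 = 2 →
      {n : ℕ | 1 ≤ n ∧ f n = i}.ncard = 2 ∧
      {n : ℕ | 1 ≤ n ∧ g n = i}.ncard = 1) ∧
    ({n : ℕ | 1 ≤ n ∧ f n = 0} = {1}) ∧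
    ({n : ℕ | 1 ≤ n ∧ f n = 1}.ncard = 2) ∧ ({n : ℕ | 1 ≤ n ∧ g n = 1}.ncard = 2) := by
  have hz : (0:ℕ)*0 = 0 := rfl
  have hf4 : f 4 = 2 := by rw [hf 4 (by norm_num), hg3]; norm_num [hg2]
  have hg4 : g 4 = 3 := by rw [hg 4 (by norm_num), hf4]; norm_num [hf2]
  have hf5 : f 5 = 2 := by rw [hf 5 (by norm_num), hg4]; norm_num [hg2]
  have hg5 : g 5 = 3 := by rw [hg 5 (by norm_num), hf5]; norm_num [hf3]
  have hf6 : f 6 = 3 := by rw [hf 6 (by norm_num), hg5]; norm_num [hg3]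
  have K := key_s4 f g hf2 hf3 hg2 hg3 hf hg
  have totF : ∀ n, 7 ≤ n → ∃ j, 3*(j*j)+7*j+7 ≤ n ∧ n ≤ 3*(j*j)+13*j+16 := by
    intro n hn
    induction n, hn using Nat.le_induction with
    | base => exact ⟨0, by omega, by omega⟩
    | succ m hm ihm =>
      obtain ⟨j, a, b⟩ := ihm
      have ej : (j+1)*(j+1) = j*j + 2*j + 1 := by ring
      rcases (by omega : m ≤ 3*(j*j)+13*j+15 ∨ m = 3*(j*j)+13*j+16) with c | c
      · exact ⟨j, by omega, by omega⟩
      · exact ⟨j+1, by omega, by omega⟩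
  have totG : ∀ n, 4 ≤ n → ∃ j, 3*(j*j)+4*j+4 ≤ n ∧ n ≤ 3*(j*j)+10*j+10 := by
    intro n hn
    induction n, hn using Nat.le_induction with
    | base => exact ⟨0, by omega, by omega⟩
    | succ m hm ihm =>
      obtain ⟨j, a, b⟩ := ihm
      have ej : (j+1)*(j+1) = j*j + 2*j + 1 := by ring
      rcases (by omega : m ≤ 3*(j*j)+10*j+9 ∨ m = 3*(j*j)+10*j+10) with c | c
      · exact ⟨j, by omega, by omega⟩
      · exact ⟨j+1, by omega, by omega⟩
  have hFchar : ∀ n i, 1 ≤ n → f n = i →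
      (n = 1 ∧ i = 0) ∨ (n = 2 ∧ i = 1) ∨ (n = 3 ∧ i = 1) ∨ (n = 4 ∧ i = 2) ∨
      (n = 5 ∧ i = 2) ∨ (n = 6 ∧ i = 3) ∨
      ∃ j, (3*(j*j)+7*j+7 ≤ n ∧ n ≤ 3*(j*j)+13*j+13 ∧ i = 3*j+4) ∨
           ((n = 3*(j*j)+13*j+14 ∨ n = 3*(j*j)+13*j+15) ∧ i = 3*j+5) ∨
           (n = 3*(j*j)+13*j+16 ∧ i = 3*j+6) := by
    intro n i hn hv
    rcases (by omega : n ≤ 6 ∨ 7 ≤ n) with h | h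
    · interval_cases n
      · rw [hf1] at hv; exact Or.inl ⟨rfl, hv.symm⟩
      · rw [hf2] at hv; exact Or.inr (Or.inl ⟨rfl, hv.symm⟩)
      · rw [hf3] at hv; exact Or.inr (Or.inr (Or.inl ⟨rfl, hv.symm⟩))
      · rw [hf4] at hv; exact Or.inr (Or.inr (Or.inr (Or.inl ⟨rfl, hv.symm⟩)))
      · rw [hf5] at hv; exact Or.inr (Or.inr (Or.inr (Or.inr (Or.inl ⟨rfl, hv.symm⟩))))
      · rw [hf6] at hv
        exact Or.inr (Or.inr (Or.inr (Or.inr (Or.inr (Or.inl ⟨rfl, hv.symm⟩)))))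
    · obtain ⟨j, a, b⟩ := totF n h
      refine Or.inr (Or.inr (Or.inr (Or.inr (Or.inr (Or.inr ⟨j, ?_⟩)))))
      rcases (by omega : n ≤ 3*(j*j)+13*j+13 ∨
          (n = 3*(j*j)+13*j+14 ∨ n = 3*(j*j)+13*j+15) ∨ n = 3*(j*j)+13*j+16) with c | c | c
      · exact Or.inl ⟨a, c, by rw [← hv]; exact (K n j).1 ⟨a, c⟩⟩
      · exact Or.inr (Or.inl ⟨c, by rw [← hv]; exact (K n j).2.1 c⟩)
      · exact Or.inr (Or.inr ⟨c, by rw [← hv]; exact (K n j).2.2.1 c⟩)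
  have hGchar : ∀ n i, 1 ≤ n → g n = i →
      (n = 1 ∧ i = 1) ∨ (n = 2 ∧ i = 1) ∨ (n = 3 ∧ i = 2) ∨
      ∃ j, (3*(j*j)+4*j+4 ≤ n ∧ n ≤ 3*(j*j)+10*j+7 ∧ i = 3*j+3) ∨
           ((n = 3*(j*j)+10*j+8 ∨ n = 3*(j*j)+10*j+9) ∧ i = 3*j+4) ∨
           (n = 3*(j*j)+10*j+10 ∧ i = 3*j+5) := by
    intro n i hn hv
    rcases (by omega : n ≤ 3 ∨ 4 ≤ n) with h | h
    · interval_cases n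
      · rw [hg1] at hv; exact Or.inl ⟨rfl, hv.symm⟩
      · rw [hg2] at hv; exact Or.inr (Or.inl ⟨rfl, hv.symm⟩)
      · rw [hg3] at hv; exact Or.inr (Or.inr (Or.inl ⟨rfl, hv.symm⟩))
    · obtain ⟨j, a, b⟩ := totG n h
      refine Or.inr (Or.inr (Or.inr ⟨j, ?_⟩))
      rcases (by omega : n ≤ 3*(j*j)+10*j+7 ∨
          (n = 3*(j*j)+10*j+8 ∨ n = 3*(j*j)+10*j+9) ∨ n = 3*(j*j)+10*j+10) with c | c | c
      · exact Or.inl ⟨a, c, by rw [← hv]; exact (K n j).2.2.2.1 ⟨a, c⟩⟩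
      · exact Or.inr (Or.inl ⟨c, by rw [← hv]; exact (K n j).2.2.2.2.1 c⟩)
      · exact Or.inr (Or.inr ⟨c, by rw [← hv]; exact (K n j).2.2.2.2.2 c⟩)
  refine ⟨?_, ?_, ?_, ?_, ?_, ?_, ?_⟩
  · -- part 1: well-definedness
    intro n hn
    constructor
    · rcases (by omega : n = 4 ∨ 5 ≤ n) with rfl | h5
      · norm_num [hg3]
      · obtain ⟨j, a, b⟩ := totG (n-1) (by omega)
        rcases (by omega : n-1 ≤ 3*(j*j)+10*j+7 ∨
            (n-1 = 3*(j*j)+10*j+8 ∨ n-1 = 3*(j*j)+10*j+9) ∨ n-1 = 3*(j*j)+10*j+10) with c | c | c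
        · have := (K (n-1) j).2.2.2.1 ⟨a, c⟩; omega
        · have := (K (n-1) j).2.2.2.2.1 c; omega
        · have := (K (n-1) j).2.2.2.2.2 c; omega
    · rcases (by omega : n ≤ 6 ∨ 7 ≤ n) with h6 | h7
      · interval_cases n
        · rw [hf4]; norm_num
        · rw [hf5]; norm_num
        · rw [hf6]; norm_num
      · obtain ⟨j, a, b⟩ := totF n h7
        rcases (by omega : n ≤ 3*(j*j)+13*j+13 ∨
            (n = 3*(j*j)+13*j+14 ∨ n = 3*(j*j)+13*j+15) ∨ n = 3*(j*j)+13*j+16) with c | c | c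
        · have := (K n j).1 ⟨a, c⟩; omega
        · have := (K n j).2.1 c; omega
        · have := (K n j).2.2.1 c; omega
  · -- part 2: i % 3 = 0
    intro i h3 hm
    constructor
    · -- f count = 1
      rcases (by omega : i = 3 ∨ 6 ≤ i) with rfl | h6
      · have hs : {n : ℕ | 1 ≤ n ∧ f n = 3} = {6} := by
          ext n
          simp only [Set.mem_setOf_eq, Set.mem_singleton_iff]
          constructor
          · rintro ⟨hn, hv⟩
            rcases hFchar n 3 hn hv with h|h|h|h|h|h|⟨j', h|h|h⟩ <;> omega
          · rintro rfl; exact ⟨by norm_num, hf6⟩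
        rw [hs, Set.ncard_singleton]
      · obtain ⟨j, rfl⟩ : ∃ j, i = 3*j+6 := ⟨i/3 - 2, by omega⟩
        have hs : {n : ℕ | 1 ≤ n ∧ f n = 3*j+6} = {3*(j*j)+13*j+16} := by
          ext n
          simp only [Set.mem_setOf_eq, Set.mem_singleton_iff]
          constructor
          · rintro ⟨hn, hv⟩
            rcases hFchar n (3*j+6) hn hv with h|h|h|h|h|h|⟨j', h|h|⟨h1, h2⟩⟩
            · omega
            · omega
            · omega
            · omega
            · omega
            · omega
            · omega
            · omega
            · have e : j' = j := by omega
              subst e; omega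
          · rintro rfl
            exact ⟨by omega, (K _ j).2.2.1 rfl⟩
        rw [hs, Set.ncard_singleton]
    · -- g count = 2i-2
      obtain ⟨j, rfl⟩ : ∃ j, i = 3*j+3 := ⟨i/3 - 1, by omega⟩
      have hs : {n : ℕ | 1 ≤ n ∧ g n = 3*j+3} =
          Set.Icc (3*(j*j)+4*j+4) (3*(j*j)+10*j+7) := by
        ext n
        simp only [Set.mem_setOf_eq, Set.mem_Icc]
        constructor
        · rintro ⟨hn, hv⟩
          rcases hGchar n (3*j+3) hn hv with h|h|h|⟨j', ⟨h1, h2, h3'⟩|h|h⟩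
          · omega
          · omega
          · omega
          · have e : j' = j := by omega
            subst e; omega
          · omega
          · omega
        · rintro ⟨h1, h2⟩
          exact ⟨by omega, (K n j).2.2.2.1 ⟨h1, h2⟩⟩
      rw [hs, ← Finset.coe_Icc, Set.ncard_coe_finset, Nat.card_Icc]
      omega
  · -- part 3: i % 3 = 1
    intro i h4 hm
    obtain ⟨j, rfl⟩ : ∃ j, i = 3*j+4 := ⟨i/3 - 1, by omega⟩
    constructor
    · have hs : {n : ℕ | 1 ≤ n ∧ f n = 3*j+4} =
          Set.Icc (3*(j*j)+7*j+7) (3*(j*j)+13*j+13) := by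
        ext n
        simp only [Set.mem_setOf_eq, Set.mem_Icc]
        constructor
        · rintro ⟨hn, hv⟩
          rcases hFchar n (3*j+4) hn hv with h|h|h|h|h|h|⟨j', ⟨h1, h2, h3'⟩|h|h⟩
          · omega
          · omega
          · omega
          · omega
          · omega
          · omega
          · have e : j' = j := by omega
            subst e; omega
          · omega
          · omega
        · rintro ⟨h1, h2⟩
          exact ⟨by omega, (K n j).1 ⟨h1, h2⟩⟩
      rw [hs, ← Finset.coe_Icc, Set.ncard_coe_finset, Nat.card_Icc]
      omega
    · have hs : {n : ℕ | 1 ≤ n ∧ g n = 3*j+4} =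
          {3*(j*j)+10*j+8, 3*(j*j)+10*j+9} := by
        ext n
        simp only [Set.mem_setOf_eq, Set.mem_insert_iff, Set.mem_singleton_iff]
        constructor
        · rintro ⟨hn, hv⟩
          rcases hGchar n (3*j+4) hn hv with h|h|h|⟨j', h|⟨h1, h2⟩|h⟩
          · omega
          · omega
          · omega
          · omega
          · have e : j' = j := by omega
            subst e; omega
          · omega
        · rintro (rfl | rfl)
          · exact ⟨by omega, (K _ j).2.2.2.2.1 (Or.inl rfl)⟩
          · exact ⟨by omega, (K _ j).2.2.2.2.1 (Or.inr rfl)⟩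
      rw [hs, Set.ncard_pair (by omega)]
  · -- part 4: i % 3 = 2
    intro i h1 hm
    rcases (by omega : i = 2 ∨ 5 ≤ i) with rfl | h5
    · constructor
      · have hs : {n : ℕ | 1 ≤ n ∧ f n = 2} = {4, 5} := by
          ext n
          simp only [Set.mem_setOf_eq, Set.mem_insert_iff, Set.mem_singleton_iff]
          constructor
          · rintro ⟨hn, hv⟩
            rcases hFchar n 2 hn hv with h|h|h|h|h|h|⟨j', h|h|h⟩ <;> omega
          · rintro (rfl | rfl)
            · exact ⟨by norm_num, hf4⟩
            · exact ⟨by norm_num, hf5⟩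
        rw [hs, Set.ncard_pair (by omega)]
      · have hs : {n : ℕ | 1 ≤ n ∧ g n = 2} = {3} := by
          ext n
          simp only [Set.mem_setOf_eq, Set.mem_singleton_iff]
          constructor
          · rintro ⟨hn, hv⟩
            rcases hGchar n 2 hn hv with h|h|h|⟨j', h|h|h⟩ <;> omega
          · rintro rfl; exact ⟨by norm_num, hg3⟩
        rw [hs, Set.ncard_singleton]
    · obtain ⟨j, rfl⟩ : ∃ j, i = 3*j+5 := ⟨i/3 - 1, by omega⟩
      constructor
      · have hs : {n : ℕ | 1 ≤ n ∧ f n = 3*j+5} =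
            {3*(j*j)+13*j+14, 3*(j*j)+13*j+15} := by
          ext n
          simp only [Set.mem_setOf_eq, Set.mem_insert_iff, Set.mem_singleton_iff]
          constructor
          · rintro ⟨hn, hv⟩
            rcases hFchar n (3*j+5) hn hv with h|h|h|h|h|h|⟨j', h|⟨h1, h2⟩|h⟩
            · omega
            · omega
            · omega
            · omega
            · omega
            · omega
            · omega
            · have e : j' = j := by omega
              subst e; omega
            · omega
          · rintro (rfl | rfl)
            · exact ⟨by omega, (K _ j).2.1 (Or.inl rfl)⟩
            · exact ⟨by omega, (K _ j).2.1 (Or.inr rfl)⟩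
        rw [hs, Set.ncard_pair (by omega)]
      · have hs : {n : ℕ | 1 ≤ n ∧ g n = 3*j+5} = {3*(j*j)+10*j+10} := by
          ext n
          simp only [Set.mem_setOf_eq, Set.mem_singleton_iff]
          constructor
          · rintro ⟨hn, hv⟩
            rcases hGchar n (3*j+5) hn hv with h|h|h|⟨j', h|h|⟨h1, h2⟩⟩
            · omega
            · omega
            · omega
            · omega
            · omega
            · have e : j' = j := by omega
              subst e; omega
          · rintro rfl
            exact ⟨by omega, (K _ j).2.2.2.2.2 rfl⟩
        rw [hs, Set.ncard_singleton]
  · -- part 5: f = 0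
    ext n
    simp only [Set.mem_setOf_eq, Set.mem_singleton_iff]
    constructor
    · rintro ⟨hn, hv⟩
      rcases hFchar n 0 hn hv with h|h|h|h|h|h|⟨j', h|h|h⟩ <;> omega
    · rintro rfl; exact ⟨le_refl 1, hf1⟩
  · -- part 6: f = 1
    have hs : {n : ℕ | 1 ≤ n ∧ f n = 1} = {2, 3} := by
      ext n
      simp only [Set.mem_setOf_eq, Set.mem_insert_iff, Set.mem_singleton_iff]
      constructor
      · rintro ⟨hn, hv⟩
        rcases hFchar n 1 hn hv with h|h|h|h|h|h|⟨j', h|h|h⟩ <;> omega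
      · rintro (rfl | rfl)
        · exact ⟨by norm_num, hf2⟩
        · exact ⟨by norm_num, hf3⟩
    rw [hs, Set.ncard_pair (by omega)]
  · -- part 7: g = 1
    have hs : {n : ℕ | 1 ≤ n ∧ g n = 1} = {1, 2} := by
      ext n
      simp only [Set.mem_setOf_eq, Set.mem_insert_iff, Set.mem_singleton_iff]
      constructor
      · rintro ⟨hn, hv⟩
        rcases hGchar n 1 hn hv with h|h|h|⟨j', h|h|h⟩ <;> omega
      · rintro (rfl | rfl)
        · exact ⟨le_refl 1, hg1⟩
        · exact ⟨by norm_num, hg2⟩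
    rw [hs, Set.ncard_pair (by omega)]

/-- Golomb-like system with f(1)=0, f(2)=f(3)=1, g(1)=g(2)=1, g(3)=2 and, for n ≥ 4,
f(n)=g(n-g(n-1))+1, g(n)=f(n-f(n))+2: statistics of how often each value appears. -/
theorem stmt_4 (f g : ℕ → ℕ)
    (hf1 : f 1 = 0) (hf2 : f 2 = 1) (hf3 : f 3 = 1)
    (hg1 : g 1 = 1) (hg2 : g 2 = 1) (hg3 : g 3 = 2)
    (hf : ∀ n, 4 ≤ n → f n = g (n - g (n - 1)) + 1)
    (hg : ∀ n, 4 ≤ n → g n = f (n - f n) + 2) :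
    (∀ n, 4 ≤ n → 1 ≤ n - g (n - 1) ∧ 1 ≤ n - f n) ∧
    (∀ i : ℕ, 3 ≤ i → i % 3 = 0 →
      {n : ℕ | 1 ≤ n ∧ f n = i}.ncard = 1 ∧
      {n : ℕ | 1 ≤ n ∧ g n = i}.ncard = 2 * i - 2) ∧
    (∀ i : ℕ, 4 ≤ i → i % 3 = 1 →
      {n : ℕ | 1 ≤ n ∧ f n = i}.ncard = 2 * i - 1 ∧
      {n : ℕ | 1 ≤ n ∧ g n = i}.ncard = 2) ∧
    (∀ i : ℕ, 1 ≤ i → i % 3 = 2 →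
      {n : ℕ | 1 ≤ n ∧ f n = i}.ncard = 2 ∧
      {n : ℕ | 1 ≤ n ∧ g n = i}.ncard = 1) ∧
    ({n : ℕ | 1 ≤ n ∧ f n = 0} = {1}) ∧
    ({n : ℕ | 1 ≤ n ∧ f n = 1}.ncard = 2) ∧ ({n : ℕ | 1 ≤ n ∧ g n = 1}.ncard = 2) := by
  exact rest f g hf1 hf2 hf3 hg1 hg2 hg3 hf hg
end

section
/- Let V : ℕ → ℤ satisfy the Hofstadter V-recurrence V(n) = V(n - V(n-1)) + V(n - V(n-4)) for n ≥ 5, with initial conditions V(1) = 4, V(2) = 2, V(3) = 5, V(4) = 3, V(5) = 1. Let f, g be the slow sequences of the Golomb-like system f(n) = g(n - g(n-1)), g(n) = f(n - f(n)) + 1 with f(1) = 0. Then for all k ≥ 1: V(5k) = 5 f(k) + 1, V(5k+1) = 5 g(k) - 1, V(5k+2) = 5k + 2, V(5k+3) = 5, and V(5k+4) = 5k + 3. -/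
/-- Proposition v1: the V-recurrence with initial conditions ⟨4,2,5,3,1⟩ interleaves
the slow Golomb-like sequences f, g (f(1)=0, g(n)=f(n-f(n))+1, f(n)=g(n-g(n-1))). -/
theorem stmt_5 (V : ℕ → ℤ) (f g : ℕ → ℕ)
    (hV1 : V 1 = 4) (hV2 : V 2 = 2) (hV3 : V 3 = 5) (hV4 : V 4 = 3) (hV5 : V 5 = 1)
    (hVrec : ∀ n : ℕ, 5 ≤ n →
      V n = V ((n : ℤ) - V (n - 1)).toNat + V ((n : ℤ) - V (n - 4)).toNat)
    (hf1 : f 1 = 0)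
    (hg : ∀ n, 1 ≤ n → g n = f (n - f n) + 1)
    (hf : ∀ n, 2 ≤ n → f n = g (n - g (n - 1))) :
    (∀ n : ℕ, 5 ≤ n →
      (1 ≤ (n : ℤ) - V (n - 1) ∧ (n : ℤ) - V (n - 1) ≤ (n : ℤ) - 1) ∧
      (1 ≤ (n : ℤ) - V (n - 4) ∧ (n : ℤ) - V (n - 4) ≤ (n : ℤ) - 1)) ∧
    (∀ k : ℕ, 1 ≤ k →
      V (5 * k) = 5 * (f k : ℤ) + 1 ∧
      V (5 * k + 1) = 5 * (g k : ℤ) - 1 ∧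
      V (5 * k + 2) = 5 * (k : ℤ) + 2 ∧
      V (5 * k + 3) = 5 ∧
      V (5 * k + 4) = 5 * (k : ℤ) + 3) := by
  -- g 1 = 1
  have hg1 : g 1 = 1 := by
    have h := hg 1 le_rfl
    rw [hf1] at h
    simpa [hf1] using h
  -- bounds on f and g
  have hb : ∀ k, 2 ≤ k → 1 ≤ f k ∧ f k ≤ k - 1 ∧ 1 ≤ g k ∧ g k ≤ k - 1 := by
    intro k
    induction k using Nat.strong_induction_on with
    | _ k ih =>
      intro hk
      have hgk1 : 1 ≤ g (k - 1) ∧ g (k - 1) ≤ k - 1 := by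
        rcases Nat.lt_or_ge k 3 with h3 | h3
        · have : k = 2 := by omega
          subst this
          simp [hg1]
        · have := ih (k - 1) (by omega) (by omega)
          omega
      -- f k
      have hfk : 1 ≤ f k ∧ f k ≤ k - 1 := by
        have hfe := hf k hk
        set m := k - g (k - 1) with hm
        have hm1 : 1 ≤ m := by omega
        have hmk : m ≤ k - 1 := by omega
        rcases Nat.lt_or_ge m 2 with hm2 | hm2
        · have : m = 1 := by omega
          rw [hfe, this, hg1]
          omega
        · have := ih m (by omega) hm2
          rw [hfe]
          omega
      -- g k
      have hge := hg k (by omega)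
      set m := k - f k with hm
      have hm1 : 1 ≤ m := by omega
      have hmk : m ≤ k - 1 := by omega
      rcases Nat.lt_or_ge m 2 with hm2 | hm2
      · have : m = 1 := by omega
        rw [this, hf1] at hge
        omega
      · have := ih m (by omega) hm2
        omega
  have hbf : ∀ k, 1 ≤ k → f k ≤ k - 1 := by
    intro k hk
    rcases Nat.lt_or_ge k 2 with h | h
    · have : k = 1 := by omega
      simp [this, hf1]
    · exact (hb k h).2.1
  have hbg : ∀ k, 1 ≤ k → 1 ≤ g k ∧ g k ≤ k := by
    intro k hk
    rcases Nat.lt_or_ge k 2 with h | h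
    · have : k = 1 := by omega
      simp [this, hg1]
    · have := hb k h
      omega
  -- the main interleaving formulas
  have main : ∀ k : ℕ, 1 ≤ k →
      V (5 * k) = 5 * (f k : ℤ) + 1 ∧
      V (5 * k + 1) = 5 * (g k : ℤ) - 1 ∧
      V (5 * k + 2) = 5 * (k : ℤ) + 2 ∧
      V (5 * k + 3) = 5 ∧
      V (5 * k + 4) = 5 * (k : ℤ) + 3 := by
    intro k
    induction k using Nat.strong_induction_on with
    | _ k ih =>
      intro hk
      rcases Nat.lt_or_ge k 2 with h2 | h2
      · -- base case k = 1
        have hk1 : k = 1 := by omega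
        subst hk1
        have e6 := hVrec 6 (by norm_num)
        norm_num [hV5, hV2] at e6
        simp only [Int.reduceToNat] at e6
        rw [hV5, hV4] at e6
        norm_num at e6
        have e7 := hVrec 7 (by norm_num)
        norm_num [e6, hV3] at e7
        simp only [Int.reduceToNat] at e7
        rw [hV3, hV2] at e7
        norm_num at e7
        have e8 := hVrec 8 (by norm_num)
        norm_num [e7, hV4] at e8
        simp only [Int.reduceToNat] at e8
        rw [hV1, hV5] at e8
        norm_num at e8
        have e9 := hVrec 9 (by norm_num)
        norm_num [e8, hV5] at e9
        simp only [Int.reduceToNat] at e9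
        rw [hV4, e8] at e9
        norm_num at e9
        refine ⟨?_, ?_, ?_, ?_, ?_⟩ <;>
          simp [hf1, hg1, hV5, e6, e7, e8, e9]
      · -- inductive step, k ≥ 2
        obtain ⟨A, B, C, D, E⟩ := ih (k - 1) (by omega) (by omega)
        have hfk := hb k h2
        have hgk1 : 1 ≤ g (k - 1) ∧ g (k - 1) ≤ k - 1 := by
          rcases Nat.lt_or_ge k 3 with h3 | h3
          · have : k = 2 := by omega
            subst this; simp [hg1]
          · have := hb (k - 1) (by omega); omega
        -- V (5k)
        have hVk0 : V (5 * k) = 5 * (f k : ℤ) + 1 := by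
          have e := hVrec (5 * k) (by omega)
          have h1 : 5 * k - 1 = 5 * (k - 1) + 4 := by omega
          have h4 : 5 * k - 4 = 5 * (k - 1) + 1 := by omega
          rw [h1, h4, E, B] at e
          have t1 : (((5 * k : ℕ) : ℤ) - (5 * ((k - 1 : ℕ) : ℤ) + 3)).toNat = 2 := by omega
          have t2 : (((5 * k : ℕ) : ℤ) - (5 * ((g (k - 1) : ℕ) : ℤ) - 1)).toNat
              = 5 * (k - g (k - 1)) + 1 := by omega
          rw [t1, t2, hV2] at e
          obtain ⟨_, B', _, _, _⟩ := ih (k - g (k - 1)) (by omega) (by omega)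
          rw [B'] at e
          have hfe : (f k : ℤ) = (g (k - g (k - 1)) : ℤ) := by rw [hf k h2]
          omega
        -- V (5k+1)
        have hVk1 : V (5 * k + 1) = 5 * (g k : ℤ) - 1 := by
          have e := hVrec (5 * k + 1) (by omega)
          have h1 : 5 * k + 1 - 1 = 5 * k := by omega
          have h4 : 5 * k + 1 - 4 = 5 * (k - 1) + 2 := by omega
          rw [h1, h4, hVk0, C] at e
          have t1 : (((5 * k + 1 : ℕ) : ℤ) - (5 * ((f k : ℕ) : ℤ) + 1)).toNat
              = 5 * (k - f k) := by
            have := hfk.2.1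
            omega
          have t2 : (((5 * k + 1 : ℕ) : ℤ) - (5 * ((k - 1 : ℕ) : ℤ) + 2)).toNat = 4 := by omega
          rw [t1, t2, hV4] at e
          obtain ⟨A', _, _, _, _⟩ := ih (k - f k) (by omega) (by omega)
          rw [A'] at e
          have hge : (g k : ℤ) = (f (k - f k) : ℤ) + 1 := by rw [hg k (by omega)]; push_cast; ring
          omega
        -- V (5k+2)
        have hVk2 : V (5 * k + 2) = 5 * (k : ℤ) + 2 := by
          have e := hVrec (5 * k + 2) (by omega)
          have h1 : 5 * k + 2 - 1 = 5 * k + 1 := by omega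
          have h4 : 5 * k + 2 - 4 = 5 * (k - 1) + 3 := by omega
          rw [h1, h4, hVk1, D] at e
          have t1 : (((5 * k + 2 : ℕ) : ℤ) - (5 * ((g k : ℕ) : ℤ) - 1)).toNat
              = 5 * (k - g k) + 3 := by
            have := hfk.2.2.2
            omega
          have t2 : (((5 * k + 2 : ℕ) : ℤ) - 5).toNat = 5 * (k - 1) + 2 := by omega
          rw [t1, t2, C] at e
          obtain ⟨_, _, _, D', _⟩ := ih (k - g k) (by omega) (by omega)
          rw [D'] at e
          omega
        -- V (5k+3)
        have hVk3 : V (5 * k + 3) = 5 := by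
          have e := hVrec (5 * k + 3) (by omega)
          have h1 : 5 * k + 3 - 1 = 5 * k + 2 := by omega
          have h4 : 5 * k + 3 - 4 = 5 * (k - 1) + 4 := by omega
          rw [h1, h4, hVk2, E] at e
          have t1 : (((5 * k + 3 : ℕ) : ℤ) - (5 * (k : ℤ) + 2)).toNat = 1 := by omega
          have t2 : (((5 * k + 3 : ℕ) : ℤ) - (5 * ((k - 1 : ℕ) : ℤ) + 3)).toNat = 5 := by omega
          rw [t1, t2, hV1, hV5] at e
          omega
        -- V (5k+4)
        have hVk4 : V (5 * k + 4) = 5 * (k : ℤ) + 3 := by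
          have e := hVrec (5 * k + 4) (by omega)
          have h1 : 5 * k + 4 - 1 = 5 * k + 3 := by omega
          have h4 : 5 * k + 4 - 4 = 5 * k := by omega
          rw [h1, h4, hVk3, hVk0] at e
          have t1 : (((5 * k + 4 : ℕ) : ℤ) - 5).toNat = 5 * (k - 1) + 4 := by omega
          have t2 : (((5 * k + 4 : ℕ) : ℤ) - (5 * ((f k : ℕ) : ℤ) + 1)).toNat
              = 5 * (k - f k) + 3 := by
            have := hfk.2.1
            omega
          rw [t1, t2, E] at e
          obtain ⟨_, _, _, D', _⟩ := ih (k - f k) (by omega) (by omega)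
          rw [D'] at e
          omega
        exact ⟨hVk0, hVk1, hVk2, hVk3, hVk4⟩
  refine ⟨?_, main⟩
  -- well-definedness bounds
  have hVb : ∀ m : ℕ, 5 ≤ m → 1 ≤ V m ∧ V m ≤ (m : ℤ) := by
    intro m hm
    obtain ⟨k, r, hr, rfl⟩ : ∃ k r, r < 5 ∧ m = 5 * k + r :=
      ⟨m / 5, m % 5, Nat.mod_lt _ (by norm_num), (Nat.div_add_mod m 5).symm⟩
    have hk1 : 1 ≤ k := by omega
    obtain ⟨A, B, C, D, E⟩ := main k hk1
    have hfb := hbf k hk1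
    have hgb := hbg k hk1
    interval_cases r
    · simp only [Nat.add_zero] at hm ⊢
      rw [A]; constructor <;> omega
    · rw [B]; constructor <;> omega
    · rw [C]; constructor <;> omega
    · rw [D]; constructor <;> omega
    · rw [E]; constructor <;> omega
  intro n hn
  have hb1 : 1 ≤ V (n - 1) ∧ V (n - 1) ≤ (n : ℤ) - 1 := by
    rcases Nat.lt_or_ge n 6 with h | h
    · have : n = 5 := by omega
      subst this
      norm_num [hV4]
    · have := hVb (n - 1) (by omega)
      have hc : ((n - 1 : ℕ) : ℤ) = (n : ℤ) - 1 := by omega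
      omega
  have hb4 : 1 ≤ V (n - 4) ∧ V (n - 4) ≤ (n : ℤ) - 1 := by
    rcases Nat.lt_or_ge n 9 with h | h
    · interval_cases n <;> simp_all <;> omega
    · have := hVb (n - 4) (by omega)
      have hc : ((n - 4 : ℕ) : ℤ) = (n : ℤ) - 4 := by omega
      omega
  exact ⟨⟨by omega, by omega⟩, ⟨by omega, by omega⟩⟩
end

section
/- Let V : ℕ → ℤ satisfy the Hofstadter V-recurrence V(n) = V(n - V(n-1)) + V(n - V(n-4)) for n ≥ 7, with initial conditions V(1) = 3, V(2) = 1, V(3) = 4, V(4) = 2, V(5) = 5, V(6) = 3. Let f, g be the sequences of the Golomb-like system f(n) = g(n - g(n-1)), g(n) = f(n - f(n)) + 2 with f(1) = 0, f(2) = f(3) = 1, g(1) = g(2) = 1, g(3) = 2. Then for all k ≥ 2: V(5k) = 10, V(5k+1) = 5k - 2, V(5k+2) = 5 f(k+1) + 1, V(5k+3) = 5 g(k+1) - 1, and V(5k+4) = 5k - 3. -/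
theorem fg_bounds (f g : ℕ → ℕ)
    (hf1 : f 1 = 0) (hf2 : f 2 = 1) (hf3 : f 3 = 1)
    (hg1 : g 1 = 1) (hg2 : g 2 = 1) (hg3 : g 3 = 2)
    (hf : ∀ n, 4 ≤ n → f n = g (n - g (n - 1)))
    (hg : ∀ n, 4 ≤ n → g n = f (n - f n) + 2) :
    ∀ n, (2 ≤ n → 1 ≤ f n) ∧ (3 ≤ n → f n + 2 ≤ n) ∧ (5 ≤ n → f n + 3 ≤ n)
      ∧ (6 ≤ n → 2 ≤ f n)
      ∧ (1 ≤ n → 1 ≤ g n) ∧ (3 ≤ n → 2 ≤ g n) ∧ (2 ≤ n → g n + 1 ≤ n)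
      ∧ (5 ≤ n → g n + 2 ≤ n) := by
  have hf4 : f 4 = 1 := by rw [hf 4 (by norm_num)]; norm_num [hg3, hg2]
  have hg4 : g 4 = 3 := by rw [hg 4 (by norm_num)]; norm_num [hf4, hf3]
  have hf5 : f 5 = 1 := by rw [hf 5 (by norm_num)]; norm_num [hg4, hg2]
  have hg5 : g 5 = 3 := by rw [hg 5 (by norm_num)]; norm_num [hf5, hf4]
  intro n
  induction n using Nat.strong_induction_on with
  | _ n IH =>
  rcases le_or_gt n 5 with hn5 | hn5
  · interval_cases n <;> refine ⟨?_,?_,?_,?_,?_,?_,?_,?_⟩ <;> intro h <;> omega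
  · -- n ≥ 6
    have hgn1a : 1 ≤ g (n - 1) := ((IH (n-1) (by omega)).2.2.2.2.1) (by omega)
    have hgn1b : g (n - 1) + 2 ≤ n - 1 := ((IH (n-1) (by omega)).2.2.2.2.2.2.2) (by omega)
    set m := n - g (n - 1) with hm
    have hm3 : 3 ≤ m := by omega
    have hmlt : m < n := by omega
    have hfn : f n = g m := hf n (by omega)
    -- f bounds
    have hC1 : 1 ≤ f n := by
      have := ((IH m hmlt).2.2.2.2.2.1) hm3; omega
    have hC8 : 2 ≤ f n := by
      have := ((IH m hmlt).2.2.2.2.2.1) hm3; omega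
    have hC2 : f n + 2 ≤ n := by
      have := ((IH m hmlt).2.2.2.2.2.2.1) (by omega); omega
    have hC3 : f n + 3 ≤ n := by
      rcases le_or_gt 5 m with hm5 | hm5
      · have := ((IH m hmlt).2.2.2.2.2.2.2) hm5; omega
      · -- m ∈ {3,4}
        have : g m ≤ 3 := by interval_cases m <;> omega
        omega
    -- g bounds
    have hgn : g n = f (n - f n) + 2 := hg n (by omega)
    set p := n - f n with hp
    have hp2 : 2 ≤ p := by omega
    have hplt : p < n := by omega
    have hC7 : g n + 2 ≤ n := by
      have hfp : f p ≤ n - 4 := by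
        rcases le_or_gt 3 p with hp3 | hp3
        · have := ((IH p hplt).2.1) hp3; omega
        · have : p = 2 := by omega
          rw [this, hf2]; omega
      omega
    refine ⟨fun _ => hC1, fun _ => hC2, fun _ => hC3, fun _ => hC8,
      fun _ => by omega, fun _ => by omega, fun _ => by omega, fun _ => hC7⟩


/-- Proposition v2: the V-recurrence with initial conditions ⟨3,1,4,2,5,3⟩ interleaves
the Golomb-like sequences f, g with g(n)=f(n-f(n))+2. -/
theorem stmt_6 (V : ℕ → ℤ) (f g : ℕ → ℕ)
    (hV1 : V 1 = 3) (hV2 : V 2 = 1) (hV3 : V 3 = 4) (hV4 : V 4 = 2)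
    (hV5 : V 5 = 5) (hV6 : V 6 = 3)
    (hVrec : ∀ n : ℕ, 7 ≤ n →
      V n = V ((n : ℤ) - V (n - 1)).toNat + V ((n : ℤ) - V (n - 4)).toNat)
    (hf1 : f 1 = 0) (hf2 : f 2 = 1) (hf3 : f 3 = 1)
    (hg1 : g 1 = 1) (hg2 : g 2 = 1) (hg3 : g 3 = 2)
    (hf : ∀ n, 4 ≤ n → f n = g (n - g (n - 1)))
    (hg : ∀ n, 4 ≤ n → g n = f (n - f n) + 2) :
    (∀ n : ℕ, 7 ≤ n →
      (1 ≤ (n : ℤ) - V (n - 1) ∧ (n : ℤ) - V (n - 1) ≤ (n : ℤ) - 1) ∧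
      (1 ≤ (n : ℤ) - V (n - 4) ∧ (n : ℤ) - V (n - 4) ≤ (n : ℤ) - 1)) ∧
    (∀ k : ℕ, 2 ≤ k →
      V (5 * k) = 10 ∧
      V (5 * k + 1) = 5 * (k : ℤ) - 2 ∧
      V (5 * k + 2) = 5 * (f (k + 1) : ℤ) + 1 ∧
      V (5 * k + 3) = 5 * (g (k + 1) : ℤ) - 1 ∧
      V (5 * k + 4) = 5 * (k : ℤ) - 3) := by
  have B := fg_bounds f g hf1 hf2 hf3 hg1 hg2 hg3 hf hg
  have Bf1 : ∀ n, 2 ≤ n → 1 ≤ f n := fun n h => (B n).1 h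
  have Bf2 : ∀ n, 3 ≤ n → f n + 2 ≤ n := fun n h => (B n).2.1 h
  have Bf3 : ∀ n, 5 ≤ n → f n + 3 ≤ n := fun n h => (B n).2.2.1 h
  have Bg1 : ∀ n, 1 ≤ n → 1 ≤ g n := fun n h => (B n).2.2.2.2.1 h
  have Bg2 : ∀ n, 3 ≤ n → 2 ≤ g n := fun n h => (B n).2.2.2.2.2.1 h
  have Bg3 : ∀ n, 2 ≤ n → g n + 1 ≤ n := fun n h => (B n).2.2.2.2.2.2.1 h
  have Bg4 : ∀ n, 5 ≤ n → g n + 2 ≤ n := fun n h => (B n).2.2.2.2.2.2.2 h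
  have hf4 : f 4 = 1 := by rw [hf 4 (by norm_num)]; norm_num [hg3, hg2]
  have hg4 : g 4 = 3 := by rw [hg 4 (by norm_num)]; norm_num [hf4, hf3]
  have hf5 : f 5 = 1 := by rw [hf 5 (by norm_num)]; norm_num [hg4, hg2]
  have hg5 : g 5 = 3 := by rw [hg 5 (by norm_num)]; norm_num [hf5, hf4]
  have h7 : V 7 = 6 := by
    have h := hVrec 7 (by norm_num)
    norm_num [hV6, hV3] at h
    rw [show Int.toNat 4 = 4 from rfl, show Int.toNat 3 = 3 from rfl] at h
    omega
  have h8 : V 8 = 4 := by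
    have h := hVrec 8 (by norm_num)
    norm_num [h7, hV4] at h
    rw [show Int.toNat 2 = 2 from rfl, show Int.toNat 6 = 6 from rfl] at h
    omega
  have h9 : V 9 = 7 := by
    have h := hVrec 9 (by norm_num)
    norm_num [h8, hV5] at h
    rw [show Int.toNat 5 = 5 from rfl, show Int.toNat 4 = 4 from rfl] at h
    omega
  have h10 : V 10 = 10 := by
    have h := hVrec 10 (by norm_num)
    norm_num [h9, hV6] at h
    rw [show Int.toNat 3 = 3 from rfl, show Int.toNat 7 = 7 from rfl] at h
    omega
  have h11 : V 11 = 8 := by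
    have h := hVrec 11 (by norm_num)
    norm_num [h10, h7] at h
    rw [show Int.toNat 5 = 5 from rfl] at h
    omega
  have h12 : V 12 = 6 := by
    have h := hVrec 12 (by norm_num)
    norm_num [h11, h8] at h
    rw [show Int.toNat 4 = 4 from rfl, show Int.toNat 8 = 8 from rfl] at h
    omega
  have h13 : V 13 = 9 := by
    have h := hVrec 13 (by norm_num)
    norm_num [h12, h9] at h
    rw [show Int.toNat 7 = 7 from rfl, show Int.toNat 6 = 6 from rfl] at h
    omega
  have h14 : V 14 = 7 := by
    have h := hVrec 14 (by norm_num)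
    norm_num [h13, h10] at h
    rw [show Int.toNat 5 = 5 from rfl, show Int.toNat 4 = 4 from rfl] at h
    omega
  have h15 : V 15 = 10 := by
    have h := hVrec 15 (by norm_num)
    norm_num [h14, h11] at h
    rw [show Int.toNat 8 = 8 from rfl, show Int.toNat 7 = 7 from rfl] at h
    omega
  have h16 : V 16 = 13 := by
    have h := hVrec 16 (by norm_num)
    norm_num [h15, h12] at h
    rw [show Int.toNat 6 = 6 from rfl, show Int.toNat 10 = 10 from rfl] at h
    omega
  have h17 : V 17 = 6 := by
    have h := hVrec 17 (by norm_num)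
    norm_num [h16, h13] at h
    rw [show Int.toNat 4 = 4 from rfl, show Int.toNat 8 = 8 from rfl] at h
    omega
  have h18 : V 18 = 14 := by
    have h := hVrec 18 (by norm_num)
    norm_num [h17, h14] at h
    rw [show Int.toNat 12 = 12 from rfl, show Int.toNat 11 = 11 from rfl] at h
    omega
  have h19 : V 19 = 12 := by
    have h := hVrec 19 (by norm_num)
    norm_num [h18, h15] at h
    rw [show Int.toNat 5 = 5 from rfl, show Int.toNat 9 = 9 from rfl] at h
    omega
  have h20 : V 20 = 10 := by
    have h := hVrec 20 (by norm_num)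
    norm_num [h19, h16] at h
    rw [show Int.toNat 8 = 8 from rfl, show Int.toNat 7 = 7 from rfl] at h
    omega
  have h21 : V 21 = 18 := by
    have h := hVrec 21 (by norm_num)
    norm_num [h20, h17] at h
    rw [show Int.toNat 11 = 11 from rfl, show Int.toNat 15 = 15 from rfl] at h
    omega
  have h22 : V 22 = 6 := by
    have h := hVrec 22 (by norm_num)
    norm_num [h21, h18] at h
    rw [show Int.toNat 4 = 4 from rfl, show Int.toNat 8 = 8 from rfl] at h
    omega
  have h23 : V 23 = 14 := by
    have h := hVrec 23 (by norm_num)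
    norm_num [h22, h19] at h
    rw [show Int.toNat 17 = 17 from rfl, show Int.toNat 11 = 11 from rfl] at h
    omega
  have h24 : V 24 = 17 := by
    have h := hVrec 24 (by norm_num)
    norm_num [h23, h20] at h
    rw [show Int.toNat 10 = 10 from rfl, show Int.toNat 14 = 14 from rfl] at h
    omega
  have main : ∀ k : ℕ, 2 ≤ k →
      V (5 * k) = 10 ∧
      V (5 * k + 1) = 5 * (k : ℤ) - 2 ∧
      V (5 * k + 2) = 5 * (f (k + 1) : ℤ) + 1 ∧
      V (5 * k + 3) = 5 * (g (k + 1) : ℤ) - 1 ∧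
      V (5 * k + 4) = 5 * (k : ℤ) - 3 := by
    intro k
    induction k using Nat.strong_induction_on with
    | _ k IH =>
    intro hk
    rcases le_or_gt k 4 with hk4 | hk4
    · interval_cases k
      · exact ⟨by norm_num [h10], by norm_num [h11], by norm_num [h12, hf3],
          by norm_num [h13, hg3], by norm_num [h14]⟩
      · exact ⟨by norm_num [h15], by norm_num [h16], by norm_num [h17, hf4],
          by norm_num [h18, hg4], by norm_num [h19]⟩
      · exact ⟨by norm_num [h20], by norm_num [h21], by norm_num [h22, hf5],
          by norm_num [h23, hg5], by norm_num [h24]⟩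
    · -- k ≥ 5
      have IH1 := IH (k-1) (by omega) (by omega)
      have IH2 := IH (k-2) (by omega) (by omega)
      have hA : V (5*k-1) = 5*(k:ℤ) - 8 := by
        have e : 5*k-1 = 5*(k-1)+4 := by omega
        rw [e, IH1.2.2.2.2]; omega
      have hB : V (5*k-4) = 5*(k:ℤ) - 7 := by
        have e : 5*k-4 = 5*(k-1)+1 := by omega
        rw [e, IH1.2.1]; omega
      have h0 : V (5*k) = 10 := by
        have h := hVrec (5*k) (by omega)
        rw [hA, hB] at h
        rw [show ((5*k:ℕ):ℤ) - (5*(k:ℤ)-8) = 8 by push_cast; ring,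
            show ((5*k:ℕ):ℤ) - (5*(k:ℤ)-7) = 7 by push_cast; ring] at h
        rw [show Int.toNat 8 = 8 from rfl, show Int.toNat 7 = 7 from rfl, h8, h7] at h
        omega
      have hC : V (5*k-3) = 5*(f k:ℤ) + 1 := by
        have e : 5*k-3 = 5*(k-1)+2 := by omega
        have e2 : (k-1)+1 = k := by omega
        rw [e, IH1.2.2.1, e2]
      have hfka : 1 ≤ f k := Bf1 k (by omega)
      have hfkb : f k + 2 ≤ k := Bf2 k (by omega)
      have IHfk := IH (k - f k) (by omega) (by omega)
      have h1 : V (5*k+1) = 5*(k:ℤ) - 2 := by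
        have h := hVrec (5*k+1) (by omega)
        rw [show 5*k+1-1 = 5*k from rfl, show 5*k+1-4 = 5*k-3 by omega] at h
        rw [h0, hC] at h
        rw [show ((5*k+1:ℕ):ℤ) - 10 = ((5*(k-2)+1:ℕ):ℤ) by omega] at h
        rw [show ((5*k+1:ℕ):ℤ) - (5*(f k:ℤ)+1) = ((5*(k - f k):ℕ):ℤ) by omega] at h
        rw [Int.toNat_natCast, Int.toNat_natCast] at h
        rw [IH2.2.1, IHfk.1] at h
        omega
      have hD : V (5*k-2) = 5*(g k:ℤ) - 1 := by
        have e : 5*k-2 = 5*(k-1)+3 := by omega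
        have e2 : (k-1)+1 = k := by omega
        rw [e, IH1.2.2.2.1, e2]
      have hgka : 1 ≤ g k := Bg1 k (by omega)
      have hgkb : g k + 2 ≤ k := Bg4 k (by omega)
      have IHgk := IH (k - g k) (by omega) (by omega)
      have hfk1 : f (k+1) = g (k - g k + 1) := by
        rw [hf (k+1) (by omega)]
        congr 1
        simp only [Nat.add_sub_cancel]
        omega
      have h2 : V (5*k+2) = 5*(f (k+1):ℤ) + 1 := by
        have h := hVrec (5*k+2) (by omega)
        rw [show 5*k+2-1 = 5*k+1 from rfl, show 5*k+2-4 = 5*k-2 by omega] at h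
        rw [h1, hD] at h
        rw [show ((5*k+2:ℕ):ℤ) - (5*(k:ℤ)-2) = 4 by push_cast; ring] at h
        rw [show ((5*k+2:ℕ):ℤ) - (5*(g k:ℤ)-1) = ((5*(k - g k)+3:ℕ):ℤ) by omega] at h
        rw [show Int.toNat 4 = 4 from rfl, Int.toNat_natCast] at h
        rw [hV4, IHgk.2.2.2.1] at h
        rw [hfk1]
        omega
      have hfKb : f (k+1) + 3 ≤ k+1 := Bf3 (k+1) (by omega)
      have hfKa : 1 ≤ f (k+1) := Bf1 (k+1) (by omega)
      have IHf1 := IH (k - f (k+1)) (by omega) (by omega)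
      have hgk1 : g (k+1) = f (k - f (k+1) + 1) + 2 := by
        rw [hg (k+1) (by omega)]
        congr 2
        omega
      have h3 : V (5*k+3) = 5*(g (k+1):ℤ) - 1 := by
        have h := hVrec (5*k+3) (by omega)
        rw [show 5*k+3-1 = 5*k+2 from rfl, show 5*k+3-4 = 5*k-1 by omega] at h
        rw [h2, hA] at h
        rw [show ((5*k+3:ℕ):ℤ) - (5*(f (k+1):ℤ)+1) = ((5*(k - f (k+1))+2:ℕ):ℤ) by omega] at h
        rw [show ((5*k+3:ℕ):ℤ) - (5*(k:ℤ)-8) = 11 by push_cast; ring] at h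
        rw [Int.toNat_natCast, show Int.toNat 11 = 11 from rfl] at h
        rw [IHf1.2.2.1, h11] at h
        rw [hgk1]
        omega
      have hgKb : g (k+1) + 2 ≤ k+1 := Bg4 (k+1) (by omega)
      have hgKa : 2 ≤ g (k+1) := Bg2 (k+1) (by omega)
      have IHg1 := IH (k+1 - g (k+1)) (by omega) (by omega)
      have h4 : V (5*k+4) = 5*(k:ℤ) - 3 := by
        have h := hVrec (5*k+4) (by omega)
        rw [show 5*k+4-1 = 5*k+3 from rfl, show 5*k+4-4 = 5*k from rfl] at h
        rw [h3, h0] at h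
        rw [show ((5*k+4:ℕ):ℤ) - (5*(g (k+1):ℤ)-1) = ((5*(k+1 - g (k+1)):ℕ):ℤ) by omega] at h
        rw [show ((5*k+4:ℕ):ℤ) - 10 = ((5*(k-2)+4:ℕ):ℤ) by omega] at h
        rw [Int.toNat_natCast, Int.toNat_natCast] at h
        rw [IHg1.1, IH2.2.2.2.2] at h
        omega
      exact ⟨h0, h1, h2, h3, h4⟩
  have Vrange : ∀ m : ℕ, 3 ≤ m → 1 ≤ V m ∧ V m ≤ (m:ℤ) + 1 ∧ (6 ≤ m → V m ≤ (m:ℤ)) := by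
    intro m hm
    rcases le_or_gt m 9 with hm9 | hm9
    · interval_cases m <;> refine ⟨by omega, by omega, fun h6 => by omega⟩
    · have hk2 : 2 ≤ m / 5 := by omega
      have hm5 := Nat.div_add_mod m 5
      obtain ⟨M0, M1, M2, M3, M4⟩ := main (m/5) hk2
      have hfb : f (m/5+1) + 2 ≤ m/5+1 := Bf2 (m/5+1) (by omega)
      have hfa : 1 ≤ f (m/5+1) := Bf1 (m/5+1) (by omega)
      have hgb : g (m/5+1) + 1 ≤ m/5+1 := Bg3 (m/5+1) (by omega)
      have hga : 1 ≤ g (m/5+1) := Bg1 (m/5+1) (by omega)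
      have h5 : m % 5 = 0 ∨ m % 5 = 1 ∨ m % 5 = 2 ∨ m % 5 = 3 ∨ m % 5 = 4 := by omega
      rcases h5 with h|h|h|h|h
      · rw [show m = 5*(m/5) by omega]
        refine ⟨by omega, by omega, fun h6 => by omega⟩
      · rw [show m = 5*(m/5)+1 by omega]
        refine ⟨by omega, by omega, fun h6 => by omega⟩
      · rw [show m = 5*(m/5)+2 by omega]
        refine ⟨by omega, by omega, fun h6 => by omega⟩
      · rw [show m = 5*(m/5)+3 by omega]
        refine ⟨by omega, by omega, fun h6 => by omega⟩
      · rw [show m = 5*(m/5)+4 by omega]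
        refine ⟨by omega, by omega, fun h6 => by omega⟩
  refine ⟨?_, main⟩
  intro n hn
  have r1 := Vrange (n-1) (by omega)
  have r4 := Vrange (n-4) (by omega)
  have r1' := r1.2.2 (by omega)
  refine ⟨⟨by omega, by omega⟩, ⟨by omega, by omega⟩⟩
end

section
/- Let H : ℕ → ℤ satisfy H(n) = H(n - H(n-2)) + H(n - H(n-3)) for n ≥ 5, with initial conditions H(1) = 3, H(2) = 1, H(3) = 4, H(4) = 2. Let f, g be the slow sequences of the Golomb-like system f(n) = g(n - g(n-1)), g(n) = f(n - f(n)) + 1 with f(1) = 0. Then for all k ≥ 1: H(5k) = 5, H(5k+1) = 5 g(k) - 2, H(5k+2) = 5k + 1, H(5k+3) = 5k + 4, and H(5k+4) = 5 f(k+1) + 2. -/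
/-- Proposition h1: the H-recurrence H(n)=H(n-H(n-2))+H(n-H(n-3)) with initial
conditions ⟨3,1,4,2⟩ interleaves the slow Golomb-like sequences f, g
(f(1)=0, g(n)=f(n-f(n))+1, f(n)=g(n-g(n-1))). -/
theorem stmt_7 (H : ℕ → ℤ) (f g : ℕ → ℕ)
    (hH1 : H 1 = 3) (hH2 : H 2 = 1) (hH3 : H 3 = 4) (hH4 : H 4 = 2)
    (hHrec : ∀ n : ℕ, 5 ≤ n →
      H n = H ((n : ℤ) - H (n - 2)).toNat + H ((n : ℤ) - H (n - 3)).toNat)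
    (hf1 : f 1 = 0)
    (hg : ∀ n, 1 ≤ n → g n = f (n - f n) + 1)
    (hf : ∀ n, 2 ≤ n → f n = g (n - g (n - 1))) :
    (∀ n : ℕ, 5 ≤ n →
      (1 ≤ (n : ℤ) - H (n - 2) ∧ (n : ℤ) - H (n - 2) ≤ (n : ℤ) - 1) ∧
      (1 ≤ (n : ℤ) - H (n - 3) ∧ (n : ℤ) - H (n - 3) ≤ (n : ℤ) - 1)) ∧
    (∀ k : ℕ, 1 ≤ k →
      H (5 * k) = 5 ∧
      H (5 * k + 1) = 5 * (g k : ℤ) - 2 ∧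
      H (5 * k + 2) = 5 * (k : ℤ) + 1 ∧
      H (5 * k + 3) = 5 * (k : ℤ) + 4 ∧
      H (5 * k + 4) = 5 * (f (k + 1) : ℤ) + 2) := by
  have hfg : ∀ k, 1 ≤ k → f k < k ∧ 1 ≤ g k ∧ g k ≤ k := by
    intro k
    induction k using Nat.strong_induction_on with
    | _ k ih =>
      intro hk
      rcases Nat.lt_or_ge k 2 with h2 | h2
      · have hk1 : k = 1 := by omega
        subst hk1
        have hg1 : g 1 = 1 := by rw [hg 1 le_rfl, hf1]; simp [hf1]
        exact ⟨by omega, by omega, by omega⟩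
      · have ihp := ih (k - 1) (by omega) (by omega)
        have hfk : f k < k := by
          rw [hf k h2]
          have := ih (k - g (k - 1)) (by omega) (by omega)
          omega
        refine ⟨hfk, ?_, ?_⟩
        · rw [hg k (by omega)]; omega
        · rw [hg k (by omega)]
          by_cases h0 : f k = 0
          · rw [h0]; simp [h0]; omega
          · have := ih (k - f k) (by omega) (by omega)
            omega
  have hQ : ∀ k : ℕ, H (5*k+2) = 5*(k:ℤ)+1 ∧ H (5*k+3) = 5*(k:ℤ)+4 ∧
      H (5*k+4) = 5*(f (k+1) : ℤ)+2 ∧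
      (1 ≤ k → H (5*k) = 5 ∧ H (5*k+1) = 5*(g k : ℤ)-2) := by
    intro k
    induction k using Nat.strong_induction_on with
    | _ k ih =>
      rcases Nat.eq_zero_or_pos k with rfl | hk
      · refine ⟨by simpa using hH2, by simpa using hH3, ?_, by omega⟩
        norm_num [hH4, hf1]
      · have hfgk := hfg k hk
        -- r = 0
        have h0 : H (5*k) = 5 := by
          have hrec := hHrec (5*k) (by omega)
          rw [show 5*k-2 = 5*(k-1)+3 from by omega,
              show 5*k-3 = 5*(k-1)+2 from by omega,
              (ih (k-1) (by omega)).2.1, (ih (k-1) (by omega)).1] at hrec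
          rw [show ((5*k : ℕ) : ℤ) - (5*((k-1 : ℕ) : ℤ)+4) = ((1:ℕ) : ℤ) from by omega,
              show ((5*k : ℕ) : ℤ) - (5*((k-1 : ℕ) : ℤ)+1) = ((4:ℕ) : ℤ) from by omega,
              Int.toNat_natCast, Int.toNat_natCast] at hrec
          rw [hrec, hH1, hH4]; norm_num
        -- r = 1
        have h1 : H (5*k+1) = 5*(g k : ℤ)-2 := by
          have hrec := hHrec (5*k+1) (by omega)
          have e2 := (ih (k-1) (by omega)).2.2.1
          rw [show k-1+1 = k from by omega] at e2
          rw [show 5*k+1-2 = 5*(k-1)+4 from by omega,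
              show 5*k+1-3 = 5*(k-1)+3 from by omega,
              e2, (ih (k-1) (by omega)).2.1] at hrec
          rw [show ((5*k+1 : ℕ) : ℤ) - (5*(f k : ℤ)+2) = ((5*(k - f k - 1)+4 : ℕ) : ℤ) from by omega,
              show ((5*k+1 : ℕ) : ℤ) - (5*((k-1 : ℕ) : ℤ)+4) = ((2:ℕ) : ℤ) from by omega,
              Int.toNat_natCast, Int.toNat_natCast] at hrec
          have e4 := (ih (k - f k - 1) (by omega)).2.2.1
          rw [show k - f k - 1 + 1 = k - f k from by omega] at e4
          rw [e4, hH2] at hrec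
          rw [hrec, hg k hk]
          push_cast
          ring
        -- r = 2
        have h2 : H (5*k+2) = 5*(k:ℤ)+1 := by
          have hrec := hHrec (5*k+2) (by omega)
          have e3 := (ih (k-1) (by omega)).2.2.1
          rw [show k-1+1 = k from by omega] at e3
          rw [show 5*k+2-2 = 5*k from by omega,
              show 5*k+2-3 = 5*(k-1)+4 from by omega, h0, e3] at hrec
          rw [show ((5*k+2 : ℕ) : ℤ) - (5:ℤ) = ((5*(k-1)+2 : ℕ) : ℤ) from by omega,
              show ((5*k+2 : ℕ) : ℤ) - (5*(f k : ℤ)+2) = ((5*(k - f k) : ℕ) : ℤ) from by omega,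
              Int.toNat_natCast, Int.toNat_natCast] at hrec
          have h5 : H (5*(k - f k)) = 5 := by
            by_cases hkk : f k = 0
            · rw [hkk]; simpa using h0
            · exact ((ih (k - f k) (by omega)).2.2.2 (by omega)).1
          rw [(ih (k-1) (by omega)).1, h5] at hrec
          rw [hrec]; omega
        -- r = 3
        have h3 : H (5*k+3) = 5*(k:ℤ)+4 := by
          have hrec := hHrec (5*k+3) (by omega)
          rw [show 5*k+3-2 = 5*k+1 from by omega,
              show 5*k+3-3 = 5*k from by omega, h1, h0] at hrec
          rw [show ((5*k+3 : ℕ) : ℤ) - (5*(g k : ℤ)-2) = ((5*(k+1 - g k) : ℕ) : ℤ) from by omega,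
              show ((5*k+3 : ℕ) : ℤ) - (5:ℤ) = ((5*(k-1)+3 : ℕ) : ℤ) from by omega,
              Int.toNat_natCast, Int.toNat_natCast] at hrec
          have h5 : H (5*(k+1 - g k)) = 5 := by
            by_cases hkk : g k = 1
            · rw [show k+1 - g k = k from by omega]; exact h0
            · exact ((ih (k+1 - g k) (by omega)).2.2.2 (by omega)).1
          rw [h5, (ih (k-1) (by omega)).2.1] at hrec
          rw [hrec]; omega
        -- r = 4
        have h4' : H (5*k+4) = 5*(f (k+1) : ℤ)+2 := by
          have hrec := hHrec (5*k+4) (by omega)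
          rw [show 5*k+4-2 = 5*k+2 from by omega,
              show 5*k+4-3 = 5*k+1 from by omega, h2, h1] at hrec
          rw [show ((5*k+4 : ℕ) : ℤ) - (5*(k:ℤ)+1) = ((3:ℕ) : ℤ) from by omega,
              show ((5*k+4 : ℕ) : ℤ) - (5*(g k : ℤ)-2) = ((5*(k+1 - g k)+1 : ℕ) : ℤ) from by omega,
              Int.toNat_natCast, Int.toNat_natCast] at hrec
          have h5 : H (5*(k+1 - g k)+1) = 5*(g (k+1 - g k) : ℤ) - 2 := by
            by_cases hkk : g k = 1
            · rw [show k+1 - g k = k from by omega]; exact h1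
            · exact ((ih (k+1 - g k) (by omega)).2.2.2 (by omega)).2
          rw [h5, hH3] at hrec
          have e6 : f (k+1) = g (k+1 - g k) := by
            rw [hf (k+1) (by omega), show k+1-1 = k from by omega]
          rw [hrec, e6]; ring
        exact ⟨h2, h3, h4', fun _ => ⟨h0, h1⟩⟩
  constructor
  · intro n hn
    obtain ⟨k, r, hr, rfl⟩ : ∃ k r, r < 5 ∧ n = 5*k + r :=
      ⟨n/5, n%5, Nat.mod_lt _ (by norm_num), (Nat.div_add_mod n 5).symm⟩
    interval_cases r
    · -- r = 0, k ≥ 1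
      have hk : 1 ≤ k := by omega
      have hfgk := hfg k hk
      rw [show 5*k+0-2 = 5*(k-1)+3 from by omega,
          show 5*k+0-3 = 5*(k-1)+2 from by omega,
          (hQ (k-1)).2.1, (hQ (k-1)).1]
      constructor <;> constructor <;> omega
    · have hk : 1 ≤ k := by omega
      have hfgk := hfg k hk
      have e2 := (hQ (k-1)).2.2.1
      rw [show k-1+1 = k from by omega] at e2
      rw [show 5*k+1-2 = 5*(k-1)+4 from by omega,
          show 5*k+1-3 = 5*(k-1)+3 from by omega, e2, (hQ (k-1)).2.1]
      constructor <;> constructor <;> omega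
    · have hk : 1 ≤ k := by omega
      have hfgk := hfg k hk
      have e3 := (hQ (k-1)).2.2.1
      rw [show k-1+1 = k from by omega] at e3
      rw [show 5*k+2-2 = 5*k from by omega,
          show 5*k+2-3 = 5*(k-1)+4 from by omega, ((hQ k).2.2.2 hk).1, e3]
      constructor <;> constructor <;> omega
    · have hk : 1 ≤ k := by omega
      have hfgk := hfg k hk
      rw [show 5*k+3-2 = 5*k+1 from by omega,
          show 5*k+3-3 = 5*k from by omega, ((hQ k).2.2.2 hk).2, ((hQ k).2.2.2 hk).1]
      constructor <;> constructor <;> omega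
    · have hk : 1 ≤ k := by omega
      have hfgk := hfg k hk
      rw [show 5*k+4-2 = 5*k+2 from by omega,
          show 5*k+4-3 = 5*k+1 from by omega, (hQ k).1, ((hQ k).2.2.2 hk).2]
      constructor <;> constructor <;> omega
  · intro k hk
    exact ⟨((hQ k).2.2.2 hk).1, ((hQ k).2.2.2 hk).2, (hQ k).1, (hQ k).2.1, (hQ k).2.2.1⟩
end

section
/- The sequence V defined by V(1) = V(2) = V(3) = V(4) = 1 and V(n) = V(n - V(n-1)) + V(n - V(n-4)) for n ≥ 5 is slow: for all n ≥ 1, V(n+1) - V(n) ∈ {0, 1}, and V is unbounded (hence attains every positive integer). -/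
abbrev T8 := ℕ×ℕ×ℕ×ℕ×ℕ×ℕ×ℕ×ℕ

def hofInv : List T8 := [
  (0,0,1,0,0,0,1,0),
  (0,0,1,0,0,1,0,0),
  (0,0,1,0,0,1,0,1),
  (0,0,1,0,0,1,1,0),
  (0,0,1,0,1,0,0,1),
  (0,0,1,0,1,0,1,0),
  (0,0,1,0,1,0,1,1),
  (0,1,0,0,0,1,0,0),
  (0,1,0,0,0,1,0,1),
  (0,1,0,1,0,0,1,0),
  (0,1,0,1,0,1,0,0),
  (0,1,0,1,0,1,0,1),
  (0,1,0,1,0,1,1,0),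
  (0,1,0,1,1,0,0,1),
  (0,1,0,1,1,0,1,0),
  (0,1,0,1,1,0,1,1),
  (0,1,0,1,1,1,0,0),
  (0,1,0,1,1,1,0,1),
  (0,1,1,0,0,1,0,0),
  (0,1,1,0,0,1,0,1),
  (0,1,1,0,0,1,1,0),
  (0,1,1,0,1,1,0,0),
  (0,1,1,0,1,1,0,1),
  (1,0,0,1,0,0,1,0),
  (1,0,0,1,0,1,0,0),
  (1,0,0,1,0,1,0,1),
  (1,0,0,1,0,1,1,0),
  (1,0,0,1,1,0,0,1),
  (1,0,0,1,1,0,1,0),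
  (1,0,0,1,1,0,1,1),
  (1,0,1,0,0,0,1,0),
  (1,0,1,0,1,0,0,1),
  (1,0,1,0,1,0,1,0),
  (1,0,1,0,1,0,1,1),
  (1,0,1,0,1,1,0,0),
  (1,0,1,0,1,1,0,1),
  (1,0,1,1,0,1,0,0),
  (1,0,1,1,0,1,0,1),
  (1,0,1,1,0,1,1,0),
  (1,0,1,1,1,1,0,0),
  (1,0,1,1,1,1,0,1),
  (1,1,0,0,1,0,0,1),
  (1,1,0,0,1,0,1,0),
  (1,1,0,0,1,0,1,1),
  (1,1,0,1,1,0,0,1),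
  (1,1,0,1,1,0,1,0),
  (1,1,0,1,1,1,0,0),
  (1,1,0,1,1,1,0,1)]

def hofSel (p1 p2 p3 p4 j : ℕ) : ℕ :=
  match j with
  | 0 => p1
  | 1 => p2
  | 2 => p3
  | _ => p4

def hofStp (w1 w2 w3 w4 p1 p2 p3 p4 : ℕ) : ℕ :=
  (1-w4)*p1 + (1-w1)*(hofSel p1 p2 p3 p4 (w1+w2+w3))


def wp1 (t:T8) : ℕ := t.1
def wp2 (t:T8) : ℕ := t.2.1
def wp3 (t:T8) : ℕ := t.2.2.1
def wp4 (t:T8) : ℕ := t.2.2.2.1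
def pp1 (t:T8) : ℕ := t.2.2.2.2.1
def pp2 (t:T8) : ℕ := t.2.2.2.2.2.1
def pp3 (t:T8) : ℕ := t.2.2.2.2.2.2.1
def pp4 (t:T8) : ℕ := t.2.2.2.2.2.2.2
def tstp (t:T8) : ℕ := hofStp (wp1 t) (wp2 t) (wp3 t) (wp4 t) (pp1 t) (pp2 t) (pp3 t) (pp4 t)

abbrev PB (t : T8) : Prop :=
  wp1 t ≤ 1 ∧ wp2 t ≤ 1 ∧ wp3 t ≤ 1 ∧ wp4 t ≤ 1 ∧ pp1 t ≤ 1 ∧ pp2 t ≤ 1 ∧ pp3 t ≤ 1 ∧ pp4 t ≤ 1 ∧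
  1 ≤ wp1 t + wp2 t + wp3 t + wp4 t ∧
  1 ≤ wp3 t + wp4 t + tstp t ∧ wp3 t + wp4 t + tstp t ≤ 2

abbrev PS1 (t : T8) : Prop :=
  wp4 t = 1 → (wp2 t, wp3 t, wp4 t, tstp t, pp1 t, pp2 t, pp3 t, pp4 t) ∈ hofInv

abbrev PS0 (t t' : T8) : Prop :=
  wp4 t = 0 → wp1 t' = pp1 t → wp2 t' = pp2 t → wp3 t' = pp3 t → wp4 t' = pp4 t →
  (wp2 t, wp3 t, wp4 t, tstp t, pp2 t, pp3 t, pp4 t, tstp t') ∈ hofInv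

lemma hofInv_bits : ∀ t ∈ hofInv, PB t := by decide
lemma hofInv_step1 : ∀ t ∈ hofInv, PS1 t := by decide
lemma hofInv_step0 : ∀ t ∈ hofInv, ∀ t' ∈ hofInv, PS0 t t' := by decide
-- anchored invariant: c is n-4
def GoodAt (V : ℕ → ℕ) (c a w1 w2 w3 w4 p1 p2 p3 p4 : ℕ) : Prop :=
  a + V (c+3) = c+4 ∧
  V (c+1) = V c + w1 ∧ V (c+2) = V (c+1) + w2 ∧
  V (c+3) = V (c+2) + w3 ∧ V (c+4) = V (c+3) + w4 ∧
  V (a+1) = V a + p1 ∧ V (a+2) = V (a+1) + p2 ∧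
  V (a+3) = V (a+2) + p3 ∧ V (a+4) = V (a+3) + p4

def Good (V : ℕ → ℕ) (n : ℕ) : Prop :=
  ∃ c a w1 w2 w3 w4 p1 p2 p3 p4, c + 4 = n ∧
    GoodAt V c a w1 w2 w3 w4 p1 p2 p3 p4 ∧
    (w1,w2,w3,w4,p1,p2,p3,p4) ∈ hofInv

lemma step_eq (V : ℕ → ℕ)
    (hVrec : ∀ n : ℕ, 5 ≤ n → V n = V (n - V (n - 1)) + V (n - V (n - 4)))
    (c a w1 w2 w3 w4 p1 p2 p3 p4 : ℕ) (hc : 1 ≤ c)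
    (hb : w1 ≤ 1 ∧ w2 ≤ 1 ∧ w3 ≤ 1 ∧ w4 ≤ 1)
    (hg : GoodAt V c a w1 w2 w3 w4 p1 p2 p3 p4) :
    V (c+5) = V (c+4) + hofStp w1 w2 w3 w4 p1 p2 p3 p4 := by
  obtain ⟨ha, e1, e2, e3, e4, f1, f2, f3, f4⟩ := hg
  obtain ⟨b1, b2, b3, b4⟩ := hb
  have hn := hVrec (c+4) (by omega)
  have hn1 := hVrec (c+5) (by omega)
  rw [show c+4-1 = c+3 by omega, show c+4-4 = c by omega] at hn
  rw [show c+5-1 = c+4 by omega, show c+5-4 = c+1 by omega] at hn1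
  rw [show c+4 - V (c+3) = a by omega,
      show c+4 - V c = a + (w1+w2+w3) by omega] at hn
  rw [show c+5 - V (c+4) = a + 1 - w4 by omega,
      show c+5 - V (c+1) = a + (w1+w2+w3) + 1 - w1 by omega] at hn1
  interval_cases w1 <;> interval_cases w2 <;> interval_cases w3 <;> interval_cases w4 <;>
    (norm_num [hofStp, hofSel] at hn hn1 ⊢) <;> (try (simp only [add_assoc] at hn hn1; norm_num at hn hn1)) <;> omega

/-- Hofstadter's V-sequence (V(1)=V(2)=V(3)=V(4)=1, V(n)=V(n-V(n-1))+V(n-V(n-4)))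
is well-defined, slow, and unbounded (hence attains every positive integer). -/
theorem stmt_10 (V : ℕ → ℕ)
    (hV1 : V 1 = 1) (hV2 : V 2 = 1) (hV3 : V 3 = 1) (hV4 : V 4 = 1)
    (hVrec : ∀ n : ℕ, 5 ≤ n → V n = V (n - V (n - 1)) + V (n - V (n - 4))) :
    (∀ n : ℕ, 5 ≤ n →
      (1 ≤ n - V (n - 1) ∧ n - V (n - 1) ≤ n - 1) ∧
      (1 ≤ n - V (n - 4) ∧ n - V (n - 4) ≤ n - 1)) ∧
    (∀ n : ℕ, 1 ≤ n → (V (n + 1) = V n ∨ V (n + 1) = V n + 1)) ∧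
    (∀ m : ℕ, ∃ n : ℕ, 1 ≤ n ∧ m ≤ V n) ∧
    (∀ m : ℕ, 1 ≤ m → ∃ n : ℕ, 1 ≤ n ∧ V n = m) := by
  have hv5 : V 5 = 2 := by
    have h := hVrec 5 (by norm_num)
    norm_num [hV4, hV1] at h
    exact h
  have hv6 : V 6 = 3 := by
    have h := hVrec 6 (by norm_num)
    norm_num [hv5, hV2, hV4] at h
    exact h
  have hv7 : V 7 = 4 := by
    have h := hVrec 7 (by norm_num)
    norm_num [hv6, hV3, hV4] at h
    exact h
  have hv8 : V 8 = 5 := by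
    have h := hVrec 8 (by norm_num)
    norm_num [hv7, hV4] at h
    exact h
  have hv9 : V 9 = 5 := by
    have h := hVrec 9 (by norm_num)
    norm_num [hv8, hv5, hV4, hv7] at h
    exact h
  have hv10 : V 10 = 6 := by
    have h := hVrec 10 (by norm_num)
    norm_num [hv9, hv6, hv5, hv7] at h
    exact h
  have hv11 : V 11 = 6 := by
    have h := hVrec 11 (by norm_num)
    norm_num [hv10, hv7, hv5] at h
    exact h
  have hv12 : V 12 = 7 := by
    have h := hVrec 12 (by norm_num)
    norm_num [hv11, hv8, hv6, hv7] at h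
    exact h
  have hv13 : V 13 = 8 := by
    have h := hVrec 13 (by norm_num)
    norm_num [hv12, hv9, hv6, hv8] at h
    exact h
  have hv14 : V 14 = 8 := by
    have h := hVrec 14 (by norm_num)
    norm_num [hv13, hv10, hv6, hv8] at h
    exact h
  have hv15 : V 15 = 9 := by
    have h := hVrec 15 (by norm_num)
    norm_num [hv14, hv11, hv7, hv9] at h
    exact h
  have hv16 : V 16 = 9 := by
    have h := hVrec 16 (by norm_num)
    norm_num [hv15, hv12, hv7, hv9] at h
    exact h
  have hv17 : V 17 = 10 := by
    have h := hVrec 17 (by norm_num)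
    norm_num [hv16, hv13, hv8, hv9] at h
    exact h
  have hv18 : V 18 = 11 := by
    have h := hVrec 18 (by norm_num)
    norm_num [hv17, hv14, hv8, hv10] at h
    exact h
  have hv19 : V 19 = 11 := by
    have h := hVrec 19 (by norm_num)
    norm_num [hv18, hv15, hv8, hv10] at h
    exact h
  have hv20 : V 20 = 11 := by
    have h := hVrec 20 (by norm_num)
    norm_num [hv19, hv16, hv9, hv11] at h
    exact h
  have hv21 : V 21 = 12 := by
    have h := hVrec 21 (by norm_num)
    norm_num [hv20, hv17, hv10, hv11] at h
    exact h
  have hv22 : V 22 = 12 := by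
    have h := hVrec 22 (by norm_num)
    norm_num [hv21, hv18, hv10, hv11] at h
    exact h
  have hv23 : V 23 = 13 := by
    have h := hVrec 23 (by norm_num)
    norm_num [hv22, hv19, hv11, hv12] at h
    exact h
  have hv24 : V 24 = 14 := by
    have h := hVrec 24 (by norm_num)
    norm_num [hv23, hv20, hv11, hv13] at h
    exact h
  have hv25 : V 25 = 14 := by
    have h := hVrec 25 (by norm_num)
    norm_num [hv24, hv21, hv11, hv13] at h
    exact h
  have hv26 : V 26 = 15 := by
    have h := hVrec 26 (by norm_num)
    norm_num [hv25, hv22, hv12, hv14] at h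
    exact h
  have hv27 : V 27 = 15 := by
    have h := hVrec 27 (by norm_num)
    norm_num [hv26, hv23, hv12, hv14] at h
    exact h
  have hv28 : V 28 = 16 := by
    have h := hVrec 28 (by norm_num)
    norm_num [hv27, hv24, hv13, hv14] at h
    exact h
  have hv29 : V 29 = 17 := by
    have h := hVrec 29 (by norm_num)
    norm_num [hv28, hv25, hv13, hv15] at h
    exact h
  have hv30 : V 30 = 17 := by
    have h := hVrec 30 (by norm_num)
    norm_num [hv29, hv26, hv13, hv15] at h
    exact h
  have hv31 : V 31 = 17 := by
    have h := hVrec 31 (by norm_num)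
    norm_num [hv30, hv27, hv14, hv16] at h
    exact h
  have hv32 : V 32 = 18 := by
    have h := hVrec 32 (by norm_num)
    norm_num [hv31, hv28, hv15, hv16] at h
    exact h
  have hv33 : V 33 = 18 := by
    have h := hVrec 33 (by norm_num)
    norm_num [hv32, hv29, hv15, hv16] at h
    exact h
  have hv34 : V 34 = 19 := by
    have h := hVrec 34 (by norm_num)
    norm_num [hv33, hv30, hv16, hv17] at h
    exact h
  have hv35 : V 35 = 20 := by
    have h := hVrec 35 (by norm_num)
    norm_num [hv34, hv31, hv16, hv18] at h
    exact h
  have hv36 : V 36 = 20 := by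
    have h := hVrec 36 (by norm_num)
    norm_num [hv35, hv32, hv16, hv18] at h
    exact h
  have hv37 : V 37 = 21 := by
    have h := hVrec 37 (by norm_num)
    norm_num [hv36, hv33, hv17, hv19] at h
    exact h
  have hv38 : V 38 = 21 := by
    have h := hVrec 38 (by norm_num)
    norm_num [hv37, hv34, hv17, hv19] at h
    exact h
  have hv39 : V 39 = 22 := by
    have h := hVrec 39 (by norm_num)
    norm_num [hv38, hv35, hv18, hv19] at h
    exact h
  have hv40 : V 40 = 22 := by
    have h := hVrec 40 (by norm_num)
    norm_num [hv39, hv36, hv18, hv20] at h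
    exact h
  have hv41 : V 41 = 22 := by
    have h := hVrec 41 (by norm_num)
    norm_num [hv40, hv37, hv19, hv20] at h
    exact h
  have hv42 : V 42 = 23 := by
    have h := hVrec 42 (by norm_num)
    norm_num [hv41, hv38, hv20, hv21] at h
    exact h
  have hv43 : V 43 = 23 := by
    have h := hVrec 43 (by norm_num)
    norm_num [hv42, hv39, hv20, hv21] at h
    exact h
  have hv44 : V 44 = 24 := by
    have h := hVrec 44 (by norm_num)
    norm_num [hv43, hv40, hv21, hv22] at h
    exact h
  have hv45 : V 45 = 25 := by
    have h := hVrec 45 (by norm_num)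
    norm_num [hv44, hv41, hv21, hv23] at h
    exact h
  have hv46 : V 46 = 25 := by
    have h := hVrec 46 (by norm_num)
    norm_num [hv45, hv42, hv21, hv23] at h
    exact h
  have hv47 : V 47 = 26 := by
    have h := hVrec 47 (by norm_num)
    norm_num [hv46, hv43, hv22, hv24] at h
    exact h
  have hv48 : V 48 = 26 := by
    have h := hVrec 48 (by norm_num)
    norm_num [hv47, hv44, hv22, hv24] at h
    exact h
  have hv49 : V 49 = 27 := by
    have h := hVrec 49 (by norm_num)
    norm_num [hv48, hv45, hv23, hv24] at h
    exact h
  have hv50 : V 50 = 27 := by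
    have h := hVrec 50 (by norm_num)
    norm_num [hv49, hv46, hv23, hv25] at h
    exact h
  have hv51 : V 51 = 28 := by
    have h := hVrec 51 (by norm_num)
    norm_num [hv50, hv47, hv24, hv25] at h
    exact h
  have hv52 : V 52 = 29 := by
    have h := hVrec 52 (by norm_num)
    norm_num [hv51, hv48, hv24, hv26] at h
    exact h
  have hv53 : V 53 = 29 := by
    have h := hVrec 53 (by norm_num)
    norm_num [hv52, hv49, hv24, hv26] at h
    exact h
  have hv54 : V 54 = 29 := by
    have h := hVrec 54 (by norm_num)
    norm_num [hv53, hv50, hv25, hv27] at h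
    exact h
  have hv55 : V 55 = 30 := by
    have h := hVrec 55 (by norm_num)
    norm_num [hv54, hv51, hv26, hv27] at h
    exact h
  have hv56 : V 56 = 30 := by
    have h := hVrec 56 (by norm_num)
    norm_num [hv55, hv52, hv26, hv27] at h
    exact h
  have hv57 : V 57 = 31 := by
    have h := hVrec 57 (by norm_num)
    norm_num [hv56, hv53, hv27, hv28] at h
    exact h
  have hv58 : V 58 = 32 := by
    have h := hVrec 58 (by norm_num)
    norm_num [hv57, hv54, hv27, hv29] at h
    exact h
  have hv59 : V 59 = 32 := by
    have h := hVrec 59 (by norm_num)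
    norm_num [hv58, hv55, hv27, hv29] at h
    exact h
  have hv60 : V 60 = 33 := by
    have h := hVrec 60 (by norm_num)
    norm_num [hv59, hv56, hv28, hv30] at h
    exact h
  have hv61 : V 61 = 33 := by
    have h := hVrec 61 (by norm_num)
    norm_num [hv60, hv57, hv28, hv30] at h
    exact h
  have hv62 : V 62 = 34 := by
    have h := hVrec 62 (by norm_num)
    norm_num [hv61, hv58, hv29, hv30] at h
    exact h
  have hv63 : V 63 = 34 := by
    have h := hVrec 63 (by norm_num)
    norm_num [hv62, hv59, hv29, hv31] at h
    exact h
  have hv64 : V 64 = 34 := by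
    have h := hVrec 64 (by norm_num)
    norm_num [hv63, hv60, hv30, hv31] at h
    exact h
  have hv65 : V 65 = 35 := by
    have h := hVrec 65 (by norm_num)
    norm_num [hv64, hv61, hv31, hv32] at h
    exact h
  have hv66 : V 66 = 35 := by
    have h := hVrec 66 (by norm_num)
    norm_num [hv65, hv62, hv31, hv32] at h
    exact h
  have hv67 : V 67 = 36 := by
    have h := hVrec 67 (by norm_num)
    norm_num [hv66, hv63, hv32, hv33] at h
    exact h
  have hv68 : V 68 = 37 := by
    have h := hVrec 68 (by norm_num)
    norm_num [hv67, hv64, hv32, hv34] at h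
    exact h
  have hv69 : V 69 = 37 := by
    have h := hVrec 69 (by norm_num)
    norm_num [hv68, hv65, hv32, hv34] at h
    exact h
  have hv70 : V 70 = 38 := by
    have h := hVrec 70 (by norm_num)
    norm_num [hv69, hv66, hv33, hv35] at h
    exact h
  have hv71 : V 71 = 38 := by
    have h := hVrec 71 (by norm_num)
    norm_num [hv70, hv67, hv33, hv35] at h
    exact h
  have hv72 : V 72 = 39 := by
    have h := hVrec 72 (by norm_num)
    norm_num [hv71, hv68, hv34, hv35] at h
    exact h
  have hv73 : V 73 = 39 := by
    have h := hVrec 73 (by norm_num)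
    norm_num [hv72, hv69, hv34, hv36] at h
    exact h
  have hv74 : V 74 = 40 := by
    have h := hVrec 74 (by norm_num)
    norm_num [hv73, hv70, hv35, hv36] at h
    exact h
  have hv75 : V 75 = 41 := by
    have h := hVrec 75 (by norm_num)
    norm_num [hv74, hv71, hv35, hv37] at h
    exact h
  have hv76 : V 76 = 41 := by
    have h := hVrec 76 (by norm_num)
    norm_num [hv75, hv72, hv35, hv37] at h
    exact h
  have hv77 : V 77 = 41 := by
    have h := hVrec 77 (by norm_num)
    norm_num [hv76, hv73, hv36, hv38] at h
    exact h
  have hv78 : V 78 = 42 := by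
    have h := hVrec 78 (by norm_num)
    norm_num [hv77, hv74, hv37, hv38] at h
    exact h
  have hv79 : V 79 = 42 := by
    have h := hVrec 79 (by norm_num)
    norm_num [hv78, hv75, hv37, hv38] at h
    exact h
  have hv80 : V 80 = 43 := by
    have h := hVrec 80 (by norm_num)
    norm_num [hv79, hv76, hv38, hv39] at h
    exact h
  have key : ∀ n, 30 ≤ n → Good V n ∧ 3 * V n ≤ 2 * n ∧ n ≤ 3 * V n := by
    intro n
    induction n using Nat.strong_induction_on with
    | _ n ih =>
    intro hn
    by_cases hsmall : n ≤ 76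
    · interval_cases n
      · exact ⟨⟨26, 13, 0, 1, 1, 0, 0, 1, 0, 1, by norm_num, by simp only [GoodAt]; norm_num; omega, by decide⟩, by omega, by omega⟩
      · exact ⟨⟨27, 14, 1, 1, 0, 0, 1, 0, 1, 1, by norm_num, by simp only [GoodAt]; norm_num; omega, by decide⟩, by omega, by omega⟩
      · exact ⟨⟨28, 15, 1, 0, 0, 1, 0, 1, 1, 0, by norm_num, by simp only [GoodAt]; norm_num; omega, by decide⟩, by omega, by omega⟩
      · exact ⟨⟨29, 15, 0, 0, 1, 0, 0, 1, 1, 0, by norm_num, by simp only [GoodAt]; norm_num; omega, by decide⟩, by omega, by omega⟩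
      · exact ⟨⟨30, 16, 0, 1, 0, 1, 1, 1, 0, 0, by norm_num, by simp only [GoodAt]; norm_num; omega, by decide⟩, by omega, by omega⟩
      · exact ⟨⟨31, 16, 1, 0, 1, 1, 1, 1, 0, 0, by norm_num, by simp only [GoodAt]; norm_num; omega, by decide⟩, by omega, by omega⟩
      · exact ⟨⟨32, 16, 0, 1, 1, 0, 1, 1, 0, 0, by norm_num, by simp only [GoodAt]; norm_num; omega, by decide⟩, by omega, by omega⟩
      · exact ⟨⟨33, 17, 1, 1, 0, 1, 1, 0, 0, 1, by norm_num, by simp only [GoodAt]; norm_num; omega, by decide⟩, by omega, by omega⟩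
      · exact ⟨⟨34, 17, 1, 0, 1, 0, 1, 0, 0, 1, by norm_num, by simp only [GoodAt]; norm_num; omega, by decide⟩, by omega, by omega⟩
      · exact ⟨⟨35, 18, 0, 1, 0, 1, 0, 0, 1, 0, by norm_num, by simp only [GoodAt]; norm_num; omega, by decide⟩, by omega, by omega⟩
      · exact ⟨⟨36, 18, 1, 0, 1, 0, 0, 0, 1, 0, by norm_num, by simp only [GoodAt]; norm_num; omega, by decide⟩, by omega, by omega⟩
      · exact ⟨⟨37, 19, 0, 1, 0, 0, 0, 1, 0, 1, by norm_num, by simp only [GoodAt]; norm_num; omega, by decide⟩, by omega, by omega⟩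
      · exact ⟨⟨38, 20, 1, 0, 0, 1, 1, 0, 1, 1, by norm_num, by simp only [GoodAt]; norm_num; omega, by decide⟩, by omega, by omega⟩
      · exact ⟨⟨39, 20, 0, 0, 1, 0, 1, 0, 1, 1, by norm_num, by simp only [GoodAt]; norm_num; omega, by decide⟩, by omega, by omega⟩
      · exact ⟨⟨40, 21, 0, 1, 0, 1, 0, 1, 1, 0, by norm_num, by simp only [GoodAt]; norm_num; omega, by decide⟩, by omega, by omega⟩
      · exact ⟨⟨41, 21, 1, 0, 1, 1, 0, 1, 1, 0, by norm_num, by simp only [GoodAt]; norm_num; omega, by decide⟩, by omega, by omega⟩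
      · exact ⟨⟨42, 21, 0, 1, 1, 0, 0, 1, 1, 0, by norm_num, by simp only [GoodAt]; norm_num; omega, by decide⟩, by omega, by omega⟩
      · exact ⟨⟨43, 22, 1, 1, 0, 1, 1, 1, 0, 1, by norm_num, by simp only [GoodAt]; norm_num; omega, by decide⟩, by omega, by omega⟩
      · exact ⟨⟨44, 22, 1, 0, 1, 0, 1, 1, 0, 1, by norm_num, by simp only [GoodAt]; norm_num; omega, by decide⟩, by omega, by omega⟩
      · exact ⟨⟨45, 23, 0, 1, 0, 1, 1, 0, 1, 0, by norm_num, by simp only [GoodAt]; norm_num; omega, by decide⟩, by omega, by omega⟩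
      · exact ⟨⟨46, 23, 1, 0, 1, 0, 1, 0, 1, 0, by norm_num, by simp only [GoodAt]; norm_num; omega, by decide⟩, by omega, by omega⟩
      · exact ⟨⟨47, 24, 0, 1, 0, 1, 0, 1, 0, 1, by norm_num, by simp only [GoodAt]; norm_num; omega, by decide⟩, by omega, by omega⟩
      · exact ⟨⟨48, 24, 1, 0, 1, 1, 0, 1, 0, 1, by norm_num, by simp only [GoodAt]; norm_num; omega, by decide⟩, by omega, by omega⟩
      · exact ⟨⟨49, 24, 0, 1, 1, 0, 0, 1, 0, 1, by norm_num, by simp only [GoodAt]; norm_num; omega, by decide⟩, by omega, by omega⟩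
      · exact ⟨⟨50, 25, 1, 1, 0, 0, 1, 0, 1, 1, by norm_num, by simp only [GoodAt]; norm_num; omega, by decide⟩, by omega, by omega⟩
      · exact ⟨⟨51, 26, 1, 0, 0, 1, 0, 1, 1, 0, by norm_num, by simp only [GoodAt]; norm_num; omega, by decide⟩, by omega, by omega⟩
      · exact ⟨⟨52, 26, 0, 0, 1, 0, 0, 1, 1, 0, by norm_num, by simp only [GoodAt]; norm_num; omega, by decide⟩, by omega, by omega⟩
      · exact ⟨⟨53, 27, 0, 1, 0, 1, 1, 1, 0, 0, by norm_num, by simp only [GoodAt]; norm_num; omega, by decide⟩, by omega, by omega⟩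
      · exact ⟨⟨54, 27, 1, 0, 1, 1, 1, 1, 0, 0, by norm_num, by simp only [GoodAt]; norm_num; omega, by decide⟩, by omega, by omega⟩
      · exact ⟨⟨55, 27, 0, 1, 1, 0, 1, 1, 0, 0, by norm_num, by simp only [GoodAt]; norm_num; omega, by decide⟩, by omega, by omega⟩
      · exact ⟨⟨56, 28, 1, 1, 0, 1, 1, 0, 0, 1, by norm_num, by simp only [GoodAt]; norm_num; omega, by decide⟩, by omega, by omega⟩
      · exact ⟨⟨57, 28, 1, 0, 1, 0, 1, 0, 0, 1, by norm_num, by simp only [GoodAt]; norm_num; omega, by decide⟩, by omega, by omega⟩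
      · exact ⟨⟨58, 29, 0, 1, 0, 1, 0, 0, 1, 0, by norm_num, by simp only [GoodAt]; norm_num; omega, by decide⟩, by omega, by omega⟩
      · exact ⟨⟨59, 29, 1, 0, 1, 0, 0, 0, 1, 0, by norm_num, by simp only [GoodAt]; norm_num; omega, by decide⟩, by omega, by omega⟩
      · exact ⟨⟨60, 30, 0, 1, 0, 0, 0, 1, 0, 1, by norm_num, by simp only [GoodAt]; norm_num; omega, by decide⟩, by omega, by omega⟩
      · exact ⟨⟨61, 31, 1, 0, 0, 1, 1, 0, 1, 1, by norm_num, by simp only [GoodAt]; norm_num; omega, by decide⟩, by omega, by omega⟩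
      · exact ⟨⟨62, 31, 0, 0, 1, 0, 1, 0, 1, 1, by norm_num, by simp only [GoodAt]; norm_num; omega, by decide⟩, by omega, by omega⟩
      · exact ⟨⟨63, 32, 0, 1, 0, 1, 0, 1, 1, 0, by norm_num, by simp only [GoodAt]; norm_num; omega, by decide⟩, by omega, by omega⟩
      · exact ⟨⟨64, 32, 1, 0, 1, 1, 0, 1, 1, 0, by norm_num, by simp only [GoodAt]; norm_num; omega, by decide⟩, by omega, by omega⟩
      · exact ⟨⟨65, 32, 0, 1, 1, 0, 0, 1, 1, 0, by norm_num, by simp only [GoodAt]; norm_num; omega, by decide⟩, by omega, by omega⟩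
      · exact ⟨⟨66, 33, 1, 1, 0, 1, 1, 1, 0, 1, by norm_num, by simp only [GoodAt]; norm_num; omega, by decide⟩, by omega, by omega⟩
      · exact ⟨⟨67, 33, 1, 0, 1, 0, 1, 1, 0, 1, by norm_num, by simp only [GoodAt]; norm_num; omega, by decide⟩, by omega, by omega⟩
      · exact ⟨⟨68, 34, 0, 1, 0, 1, 1, 0, 1, 0, by norm_num, by simp only [GoodAt]; norm_num; omega, by decide⟩, by omega, by omega⟩
      · exact ⟨⟨69, 34, 1, 0, 1, 0, 1, 0, 1, 0, by norm_num, by simp only [GoodAt]; norm_num; omega, by decide⟩, by omega, by omega⟩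
      · exact ⟨⟨70, 35, 0, 1, 0, 1, 0, 1, 0, 1, by norm_num, by simp only [GoodAt]; norm_num; omega, by decide⟩, by omega, by omega⟩
      · exact ⟨⟨71, 35, 1, 0, 1, 1, 0, 1, 0, 1, by norm_num, by simp only [GoodAt]; norm_num; omega, by decide⟩, by omega, by omega⟩
      · exact ⟨⟨72, 35, 0, 1, 1, 0, 0, 1, 0, 1, by norm_num, by simp only [GoodAt]; norm_num; omega, by decide⟩, by omega, by omega⟩
    · push_neg at hsmall
      obtain ⟨⟨c, a, w1, w2, w3, w4, p1, p2, p3, p4, hc, hg, hmem⟩, -, -⟩ :=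
        ih (n-1) (by omega) (by omega)
      obtain rfl : n = c + 5 := by omega
      have hb := hofInv_bits _ hmem
      simp only [PB, wp1, wp2, wp3, wp4, pp1, pp2, pp3, pp4, tstp] at hb
      obtain ⟨b1, b2, b3, b4, b5, b6, b7, b8, hsum, hwin1, hwin2⟩ := hb
      have hub := (ih (c+3) (by omega) (by omega)).2.1
      have hlb := (ih (c+3) (by omega) (by omega)).2.2
      have hstep := step_eq V hVrec c a w1 w2 w3 w4 p1 p2 p3 p4 (by omega)
        ⟨b1, b2, b3, b4⟩ hg
      obtain ⟨ha0, e1, e2, e3, e4, f1, f2, f3, f4⟩ := hg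
      obtain ⟨⟨c', a', q1, q2, q3, q4, r1, r2, r3, r4, hc', hg', hmem'⟩, -, -⟩ :=
        ih (a+4) (by omega) (by omega)
      obtain rfl : a = c' := by omega
      obtain ⟨ha', g1, g2, g3, g4, k1, k2, k3, k4⟩ := hg'
      obtain rfl : p1 = q1 := by omega
      obtain rfl : p2 = q2 := by omega
      obtain rfl : p3 = q3 := by omega
      obtain rfl : p4 = q4 := by omega
      have hb' := hofInv_bits _ hmem'
      simp only [PB, wp1, wp2, wp3, wp4, pp1, pp2, pp3, pp4, tstp] at hb'
      have hstep' := step_eq V hVrec a a' p1 p2 p3 p4 r1 r2 r3 r4 (by omega)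
        ⟨hb'.1, hb'.2.1, hb'.2.2.1, hb'.2.2.2.1⟩ ⟨ha', g1, g2, g3, g4, k1, k2, k3, k4⟩
      have hc2 := (ih (c+2) (by omega) (by omega)).2
      refine ⟨?_, by omega, by omega⟩
      rcases (by omega : w4 = 0 ∨ w4 = 1) with hw4 | hw4
      · refine ⟨c+1, a+1, w2, w3, w4, hofStp w1 w2 w3 w4 p1 p2 p3 p4,
          p2, p3, p4, hofStp p1 p2 p3 p4 r1 r2 r3 r4, by omega, ?_, ?_⟩
        · refine ⟨?_, ?_, ?_, ?_, ?_, ?_, ?_, ?_, ?_⟩ <;>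
            (try (simp only [add_assoc]; norm_num)) <;> omega
        · have hm0 := hofInv_step0 _ hmem _ hmem'
          simp only [PS0, wp1, wp2, wp3, wp4, pp1, pp2, pp3, pp4, tstp,
            eq_self_iff_true, true_implies] at hm0
          exact hm0 hw4
      · refine ⟨c+1, a, w2, w3, w4, hofStp w1 w2 w3 w4 p1 p2 p3 p4,
          p1, p2, p3, p4, by omega, ?_, ?_⟩
        · refine ⟨?_, ?_, ?_, ?_, ?_, ?_, ?_, ?_, ?_⟩ <;>
            (try (simp only [add_assoc]; norm_num)) <;> omega
        · have hm1 := hofInv_step1 _ hmem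
          simp only [PS1, wp1, wp2, wp3, wp4, pp1, pp2, pp3, pp4, tstp] at hm1
          exact hm1 hw4
  have slow : ∀ n, 1 ≤ n → V (n + 1) = V n ∨ V (n + 1) = V n + 1 := by
    intro n hn
    by_cases hsm : n ≤ 25
    · interval_cases n <;> simp only [Nat.reduceAdd] <;> omega
    · obtain ⟨⟨c, a, w1, w2, w3, w4, p1, p2, p3, p4, hc, hg, hmem⟩, -, -⟩ :=
        key (n+4) (by omega)
      obtain rfl : c = n := by omega
      have hb := hofInv_bits _ hmem
      simp only [PB, wp1, wp2, wp3, wp4, pp1, pp2, pp3, pp4, tstp] at hb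
      obtain ⟨-, g1, -, -, -, -, -, -, -⟩ := hg
      omega
  have pos : ∀ k, 1 ≤ k → 1 ≤ V k ∧ V k ≤ k := by
    intro k hk
    induction k with
    | zero => omega
    | succ k ihk =>
      by_cases hk0 : k = 0
      · subst hk0; simp only [Nat.reduceAdd]; omega
      · have h1 := ihk (by omega)
        have h2 := slow k (by omega)
        omega
  have mono : ∀ i j, 1 ≤ i → i ≤ j → V i ≤ V j := by
    intro i j hi hij
    obtain ⟨d, rfl⟩ := Nat.exists_eq_add_of_le hij
    clear hij
    induction d with
    | zero => simp
    | succ d ihd =>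
      have h1 := slow (i+d) (by omega)
      rw [show i + (d+1) = i + d + 1 by omega]
      omega
  have grow : ∀ m, m ≤ V (30 + 4*m) := by
    intro m
    induction m with
    | zero => omega
    | succ m ihm =>
      obtain ⟨⟨c, a, w1, w2, w3, w4, p1, p2, p3, p4, hc, hg, hmem⟩, -, -⟩ :=
        key (30 + 4*(m+1)) (by omega)
      obtain rfl : c = 30 + 4*m := by omega
      have hb := hofInv_bits _ hmem
      simp only [PB, wp1, wp2, wp3, wp4, pp1, pp2, pp3, pp4, tstp] at hb
      obtain ⟨-, g1, g2, g3, g4, -, -, -, -⟩ := hg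
      rw [show (30:ℕ) + 4*(m+1) = 30 + 4*m + 4 by ring]
      omega
  have unb : ∀ m : ℕ, ∃ n : ℕ, 1 ≤ n ∧ m ≤ V n := by
    intro m
    exact ⟨30 + 4*m, by omega, grow m⟩
  refine ⟨?_, slow, unb, ?_⟩
  · intro n hn
    have A := pos (n-1) (by omega)
    have B := pos (n-4) (by omega)
    omega
  · intro m hm
    induction m with
    | zero => exact absurd hm (by omega)
    | succ m ihm =>
      by_cases hm0 : m = 0
      · exact ⟨1, le_refl 1, by omega⟩
      · obtain ⟨n, hn1, hvn⟩ := ihm (by omega)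
        obtain ⟨Nn, hN1, hNm⟩ := unb (m+1)
        have hnN : n ≤ Nn := by
          by_contra hcon
          push_neg at hcon
          have := mono Nn n hN1 (by omega)
          omega
        have walk : ∀ j, (∃ k, 1 ≤ k ∧ V k = m + 1) ∨ V (n + j) ≤ m := by
          intro j
          induction j with
          | zero => right; rw [Nat.add_zero]; omega
          | succ j ihj =>
            rcases ihj with h | h
            · left; exact h
            · rw [show n + (j+1) = n + j + 1 by omega]
              rcases slow (n+j) (by omega) with h2 | h2
              · right; omega
              · rcases Nat.lt_or_ge (V (n+j)) m with h3 | h3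
                · right; omega
                · exact Or.inl ⟨n+j+1, by omega, by omega⟩
        rcases walk (Nn - n) with h | h
        · exact h
        · exfalso
          rw [show n + (Nn - n) = Nn by omega] at h
          omega
end

section
/- Let V : ℕ → ℤ be defined by the initial conditions V(1..12) = 5, 4, 0, 0, 0, 5, 0, 5, 5, 1, 5, 4 and V(n) = V(n - V(n-1)) + V(n - V(n-4)) for n ≥ 13. Then V is well-defined for all n, and for all n ≥ 13 it is eventually periodic with quasi-period 5 following the pattern constant, constant, constant, linear, linear: explicitly, there exist integers c₀, c₁, c₂ and integers a₃, b₃, a₄, b₄ and an index N such that for all k with 5k ≥ N, V(5k) = c₀, V(5k+1) = c₁, V(5k+2) = c₂, V(5k+3) = a₃ k + b₃, V(5k+4) = a₄ k + b₄. -/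
/-- The V-recurrence with initial conditions ⟨5,4,0,0,0,5,0,5,5,1,5,4⟩ is
well-defined for all n and eventually an interleaving of period 5 with
pattern C,C,C,L,L. -/
theorem stmt_12 (V : ℕ → ℤ)
    (hV1 : V 1 = 5) (hV2 : V 2 = 4) (hV3 : V 3 = 0) (hV4 : V 4 = 0)
    (hV5 : V 5 = 0) (hV6 : V 6 = 5) (hV7 : V 7 = 0) (hV8 : V 8 = 5)
    (hV9 : V 9 = 5) (hV10 : V 10 = 1) (hV11 : V 11 = 5) (hV12 : V 12 = 4)
    (hVrec : ∀ n : ℕ, 13 ≤ n →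
      V n = V ((n : ℤ) - V (n - 1)).toNat + V ((n : ℤ) - V (n - 4)).toNat) :
    (∀ n : ℕ, 13 ≤ n →
      (1 ≤ (n : ℤ) - V (n - 1) ∧ (n : ℤ) - V (n - 1) ≤ (n : ℤ) - 1) ∧
      (1 ≤ (n : ℤ) - V (n - 4) ∧ (n : ℤ) - V (n - 4) ≤ (n : ℤ) - 1)) ∧
    (∃ c₀ c₁ c₂ a₃ b₃ a₄ b₄ : ℤ, ∃ N : ℕ, ∀ k : ℕ, N ≤ 5 * k →
      V (5 * k) = c₀ ∧
      V (5 * k + 1) = c₁ ∧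
      V (5 * k + 2) = c₂ ∧
      V (5 * k + 3) = a₃ * (k : ℤ) + b₃ ∧
      V (5 * k + 4) = a₄ * (k : ℤ) + b₄) := by
  have key : ∀ q : ℕ, V (5*q+13) = 5*q+10 ∧ V (5*q+14) = 5*q+10 ∧
      V (5*q+15) = 1 ∧ V (5*q+16) = 5 ∧ V (5*q+17) = 4 := by
    intro q
    induction q with
    | zero =>
      have h13 : V 13 = 10 := by
        have h := hVrec 13 (by norm_num)
        norm_num [hV12, hV9, hV8] at h
        rw [show ((9:ℤ)).toNat = 9 from rfl, show ((8:ℤ)).toNat = 8 from rfl] at h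
        rw [hV9, hV8] at h; omega
      have h14 : V 14 = 10 := by
        have h := hVrec 14 (by norm_num)
        norm_num [h13, hV10] at h
        rw [show ((4:ℤ)).toNat = 4 from rfl, show ((13:ℤ)).toNat = 13 from rfl] at h
        rw [hV4, h13] at h; omega
      have h15 : V 15 = 1 := by
        have h := hVrec 15 (by norm_num)
        norm_num [h14, hV11] at h
        rw [show ((5:ℤ)).toNat = 5 from rfl, show ((10:ℤ)).toNat = 10 from rfl] at h
        rw [hV5, hV10] at h; omega
      have h16 : V 16 = 5 := by
        have h := hVrec 16 (by norm_num)
        norm_num [h15, hV12] at h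
        rw [show ((15:ℤ)).toNat = 15 from rfl, show ((12:ℤ)).toNat = 12 from rfl] at h
        rw [h15, hV12] at h; omega
      have h17 : V 17 = 4 := by
        have h := hVrec 17 (by norm_num)
        norm_num [h16, h13] at h
        rw [show ((12:ℤ)).toNat = 12 from rfl, show ((7:ℤ)).toNat = 7 from rfl] at h
        rw [hV12, hV7] at h; omega
      refine ⟨?_, ?_, ?_, ?_, ?_⟩ <;> norm_num [h13, h14, h15, h16, h17]
    | succ k ih =>
      obtain ⟨ih13, ih14, ih15, ih16, ih17⟩ := ih
      -- V (5k+18)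
      have h18 : V (5*k+18) = 5*k+15 := by
        have h := hVrec (5*k+18) (by omega)
        rw [show 5*k+18-1 = 5*k+17 by omega, show 5*k+18-4 = 5*k+14 by omega,
          ih17, ih14] at h
        rw [show (((5*k+18:ℕ):ℤ) - 4).toNat = 5*k+14 by omega,
          show (((5*k+18:ℕ):ℤ) - (5*(k:ℤ)+10)).toNat = 8 by omega, ih14, hV8] at h
        rw [h]; push_cast; ring
      have h19 : V (5*k+19) = 5*k+15 := by
        have h := hVrec (5*k+19) (by omega)
        rw [show 5*k+19-1 = 5*k+18 by omega, show 5*k+19-4 = 5*k+15 by omega,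
          h18, ih15] at h
        rw [show (((5*k+19:ℕ):ℤ) - (5*(k:ℤ)+15)).toNat = 4 by omega,
          show (((5*k+19:ℕ):ℤ) - 1).toNat = 5*k+18 by omega, hV4, h18] at h
        rw [h]; push_cast; ring
      have h20 : V (5*k+20) = 1 := by
        have h := hVrec (5*k+20) (by omega)
        rw [show 5*k+20-1 = 5*k+19 by omega, show 5*k+20-4 = 5*k+16 by omega,
          h19, ih16] at h
        rw [show (((5*k+20:ℕ):ℤ) - (5*(k:ℤ)+15)).toNat = 5 by omega,
          show (((5*k+20:ℕ):ℤ) - 5).toNat = 5*k+15 by omega, hV5, ih15] at h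
        omega
      have h21 : V (5*k+21) = 5 := by
        have h := hVrec (5*k+21) (by omega)
        rw [show 5*k+21-1 = 5*k+20 by omega, show 5*k+21-4 = 5*k+17 by omega,
          h20, ih17] at h
        rw [show (((5*k+21:ℕ):ℤ) - 1).toNat = 5*k+20 by omega,
          show (((5*k+21:ℕ):ℤ) - 4).toNat = 5*k+17 by omega, h20, ih17] at h
        omega
      have h22 : V (5*k+22) = 4 := by
        have h := hVrec (5*k+22) (by omega)
        rw [show 5*k+22-1 = 5*k+21 by omega, show 5*k+22-4 = 5*k+18 by omega,
          h21, h18] at h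
        rw [show (((5*k+22:ℕ):ℤ) - 5).toNat = 5*k+17 by omega,
          show (((5*k+22:ℕ):ℤ) - (5*(k:ℤ)+15)).toNat = 7 by omega, ih17, hV7] at h
        omega
      refine ⟨?_, ?_, ?_, ?_, ?_⟩
      · rw [show 5*(k+1)+13 = 5*k+18 by omega, h18]; push_cast; ring
      · rw [show 5*(k+1)+14 = 5*k+19 by omega, h19]; push_cast; ring
      · rw [show 5*(k+1)+15 = 5*k+20 by omega, h20]
      · rw [show 5*(k+1)+16 = 5*k+21 by omega, h21]
      · rw [show 5*(k+1)+17 = 5*k+22 by omega, h22]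
  have aux : ∀ m : ℕ, 9 ≤ m → 1 ≤ V m ∧ V m ≤ (m : ℤ) := by
    intro m hm
    rcases lt_or_ge m 13 with h | h
    · interval_cases m
      · rw [hV9]; norm_num
      · rw [hV10]; norm_num
      · rw [hV11]; norm_num
      · rw [hV12]; norm_num
    · obtain ⟨q, r, hr, hm'⟩ : ∃ q r, r < 5 ∧ m = 5*q+13+r :=
        ⟨(m-13)/5, (m-13)%5, by omega, by omega⟩
      obtain ⟨h1, h2, h3, h4, h5⟩ := key q
      subst hm'
      interval_cases r
      · rw [show 5*q+13+0 = 5*q+13 by omega, h1]; refine ⟨by omega, by push_cast; omega⟩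
      · rw [show 5*q+13+1 = 5*q+14 by omega, h2]; refine ⟨by omega, by push_cast; omega⟩
      · rw [show 5*q+13+2 = 5*q+15 by omega, h3]; refine ⟨by omega, by push_cast; omega⟩
      · rw [show 5*q+13+3 = 5*q+16 by omega, h4]; refine ⟨by omega, by push_cast; omega⟩
      · rw [show 5*q+13+4 = 5*q+17 by omega, h5]; refine ⟨by omega, by push_cast; omega⟩
  constructor
  · intro n hn
    obtain ⟨a1, a2⟩ := aux (n-1) (by omega)
    obtain ⟨b1, b2⟩ := aux (n-4) (by omega)
    refine ⟨⟨?_, ?_⟩, ?_, ?_⟩ <;> omega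
  · refine ⟨1, 5, 4, 5, 0, 5, 0, 15, fun k hk => ?_⟩
    obtain ⟨j, rfl⟩ : ∃ j, k = j + 3 := ⟨k - 3, by omega⟩
    obtain ⟨h1, h2, h3, h4, h5⟩ := key j
    obtain ⟨g1, g2, _, _, _⟩ := key (j+1)
    refine ⟨?_, ?_, ?_, ?_, ?_⟩
    · rw [show 5*(j+3) = 5*j+15 by omega, h3]
    · rw [show 5*(j+3)+1 = 5*j+16 by omega, h4]
    · rw [show 5*(j+3)+2 = 5*j+17 by omega, h5]
    · rw [show 5*(j+3)+3 = 5*(j+1)+13 by omega, g1]; push_cast; ring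
    · rw [show 5*(j+3)+4 = 5*(j+1)+14 by omega, g2]; push_cast; ring
end

section
/- Let H : ℕ → ℤ be defined by initial conditions H(1..11) = 2, 0, 5, 0, 0, 0, 5, 5, 5, 3, 2 and H(n) = H(n - H(n-2)) + H(n - H(n-3)) for n ≥ 12. Then H is well-defined for all n, and eventually consists of an interleaving of five subsequences along residues mod 5 following the pattern constant, constant, linear, constant, linear. -/
/-- The H-recurrence H(n)=H(n-H(n-2))+H(n-H(n-3)) with initial conditions
⟨2,0,5,0,0,0,5,5,5,3,2⟩ is well-defined for all n and eventually an
interleaving of period 5 with pattern C,C,L,C,L. -/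
theorem stmt_13 (H : ℕ → ℤ)
    (hH1 : H 1 = 2) (hH2 : H 2 = 0) (hH3 : H 3 = 5) (hH4 : H 4 = 0)
    (hH5 : H 5 = 0) (hH6 : H 6 = 0) (hH7 : H 7 = 5) (hH8 : H 8 = 5)
    (hH9 : H 9 = 5) (hH10 : H 10 = 3) (hH11 : H 11 = 2)
    (hHrec : ∀ n : ℕ, 12 ≤ n →
      H n = H ((n : ℤ) - H (n - 2)).toNat + H ((n : ℤ) - H (n - 3)).toNat) :
    (∀ n : ℕ, 12 ≤ n →
      (1 ≤ (n : ℤ) - H (n - 2) ∧ (n : ℤ) - H (n - 2) ≤ (n : ℤ) - 1) ∧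
      (1 ≤ (n : ℤ) - H (n - 3) ∧ (n : ℤ) - H (n - 3) ≤ (n : ℤ) - 1)) ∧
    (∃ c₀ c₁ a₂ b₂ c₃ a₄ b₄ : ℤ, ∃ N : ℕ, ∀ k : ℕ, N ≤ k →
      H (5 * k) = c₀ ∧
      H (5 * k + 1) = c₁ ∧
      H (5 * k + 2) = a₂ * (k : ℤ) + b₂ ∧
      H (5 * k + 3) = c₃ ∧
      H (5 * k + 4) = a₄ * (k : ℤ) + b₄) := by
  have key : ∀ k : ℕ, 2 ≤ k →
      H (5*k) = 3 ∧ H (5*k+1) = 2 ∧ H (5*k+2) = 5*(k:ℤ) ∧ H (5*k+3) = 5 ∧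
      H (5*k+4) = 5*(k:ℤ) := by
    intro k hk
    induction k, hk using Nat.le_induction with
    | base =>
      have r12 := hHrec 12 (by norm_num)
      norm_num at r12
      rw [hH10, hH9, show ((12:ℤ)-3).toNat = 9 from by omega,
        show ((12:ℤ)-5).toNat = 7 from by omega, hH9, hH7] at r12
      have r13 := hHrec 13 (by norm_num)
      norm_num at r13
      rw [hH11, hH10, show ((13:ℤ)-2).toNat = 11 from by omega,
        show ((13:ℤ)-3).toNat = 10 from by omega, hH11, hH10] at r13
      norm_num at r12 r13
      have r14 := hHrec 14 (by norm_num)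
      norm_num at r14
      rw [r12, hH11, show ((14:ℤ)-10).toNat = 4 from by omega,
        show ((14:ℤ)-2).toNat = 12 from by omega, hH4, r12] at r14
      norm_num
      exact ⟨hH10, hH11, by omega, by omega, by omega⟩
    | succ k hk ih =>
      obtain ⟨h0, h1, h2, h3, h4⟩ := ih
      have h5' : H (5*k+5) = 3 := by
        have r := hHrec (5*k+5) (by omega)
        rw [show 5*k+5-2 = 5*k+3 from by omega, show 5*k+5-3 = 5*k+2 from by omega,
          h3, h2, show (((5*k+5:ℕ):ℤ) - 5).toNat = 5*k from by omega,
          show (((5*k+5:ℕ):ℤ) - 5*(k:ℤ)).toNat = 5 from by omega, h0, hH5] at r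
        omega
      have h6' : H (5*k+6) = 2 := by
        have r := hHrec (5*k+6) (by omega)
        rw [show 5*k+6-2 = 5*k+4 from by omega, show 5*k+6-3 = 5*k+3 from by omega,
          h4, h3, show (((5*k+6:ℕ):ℤ) - 5*(k:ℤ)).toNat = 6 from by omega,
          show (((5*k+6:ℕ):ℤ) - 5).toNat = 5*k+1 from by omega, hH6, h1] at r
        omega
      have h7' : H (5*k+7) = 5*(k:ℤ)+5 := by
        have r := hHrec (5*k+7) (by omega)
        rw [show 5*k+7-2 = 5*k+5 from by omega, show 5*k+7-3 = 5*k+4 from by omega,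
          h5', h4, show (((5*k+7:ℕ):ℤ) - 3).toNat = 5*k+4 from by omega,
          show (((5*k+7:ℕ):ℤ) - 5*(k:ℤ)).toNat = 7 from by omega, h4, hH7] at r
        omega
      have h8' : H (5*k+8) = 5 := by
        have r := hHrec (5*k+8) (by omega)
        rw [show 5*k+8-2 = 5*k+6 from by omega, show 5*k+8-3 = 5*k+5 from by omega,
          h6', h5', show (((5*k+8:ℕ):ℤ) - 2).toNat = 5*k+6 from by omega,
          show (((5*k+8:ℕ):ℤ) - 3).toNat = 5*k+5 from by omega, h6', h5'] at r
        omega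
      have h9' : H (5*k+9) = 5*(k:ℤ)+5 := by
        have r := hHrec (5*k+9) (by omega)
        rw [show 5*k+9-2 = 5*k+7 from by omega, show 5*k+9-3 = 5*k+6 from by omega,
          h7', h6', show (((5*k+9:ℕ):ℤ) - (5*(k:ℤ)+5)).toNat = 4 from by omega,
          show (((5*k+9:ℕ):ℤ) - 2).toNat = 5*k+7 from by omega, hH4, h7'] at r
        omega
      refine ⟨?_, ?_, ?_, ?_, ?_⟩
      · rw [show 5*(k+1) = 5*k+5 from by ring]; exact h5'
      · rw [show 5*(k+1)+1 = 5*k+6 from by ring]; exact h6'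
      · rw [show 5*(k+1)+2 = 5*k+7 from by ring, h7']; push_cast; ring
      · rw [show 5*(k+1)+3 = 5*k+8 from by ring]; exact h8'
      · rw [show 5*(k+1)+4 = 5*k+9 from by ring, h9']; push_cast; ring
  have bound : ∀ m : ℕ, 9 ≤ m → 1 ≤ H m ∧ H m ≤ (m:ℤ) := by
    intro m hm
    by_cases h9 : m = 9
    · rw [h9, hH9]; norm_num
    · have hq2 : 2 ≤ m / 5 := by omega
      obtain ⟨k0, k1, k2, k3, k4⟩ := key (m/5) hq2
      have hd := Nat.div_add_mod m 5
      have hr : m % 5 = 0 ∨ m % 5 = 1 ∨ m % 5 = 2 ∨ m % 5 = 3 ∨ m % 5 = 4 := by omega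
      rcases hr with h | h | h | h | h
      · rw [show m = 5*(m/5) from by omega, k0]; constructor <;> [norm_num; omega]
      · rw [show m = 5*(m/5)+1 from by omega, k1]; constructor <;> [norm_num; omega]
      · rw [show m = 5*(m/5)+2 from by omega, k2]; constructor <;> omega
      · rw [show m = 5*(m/5)+3 from by omega, k3]; constructor <;> [norm_num; omega]
      · rw [show m = 5*(m/5)+4 from by omega, k4]; constructor <;> omega
  constructor
  · intro n hn
    have b2 := bound (n-2) (by omega)
    have b3 := bound (n-3) (by omega)
    refine ⟨⟨?_, ?_⟩, ?_, ?_⟩ <;> omega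
  · refine ⟨3, 2, 5, 0, 5, 5, 0, 2, fun k hk => ?_⟩
    obtain ⟨k0, k1, k2, k3, k4⟩ := key k hk
    exact ⟨k0, k1, by omega, k3, by omega⟩
end

section
/- For the sequences f, g of the Golomb-like system f(1) = 0, g(n) = f(n - f(n)) + 1, f(n) = g(n - g(n-1)): for all n ≥ 1, f(n) = ⌊√(n-1)⌋ and g(n) = ⌈(−1 + √(4n−3))/2⌉ (equivalently g(n) is the unique i ≥ 1 with i² − i + 1 ≤ n ≤ i² + i); in particular f(n) ~ √n and g(n) ~ √n as n → ∞. -/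
/-!
`f(n) = ⌊√(n-1)⌋` takes the value `i` on `i² < n ≤ (i+1)²`, and the claimed `g` takes the
value `i` on the block `i² - i < n ≤ i² + i`. Splitting the block of `f` containing `n` near its
midpoint shows that these closed forms satisfy both recursions; since every recursive argument
lies in `[1, n)`, strong induction forces `f` and `g` to be these closed forms.
Both are within `1` of `√n`, which gives the asymptotics.
-/

open Filter Topology Asymptotics

theorem Nat.sqrt_sub_one_eq_iff {n i : ℕ} (hn : 1 ≤ n) :
    Nat.sqrt (n - 1) = i ↔ i ^ 2 < n ∧ n ≤ (i + 1) ^ 2 := by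
  rw [eq_comm, Nat.eq_sqrt']
  omega

/-- `⌈(√(4n-3) - 1)/2⌉`, the index `i` of the block `i(i-1) < n ≤ i(i+1)`. -/
def pronicIndex (n : ℕ) : ℕ := (Nat.sqrt (4 * n - 3) + 1) / 2

theorem pronicIndex_eq_iff {n i : ℕ} (hi : 1 ≤ i) :
    pronicIndex n = i ↔ i ^ 2 - i + 1 ≤ n ∧ n ≤ i ^ 2 + i := by
  have hodd : (2 * i - 1) ^ 2 + 4 * i = 4 * i ^ 2 + 1 := by
    obtain ⟨j, rfl⟩ := Nat.exists_eq_add_of_le hi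
    rw [show 2 * (1 + j) - 1 = 2 * j + 1 by omega]; ring
  have heven : (2 * i + 1) ^ 2 = 4 * i ^ 2 + 4 * i + 1 := by ring
  have hsq : i ≤ i ^ 2 := by nlinarith
  calc pronicIndex n = i
        ↔ 2 * i - 1 ≤ Nat.sqrt (4 * n - 3) ∧ Nat.sqrt (4 * n - 3) < 2 * i + 1 := by
          unfold pronicIndex; omega
    _ ↔ _ := by rw [Nat.le_sqrt', Nat.sqrt_lt']; omega

theorem one_le_pronicIndex {n : ℕ} (hn : 1 ≤ n) : 1 ≤ pronicIndex n := by
  have : 1 ≤ Nat.sqrt (4 * n - 3) := Nat.le_sqrt'.2 (by omega)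
  unfold pronicIndex; omega

theorem pronicIndex_block {n : ℕ} (hn : 1 ≤ n) :
    pronicIndex n ^ 2 - pronicIndex n + 1 ≤ n ∧ n ≤ pronicIndex n ^ 2 + pronicIndex n :=
  (pronicIndex_eq_iff (one_le_pronicIndex hn)).1 rfl

theorem pronicIndex_le_self (n : ℕ) : pronicIndex n ≤ n := by
  rcases Nat.eq_zero_or_pos n with rfl | hn
  · rfl
  · have h := (pronicIndex_block hn).1
    have : 2 * pronicIndex n ≤ pronicIndex n ^ 2 + 1 := by
      nlinarith [sq_nonneg (pronicIndex n - 1 : ℤ)]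
    omega

theorem pronicIndex_eq_sqrt_add_one {n : ℕ} (hn : 1 ≤ n) :
    pronicIndex n = Nat.sqrt (n - Nat.sqrt (n - 1) - 1) + 1 := by
  obtain ⟨i, hi⟩ : ∃ i, Nat.sqrt (n - 1) = i := ⟨_, rfl⟩
  obtain ⟨hlo, hhi⟩ := (Nat.sqrt_sub_one_eq_iff hn).1 hi
  have e : (i + 1) ^ 2 = i ^ 2 + 2 * i + 1 := by ring
  rw [hi]
  rcases le_or_gt n (i ^ 2 + i) with h | h
  · obtain ⟨j, rfl⟩ : ∃ j, i = j + 1 := Nat.exists_eq_succ_of_ne_zero (by rintro rfl; omega)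
    have e' : (j + 1) ^ 2 = j ^ 2 + 2 * j + 1 := by ring
    rw [(Nat.sqrt_sub_one_eq_iff (i := j) (by omega)).2 (by omega), pronicIndex_eq_iff (by omega)]
    omega
  · rw [(Nat.sqrt_sub_one_eq_iff (i := i) (by omega)).2 (by omega), pronicIndex_eq_iff (by omega)]
    omega

theorem sqrt_sub_one_eq_pronicIndex {n : ℕ} (hn : 2 ≤ n) :
    Nat.sqrt (n - 1) = pronicIndex (n - pronicIndex (n - 1)) := by
  obtain ⟨i, hi⟩ : ∃ i, Nat.sqrt (n - 1) = i := ⟨_, rfl⟩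
  obtain ⟨hlo, hhi⟩ := (Nat.sqrt_sub_one_eq_iff (by omega)).1 hi
  have e : (i + 1) ^ 2 = i ^ 2 + 2 * i + 1 := by ring
  have hi1 : 1 ≤ i := hi ▸ Nat.le_sqrt'.2 (by omega)
  have hsq : i ≤ i ^ 2 := by nlinarith
  rw [hi]
  rcases le_or_gt n (i ^ 2 + i + 1) with h | h
  · have hg : pronicIndex (n - 1) = i := (pronicIndex_eq_iff hi1).2 (by omega)
    rw [hg, eq_comm, pronicIndex_eq_iff hi1]
    omega
  · have hg : pronicIndex (n - 1) = i + 1 := (pronicIndex_eq_iff (by omega)).2 (by omega)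
    rw [hg, eq_comm, pronicIndex_eq_iff hi1]
    omega

theorem golomb_system_eq_closed_form {f g : ℕ → ℕ} (hf1 : f 1 = 0)
    (hg : ∀ n, 1 ≤ n → g n = f (n - f n) + 1)
    (hf : ∀ n, 2 ≤ n → f n = g (n - g (n - 1))) :
    ∀ n, 1 ≤ n → f n = Nat.sqrt (n - 1) ∧ g n = pronicIndex n := by
  intro n
  induction n using Nat.strong_induction_on with
  | _ n ih =>
    intro hn
    obtain rfl | hn2 := hn.eq_or_lt
    · exact ⟨hf1, by rw [hg 1 le_rfl, hf1, hf1]; rfl⟩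
    -- both recursive arguments lie in `[1, n)`
    have hgn1 : g (n - 1) = pronicIndex (n - 1) := (ih (n - 1) (by omega) (by omega)).2
    have hpos := one_le_pronicIndex (n := n - 1) (by omega)
    have hle := pronicIndex_le_self (n - 1)
    have hfn : f n = Nat.sqrt (n - 1) := by
      rw [hf n hn2, hgn1, (ih _ (by omega) (by omega)).2, sqrt_sub_one_eq_pronicIndex hn2]
    have hsqrt_pos : 1 ≤ Nat.sqrt (n - 1) := Nat.le_sqrt'.2 (by omega)
    have hsqrt_le := Nat.sqrt_le_self (n - 1)
    refine ⟨hfn, ?_⟩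
    rw [hg n hn, hfn, (ih _ (by omega) (by omega)).1, pronicIndex_eq_sqrt_add_one hn]

theorem abs_natCast_sub_sqrt_le_one {i n : ℕ} (h₁ : i ^ 2 + 1 ≤ n + 2 * i)
    (h₂ : n ≤ (i + 1) ^ 2) : |(i : ℝ) - √n| ≤ 1 := by
  have h₁' : ((i : ℝ) - 1) ^ 2 ≤ n := by
    have : ((i ^ 2 + 1 : ℕ) : ℝ) ≤ (n + 2 * i : ℕ) := by exact_mod_cast h₁
    push_cast at this; nlinarith
  have h₂' : (n : ℝ) ≤ (i + 1) ^ 2 := by exact_mod_cast h₂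
  have : (i : ℝ) - 1 ≤ √n := Real.le_sqrt_of_sq_le h₁'
  have : √n ≤ i + 1 := (Real.sqrt_le_left (by positivity)).2 h₂'
  rw [abs_le]; constructor <;> linarith

theorem abs_sqrt_sub_one_sub_sqrt_le_one {n : ℕ} (hn : 1 ≤ n) :
    |(Nat.sqrt (n - 1) : ℝ) - √n| ≤ 1 := by
  obtain ⟨hlo, hhi⟩ := (Nat.sqrt_sub_one_eq_iff hn).1 (rfl : Nat.sqrt (n - 1) = _)
  exact abs_natCast_sub_sqrt_le_one (by omega) hhi

theorem abs_pronicIndex_sub_sqrt_le_one {n : ℕ} (hn : 1 ≤ n) :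
    |(pronicIndex n : ℝ) - √n| ≤ 1 := by
  obtain ⟨hlo, hhi⟩ := pronicIndex_block hn
  have hsq : pronicIndex n ≤ pronicIndex n ^ 2 := Nat.le_self_pow two_ne_zero _
  exact abs_natCast_sub_sqrt_le_one (by omega) (by nlinarith)

theorem tendsto_div_sqrt_of_abs_sub_le {u : ℕ → ℝ} {C : ℝ}
    (h : ∀ᶠ n in atTop, |u n - √n| ≤ C) : Tendsto (fun n => u n / √n) atTop (𝓝 1) := by
  have hsqrt : Tendsto (fun n : ℕ => √n) atTop atTop :=
    Real.tendsto_sqrt_atTop.comp tendsto_natCast_atTop_atTop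
  have hequiv : u ~[atTop] fun n : ℕ => √n := by
    have hbdd : (u - fun n : ℕ => √n) =O[atTop] (fun _ => (1 : ℝ)) :=
      .of_bound C (h.mono fun n hn => by simpa using hn)
    exact hbdd.trans_isLittleO
      ((isLittleO_one_left_iff ℝ).2 (tendsto_norm_atTop_atTop.comp hsqrt))
  have hne : ∀ᶠ n : ℕ in atTop, √(n : ℝ) ≠ 0 :=
    (hsqrt.eventually_gt_atTop 0).mono fun _ h => h.ne'
  exact (isEquivalent_iff_tendsto_one hne).1 hequiv

/-- Closed forms for the Golomb-like system f(1)=0, g(n)=f(n-f(n))+1,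
f(n)=g(n-g(n-1)): f(n)=⌊√(n-1)⌋ and g(n) is the unique i ≥ 1 with
i²-i+1 ≤ n ≤ i²+i; in particular f(n) ~ √n and g(n) ~ √n. -/
theorem stmt_14 (f g : ℕ → ℕ)
    (hf1 : f 1 = 0)
    (hg : ∀ n, 1 ≤ n → g n = f (n - f n) + 1)
    (hf : ∀ n, 2 ≤ n → f n = g (n - g (n - 1))) :
    (∀ n, 1 ≤ n → f n = Nat.sqrt (n - 1)) ∧
    (∀ n, 1 ≤ n →
      1 ≤ g n ∧ (g n) ^ 2 - g n + 1 ≤ n ∧ n ≤ (g n) ^ 2 + g n ∧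
      ∀ i : ℕ, 1 ≤ i → i ^ 2 - i + 1 ≤ n → n ≤ i ^ 2 + i → i = g n) ∧
    Tendsto (fun n : ℕ => (f n : ℝ) / Real.sqrt n) atTop (nhds 1) ∧
    Tendsto (fun n : ℕ => (g n : ℝ) / Real.sqrt n) atTop (nhds 1) := by
  have hclosed := golomb_system_eq_closed_form hf1 hg hf
  have hf' n (hn : 1 ≤ n) := (hclosed n hn).1
  have hg' n (hn : 1 ≤ n) := (hclosed n hn).2
  refine ⟨hf', fun n hn => ?_, ?_, ?_⟩
  · obtain ⟨hlo, hhi⟩ := pronicIndex_block hn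
    rw [hg' n hn]
    exact ⟨one_le_pronicIndex hn, hlo, hhi,
      fun i hi h₁ h₂ => ((pronicIndex_eq_iff hi).2 ⟨h₁, h₂⟩).symm⟩
  · refine tendsto_div_sqrt_of_abs_sub_le (C := 1) ?_
    filter_upwards [eventually_ge_atTop 1] with n hn
    rw [hf' n hn]
    exact abs_sqrt_sub_one_sub_sqrt_le_one hn
  · refine tendsto_div_sqrt_of_abs_sub_le (C := 1) ?_
    filter_upwards [eventually_ge_atTop 1] with n hn
    rw [hg' n hn]
    exact abs_pronicIndex_sub_sqrt_le_one hn
end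

section
/- Suppose f, g : ℕ → ℤ satisfy, for n beyond some index, f(n) = g(n - g(n-1) - c_f) + d_f and g(n) = f(n - f(n) - c_g) + d_g with d_f + d_g > 0, and suppose both sequences are well-defined, nonnegative, and slow (successive differences in {0,1}) and unbounded. If f(n)/√n and g(n)/√n both converge to a common limit L, then L = √(d_f + d_g). -/
/-!
Iterating the system twice gives `f n = f (q n) + (d_f + d_g)` with `q n = p - f p - c_g` and
`p = n - g (n - 1) - c_f`; then `n - q n ≈ g (n - 1) + f p ≈ 2 L √n`, so `√n - √(q n) → L`.
As `q n < n`, whenever `a n - a (q n) ≤ b n - b (q n)` for large `n`, descent along `q` bounds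
`b - a` from below, so `lim a / √n ≤ lim b / √n`. Comparing `f` with `c √·` in this way gives
`c ≤ L` when `c L < d_f + d_g` and `L ≤ c` when `c L > d_f + d_g`: hence `L > 0` and
`L = (d_f + d_g) / L`.
-/

open Filter Topology

lemma tendsto_sqrt_natCast_atTop : Tendsto (fun n : ℕ => √(n : ℝ)) atTop atTop :=
  Real.tendsto_sqrt_atTop.comp tendsto_natCast_atTop_atTop

lemma tendsto_const_mul_sqrt_div_sqrt (c : ℝ) :
    Tendsto (fun n : ℕ => c * √(n : ℝ) / √(n : ℝ)) atTop (𝓝 c) :=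
  tendsto_const_nhds.congr' <| (eventually_gt_atTop 0).mono fun _ hn =>
    (mul_div_cancel_right₀ _ (Real.sqrt_pos.2 (Nat.cast_pos.2 hn)).ne').symm

section SqrtScale

variable {x : ℕ → ℝ} {ℓ : ℝ}

lemma tendsto_div_natCast_of_tendsto_div_sqrt
    (hx : Tendsto (fun n : ℕ => x n / √(n : ℝ)) atTop (𝓝 ℓ)) :
    Tendsto (fun n : ℕ => x n / n) atTop (𝓝 0) := by
  have h := hx.mul (tendsto_inv_atTop_zero.comp tendsto_sqrt_natCast_atTop)
  rw [mul_zero] at h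
  refine h.congr fun n => ?_
  rw [Function.comp_apply, ← div_eq_mul_inv, div_div, Real.mul_self_sqrt (Nat.cast_nonneg n)]

lemma tendsto_div_natCast_of_tendsto_sub_div_sqrt
    (hx : Tendsto (fun n : ℕ => ((n : ℝ) - x n) / √(n : ℝ)) atTop (𝓝 ℓ)) :
    Tendsto (fun n : ℕ => x n / n) atTop (𝓝 1) := by
  have h := tendsto_const_nhds (x := (1 : ℝ)) |>.sub (tendsto_div_natCast_of_tendsto_div_sqrt hx)
  rw [sub_zero] at h
  refine h.congr' ?_
  filter_upwards [eventually_ne_atTop 0] with n hn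
  field_simp
  ring

lemma tendsto_atTop_of_tendsto_div_natCast {r : ℕ → ℕ}
    (hr : Tendsto (fun n : ℕ => (r n : ℝ) / n) atTop (𝓝 1)) : Tendsto r atTop atTop := by
  rw [← tendsto_natCast_atTop_iff (R := ℝ)]
  refine (hr.pos_mul_atTop one_pos tendsto_natCast_atTop_atTop).congr' ?_
  filter_upwards [eventually_ne_atTop 0] with n hn
  field_simp

lemma tendsto_sqrt_div_sqrt {r : ℕ → ℕ} (hr : Tendsto (fun n : ℕ => (r n : ℝ) / n) atTop (𝓝 1)) :
    Tendsto (fun n : ℕ => √(r n : ℝ) / √(n : ℝ)) atTop (𝓝 1) := by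
  simpa [Real.sqrt_div' _ (Nat.cast_nonneg _)] using hr.sqrt

lemma tendsto_comp_div_sqrt (hx : Tendsto (fun n : ℕ => x n / √(n : ℝ)) atTop (𝓝 ℓ))
    {r : ℕ → ℕ} (hr : Tendsto (fun n : ℕ => (r n : ℝ) / n) atTop (𝓝 1)) :
    Tendsto (fun n : ℕ => x (r n) / √(n : ℝ)) atTop (𝓝 ℓ) := by
  have hr_top := tendsto_atTop_of_tendsto_div_natCast hr
  have h := (hx.comp hr_top).mul (tendsto_sqrt_div_sqrt hr)
  rw [mul_one] at h
  refine h.congr' ?_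
  filter_upwards [hr_top.eventually_gt_atTop 0] with n hn
  have : √(r n : ℝ) ≠ 0 := by positivity
  simp only [Function.comp_apply]
  field_simp

lemma eventually_toNat_eq {z : ℕ → ℤ}
    (hz : Tendsto (fun n : ℕ => ((n : ℝ) - z n) / √(n : ℝ)) atTop (𝓝 ℓ)) :
    ∀ᶠ n in atTop, ((z n).toNat : ℤ) = z n := by
  filter_upwards [(tendsto_div_natCast_of_tendsto_sub_div_sqrt hz).eventually_const_lt one_pos]
    with n hn
  refine Int.toNat_of_nonneg ?_
  by_contra! hneg
  have : (z n : ℝ) / n ≤ 0 :=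
    div_nonpos_of_nonpos_of_nonneg (by exact_mod_cast hneg.le) (Nat.cast_nonneg n)
  linarith

lemma tendsto_sub_toNat_sub_sub_div_sqrt {y : ℕ → ℤ} (c : ℤ)
    (hy : Tendsto (fun n : ℕ => (y n : ℝ) / √(n : ℝ)) atTop (𝓝 ℓ)) :
    Tendsto (fun n : ℕ => ((n : ℝ) - (((n : ℤ) - y n - c).toNat : ℕ)) / √(n : ℝ)) atTop (𝓝 ℓ) := by
  have hz : Tendsto (fun n : ℕ => ((n : ℝ) - (((n : ℤ) - y n - c : ℤ) : ℝ)) / √(n : ℝ))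
      atTop (𝓝 ℓ) := by
    have h := hy.add (tendsto_const_nhds (x := (c : ℝ)) |>.div_atTop tendsto_sqrt_natCast_atTop)
    rw [add_zero] at h
    refine h.congr fun n => ?_
    push_cast
    ring
  refine hz.congr' ?_
  filter_upwards [eventually_toNat_eq hz] with n hn
  have hcast : ((((n : ℤ) - y n - c).toNat : ℕ) : ℝ) = (((n : ℤ) - y n - c : ℤ) : ℝ) := by
    exact_mod_cast hn
  rw [hcast]

lemma tendsto_sqrt_sub_sqrt {r : ℕ → ℕ}
    (hr : Tendsto (fun n : ℕ => ((n : ℝ) - r n) / √(n : ℝ)) atTop (𝓝 ℓ)) :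
    Tendsto (fun n : ℕ => √(n : ℝ) - √(r n : ℝ)) atTop (𝓝 (ℓ / 2)) := by
  have h := hr.div ((tendsto_const_nhds (x := (1 : ℝ))).add
    (tendsto_sqrt_div_sqrt (tendsto_div_natCast_of_tendsto_sub_div_sqrt hr))) (by norm_num)
  rw [one_add_one_eq_two] at h
  refine h.congr' ?_
  filter_upwards [eventually_gt_atTop 0] with n hn
  have hn' : 0 < √(n : ℝ) := Real.sqrt_pos.2 (by exact_mod_cast hn)
  have hdiff : (n : ℝ) - r n = (√(n : ℝ) - √(r n : ℝ)) * (√(n : ℝ) + √(r n : ℝ)) := by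
    rw [mul_comm, ← sq_sub_sq, Real.sq_sqrt (Nat.cast_nonneg _), Real.sq_sqrt (Nat.cast_nonneg _)]
  simp only [Pi.div_apply, hdiff]
  field_simp

end SqrtScale

lemma bddBelow_range_of_eventually_le_comp {ψ : ℕ → ℝ} {k : ℕ → ℕ}
    (h : ∀ᶠ m in atTop, k m < m ∧ ψ (k m) ≤ ψ m) : BddBelow (Set.range ψ) := by
  obtain ⟨N, hN⟩ := eventually_atTop.mp h
  obtain ⟨C, hC⟩ := ((Set.finite_lt_nat N).image ψ).bddBelow
  refine ⟨C, Set.forall_mem_range.2 fun m => ?_⟩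
  induction m using Nat.strong_induction_on with
  | _ m ih =>
    rcases lt_or_ge m N with hm | hm
    · exact hC ⟨m, hm, rfl⟩
    · obtain ⟨hk, hψ⟩ := hN m hm
      exact (ih _ hk).trans hψ

lemma le_of_eventually_sub_le_sub {a b : ℕ → ℝ} {k : ℕ → ℕ} {α β : ℝ}
    (hk : ∀ᶠ m in atTop, k m < m) (hab : ∀ᶠ m in atTop, a m - a (k m) ≤ b m - b (k m))
    (ha : Tendsto (fun n : ℕ => a n / √(n : ℝ)) atTop (𝓝 α))
    (hb : Tendsto (fun n : ℕ => b n / √(n : ℝ)) atTop (𝓝 β)) : α ≤ β := by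
  obtain ⟨C, hC⟩ := bddBelow_range_of_eventually_le_comp (ψ := b - a)
    (hk.and (hab.mono fun m h => by simp only [Pi.sub_apply]; linarith))
  have hlim : Tendsto (fun n : ℕ => (b n - a n) / √(n : ℝ)) atTop (𝓝 (β - α)) := by
    simpa only [sub_div] using hb.sub ha
  rw [← sub_nonneg]
  refine le_of_tendsto_of_tendsto
    (tendsto_const_nhds (x := C) |>.div_atTop tendsto_sqrt_natCast_atTop) hlim ?_
  exact Eventually.of_forall fun n =>
    div_le_div_of_nonneg_right (hC ⟨n, rfl⟩) (Real.sqrt_nonneg _)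

lemma exists_descent_of_golomb {f g : ℕ → ℤ} {cf df cg dg : ℤ} {N : ℕ} {L : ℝ}
    (hfrec : ∀ n : ℕ, N < n → f n = g ((n : ℤ) - g (n - 1) - cf).toNat + df)
    (hgrec : ∀ n : ℕ, N < n → g n = f ((n : ℤ) - f n - cg).toNat + dg)
    (hfL : Tendsto (fun n : ℕ => (f n : ℝ) / √(n : ℝ)) atTop (𝓝 L))
    (hgL : Tendsto (fun n : ℕ => (g n : ℝ) / √(n : ℝ)) atTop (𝓝 L)) :
    ∃ q : ℕ → ℕ, (∀ᶠ n in atTop, f n = f (q n) + (df + dg)) ∧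
      Tendsto (fun n : ℕ => √(n : ℝ) - √(q n : ℝ)) atTop (𝓝 L) := by
  set p : ℕ → ℕ := fun n => ((n : ℤ) - g (n - 1) - cf).toNat
  set k : ℕ → ℕ := fun m => ((m : ℤ) - f m - cg).toNat
  have hpred : Tendsto (fun n : ℕ => ((n - 1 : ℕ) : ℝ) / n) atTop (𝓝 1) := by
    refine tendsto_div_natCast_of_tendsto_sub_div_sqrt (ℓ := 0) ?_
    refine (tendsto_const_nhds (x := (1 : ℝ)) |>.div_atTop tendsto_sqrt_natCast_atTop).congr' ?_
    filter_upwards [eventually_ge_atTop 1] with n hn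
    rw [Nat.cast_sub hn, Nat.cast_one, sub_sub_cancel]
  have hp : Tendsto (fun n : ℕ => ((n : ℝ) - p n) / √(n : ℝ)) atTop (𝓝 L) :=
    tendsto_sub_toNat_sub_sub_div_sqrt cf (tendsto_comp_div_sqrt hgL hpred)
  have hk : Tendsto (fun m : ℕ => ((m : ℝ) - k m) / √(m : ℝ)) atTop (𝓝 L) :=
    tendsto_sub_toNat_sub_sub_div_sqrt cg hfL
  have hp_ratio := tendsto_div_natCast_of_tendsto_sub_div_sqrt hp
  refine ⟨fun n => k (p n), ?_, ?_⟩
  · filter_upwards [eventually_gt_atTop N,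
      (tendsto_atTop_of_tendsto_div_natCast hp_ratio).eventually_gt_atTop N] with n hn hpn
    rw [hfrec n hn, hgrec _ hpn]
    dsimp only [k]
    ring
  · have hq : Tendsto (fun n : ℕ => ((n : ℝ) - k (p n)) / √(n : ℝ)) atTop (𝓝 (2 * L)) := by
      rw [two_mul]
      exact (hp.add (tendsto_comp_div_sqrt hk hp_ratio)).congr fun n => by ring
    convert tendsto_sqrt_sub_sqrt hq using 2
    ring

theorem stmt_15_general (f g : ℕ → ℤ) (cf df cg dg : ℤ) (N : ℕ) (L : ℝ)
    (hd : 0 < df + dg)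
    (hfrec : ∀ n : ℕ, N < n → f n = g ((n : ℤ) - g (n - 1) - cf).toNat + df)
    (hgrec : ∀ n : ℕ, N < n → g n = f ((n : ℤ) - f n - cg).toNat + dg)
    (hfslow : ∀ n : ℕ, f (n + 1) = f n ∨ f (n + 1) = f n + 1)
    (hfL : Tendsto (fun n : ℕ => (f n : ℝ) / Real.sqrt n) atTop (nhds L))
    (hgL : Tendsto (fun n : ℕ => (g n : ℝ) / Real.sqrt n) atTop (nhds L)) :
    L = Real.sqrt ((df : ℝ) + (dg : ℝ)) := by
  obtain ⟨q, hstep, hgap⟩ := exists_descent_of_golomb hfrec hgrec hfL hgL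
  have hmono : Monotone f :=
    monotone_nat_of_le_succ fun n => by rcases hfslow n with h | h <;> omega
  have hq : ∀ᶠ n in atTop, q n < n := hstep.mono fun n h => hmono.reflect_lt (by omega)
  have hD : (0 : ℝ) < df + dg := by exact_mod_cast hd
  set D : ℝ := (df : ℝ) + dg
  have hstepR : ∀ᶠ n in atTop, (f n : ℝ) - f (q n) = D := hstep.mono fun n h => by
    rw [h]; push_cast; ring
  have lower (c : ℝ) (hcL : c * L < D) : c ≤ L := by
    refine le_of_eventually_sub_le_sub hq ?_ (tendsto_const_mul_sqrt_div_sqrt c) hfL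
    filter_upwards [hstepR, (hgap.const_mul c).eventually_lt_const hcL] with n hn hn'
    linarith [mul_sub c √(n : ℝ) √(q n : ℝ)]
  have upper (c : ℝ) (hcL : D < c * L) : L ≤ c := by
    refine le_of_eventually_sub_le_sub hq ?_ hfL (tendsto_const_mul_sqrt_div_sqrt c)
    filter_upwards [hstepR, (hgap.const_mul c).eventually_const_lt hcL] with n hn hn'
    linarith [mul_sub c √(n : ℝ) √(q n : ℝ)]
  have hL : 0 < L := by
    by_contra! hL
    linarith [lower 1 (by linarith)]
  have hLD : L = D / L := le_antisymm
    (le_of_forall_gt_imp_ge_of_dense fun c hc => upper c ((div_lt_iff₀ hL).1 hc))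
    (le_of_forall_lt_imp_le_of_dense fun c hc => lower c ((lt_div_iff₀ hL).1 hc))
  rw [← (eq_div_iff hL.ne').1 hLD, Real.sqrt_mul_self hL.le]

/-- Conditional version of the Golomb-like growth conjecture: if f, g satisfy a
Golomb-like system with parameters c_f, d_f, c_g, d_g (d_f + d_g > 0) beyond some
index, are nonnegative, slow and unbounded, and f(n)/√n and g(n)/√n converge to a
common limit L, then L = √(d_f + d_g). -/
theorem stmt_15 (f g : ℕ → ℤ) (cf df cg dg : ℤ) (N : ℕ) (L : ℝ)
    (hd : 0 < df + dg)
    (hfrec : ∀ n : ℕ, N < n → f n = g ((n : ℤ) - g (n - 1) - cf).toNat + df)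
    (hgrec : ∀ n : ℕ, N < n → g n = f ((n : ℤ) - f n - cg).toNat + dg)
    (hfpos : ∀ n : ℕ, 0 ≤ f n) (hgpos : ∀ n : ℕ, 0 ≤ g n)
    (hfslow : ∀ n : ℕ, f (n + 1) = f n ∨ f (n + 1) = f n + 1)
    (hgslow : ∀ n : ℕ, g (n + 1) = g n ∨ g (n + 1) = g n + 1)
    (hfunbd : ∀ M : ℤ, ∃ n : ℕ, M ≤ f n)
    (hgunbd : ∀ M : ℤ, ∃ n : ℕ, M ≤ g n)
    (hfL : Tendsto (fun n : ℕ => (f n : ℝ) / Real.sqrt n) atTop (nhds L))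
    (hgL : Tendsto (fun n : ℕ => (g n : ℝ) / Real.sqrt n) atTop (nhds L)) :
    L = Real.sqrt ((df : ℝ) + (dg : ℝ)) :=
  stmt_15_general f g cf df cg dg N L hd hfrec hgrec hfslow hfL hgL
end

section
/- For the sequences f, g of Proposition fg2 (f(1)=0, f(2)=f(3)=1, g(1)=g(2)=1, g(3)=2, f(n)=g(n-g(n-1)), g(n)=f(n-f(n))+2 for n ≥ 4): for all n ≥ 4, f(n) ≤ n and g(n) ≤ n, and both sequences are unbounded with f(n) → ∞ and g(n) → ∞. -/
/-!
Both sequences are slow: successive differences lie in `{0, 1}`. Indeed, if `a` is slow then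
`n ↦ n + c - a n` advances by `0` or `1` at each step, so `n ↦ b (n + c - a n)` inherits slowness
from `b`; a joint strong induction over the two recurrences gives slowness together with
`1 ≤ g n ≤ n` and `f n < n`. A slow sequence either tends to infinity or is eventually constant.
If `f` were eventually `u`, then `n - f n → ∞` would make `g` eventually `u + 2`, and in turn
`n - g (n - 1) → ∞` would make `f` eventually `u + 2`; symmetrically for `g`.
-/

open Filter

def SlowAt (u : ℕ → ℕ) (n : ℕ) : Prop := u n ≤ u (n + 1) ∧ u (n + 1) ≤ u n + 1

theorem SlowAt.apply_sub {a b : ℕ → ℕ} {c n : ℕ} (ha : SlowAt a n) (han : a n ≤ n + c)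
    (hb : SlowAt b (n + c - a n)) : SlowAt (fun k => b (k + c - a k)) n := by
  unfold SlowAt at *
  dsimp only
  rcases (show a (n + 1) = a n ∨ a (n + 1) = a n + 1 by omega) with hstay | hstep
  · rw [show n + 1 + c - a (n + 1) = n + c - a n + 1 by omega]
    exact hb
  · rw [show n + 1 + c - a (n + 1) = n + c - a n by omega]
    omega

theorem Nat.tendsto_atTop_or_eventually_eq_of_le_succ {u : ℕ → ℕ} {k : ℕ}
    (hu : ∀ n, k ≤ n → u n ≤ u (n + 1)) :
    Tendsto u atTop atTop ∨ ∃ v, ∀ᶠ n in atTop, u n = v := by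
  have hmono : Monotone fun n => u (n + k) :=
    monotone_nat_of_le_succ fun n => by simpa [Nat.add_right_comm] using hu (n + k) (by omega)
  by_cases hbdd : BddAbove (Set.range fun n => u (n + k))
  · right
    have hlim := (tendsto_add_atTop_iff_nat k).1 (tendsto_atTop_ciSup hmono hbdd)
    rw [nhds_discrete] at hlim
    exact ⟨_, tendsto_pure.1 hlim⟩
  · left
    exact (tendsto_add_atTop_iff_nat k).1 (tendsto_atTop_atTop_of_monotone' hmono hbdd)

theorem eventually_apply_sub_apply_eq {b : ℕ → ℕ} {v : ℕ} (hb : ∀ᶠ n in atTop, b n = v)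
    (s : ℕ) : ∀ᶠ n in atTop, b (n - b (n - s)) = v := by
  have hshift : ∀ᶠ n in atTop, n - v = n - b (n - s) :=
    ((tendsto_sub_atTop_nat s).eventually hb).mono fun n hn => by rw [hn]
  exact ((tendsto_sub_atTop_nat v).congr' hshift).eventually hb

structure GolombSystem (f g : ℕ → ℕ) : Prop where
  f_one : f 1 = 0
  f_two : f 2 = 1
  f_three : f 3 = 1
  g_one : g 1 = 1
  g_two : g 2 = 1
  g_three : g 3 = 2
  f_eq : ∀ n, 4 ≤ n → f n = g (n - g (n - 1))
  g_eq : ∀ n, 4 ≤ n → g n = f (n - f n) + 2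

namespace GolombSystem

variable {f g : ℕ → ℕ} (h : GolombSystem f g)
include h

theorem slowAt_f_succ {n : ℕ} (hn : 3 ≤ n) (hg : SlowAt g n) (hgn : g n ≤ n + 1)
    (hg' : SlowAt g (n + 1 - g n)) : SlowAt f (n + 1) := by
  have hcomp := hg.apply_sub hgn hg'
  unfold SlowAt at hcomp ⊢
  rwa [h.f_eq (n + 1) (by omega), h.f_eq (n + 1 + 1) (by omega), Nat.add_sub_cancel,
    Nat.add_sub_cancel]

theorem slowAt_g {n : ℕ} (hn : 4 ≤ n) (hf : SlowAt f n) (hfn : f n ≤ n)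
    (hf' : SlowAt f (n - f n)) : SlowAt g n := by
  have hcomp := hf.apply_sub (c := 0) hfn hf'
  unfold SlowAt at hcomp ⊢
  rw [h.g_eq n hn, h.g_eq (n + 1) (by omega)]
  simpa using hcomp

theorem bounds_and_slowAt (n : ℕ) (hn : 1 ≤ n) :
    1 ≤ g n ∧ g n ≤ n ∧ f n < n ∧ SlowAt f n ∧ SlowAt g n := by
  have f4 : f 4 = 1 := by rw [h.f_eq 4 le_rfl]; simp [h.g_three, h.g_two]
  have g4 : g 4 = 3 := by rw [h.g_eq 4 le_rfl, f4]; simp [h.f_three]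
  have f5 : f 5 = 1 := by rw [h.f_eq 5 (by norm_num)]; simp [g4, h.g_two]
  have g5 : g 5 = 3 := by rw [h.g_eq 5 (by norm_num), f5]; simp [f4]
  induction n using Nat.strong_induction_on with
  | _ n ih =>
  rcases lt_or_ge n 5 with hsmall | hlarge
  · interval_cases n <;>
      simp [SlowAt, h.f_one, h.f_two, h.f_three, h.g_one, h.g_two, h.g_three, f4, g4, f5, g5]
  obtain ⟨m, rfl⟩ : ∃ m, n = m + 1 := ⟨n - 1, by omega⟩
  obtain ⟨hgm_pos, hgm_le, hfm_lt, hfm, hgm⟩ := ih m (by omega) (by omega)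
  have hfn_lt : f (m + 1) < m + 1 := by unfold SlowAt at hfm; omega
  have hfn : SlowAt f (m + 1) :=
    h.slowAt_f_succ (by omega) hgm (by omega) (ih _ (by omega) (by omega)).2.2.2.2
  have hfn' : SlowAt f (m + 1 - f (m + 1)) := by
    rcases Nat.eq_zero_or_pos (f (m + 1)) with hzero | hpos
    · rwa [hzero, Nat.sub_zero]
    · exact (ih _ (by omega) (by omega)).2.2.2.1
  unfold SlowAt at hgm
  exact ⟨by omega, by omega, hfn_lt, hfn, h.slowAt_g (by omega) hfn hfn_lt.le hfn'⟩

theorem f_lt {n : ℕ} (hn : 1 ≤ n) : f n < n := (h.bounds_and_slowAt n hn).2.2.1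

theorem g_le {n : ℕ} (hn : 1 ≤ n) : g n ≤ n := (h.bounds_and_slowAt n hn).2.1

theorem f_le_f_succ (n : ℕ) (hn : 1 ≤ n) : f n ≤ f (n + 1) :=
  (h.bounds_and_slowAt n hn).2.2.2.1.1

theorem g_le_g_succ (n : ℕ) (hn : 1 ≤ n) : g n ≤ g (n + 1) :=
  (h.bounds_and_slowAt n hn).2.2.2.2.1

theorem eventually_f_eq {v : ℕ} (hv : ∀ᶠ n in atTop, g n = v) : ∀ᶠ n in atTop, f n = v := by
  filter_upwards [eventually_apply_sub_apply_eq hv 1, eventually_ge_atTop 4] with n hn h4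
  rwa [h.f_eq n h4]

theorem eventually_g_eq {u : ℕ} (hu : ∀ᶠ n in atTop, f n = u) :
    ∀ᶠ n in atTop, g n = u + 2 := by
  filter_upwards [eventually_apply_sub_apply_eq hu 0, eventually_ge_atTop 4] with n hn h4
  rw [h.g_eq n h4]
  simpa using hn

theorem tendsto_f : Tendsto f atTop atTop := by
  refine (Nat.tendsto_atTop_or_eventually_eq_of_le_succ h.f_le_f_succ).resolve_right ?_
  rintro ⟨u, hu⟩
  obtain ⟨n, hn, hn'⟩ := (hu.and (h.eventually_f_eq (h.eventually_g_eq hu))).exists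
  omega

theorem tendsto_g : Tendsto g atTop atTop := by
  refine (Nat.tendsto_atTop_or_eventually_eq_of_le_succ h.g_le_g_succ).resolve_right ?_
  rintro ⟨v, hv⟩
  obtain ⟨n, hn, hn'⟩ := (hv.and (h.eventually_g_eq (h.eventually_f_eq hv))).exists
  omega

end GolombSystem

/-- For the Golomb-like system with f(1)=0, f(2)=f(3)=1, g(1)=g(2)=1, g(3)=2,
f(n)=g(n-g(n-1)), g(n)=f(n-f(n))+2 for n ≥ 4: f(n) ≤ n and g(n) ≤ n for n ≥ 4,
and both sequences tend to infinity. -/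
theorem stmt_18 (f g : ℕ → ℕ)
    (hf1 : f 1 = 0) (hf2 : f 2 = 1) (hf3 : f 3 = 1)
    (hg1 : g 1 = 1) (hg2 : g 2 = 1) (hg3 : g 3 = 2)
    (hf : ∀ n, 4 ≤ n → f n = g (n - g (n - 1)))
    (hg : ∀ n, 4 ≤ n → g n = f (n - f n) + 2) :
    (∀ n, 4 ≤ n → f n ≤ n ∧ g n ≤ n) ∧
    Tendsto f atTop atTop ∧ Tendsto g atTop atTop := by
  have h : GolombSystem f g := ⟨hf1, hf2, hf3, hg1, hg2, hg3, hf, hg⟩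
  exact ⟨fun n hn => ⟨(h.f_lt (by omega)).le, h.g_le (by omega)⟩, h.tendsto_f, h.tendsto_g⟩
end
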